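/- arXiv:2303.11466 — 9 statements merged into one kernel-verified Lean document; each statement's English description precedes it below -/
import Mathlib

section
/- If G is an outerplanar simple graph with at least two vertices that admits an interval t-coloring, then t ≤ |V(G)| − 1. -/
/-- An interval `t`-coloring of `G`: a proper edge-coloring with colors `1,…,t`
such that all colors are used and the set of colors incident to each vertex is
an interval of consecutive integers. -/
def IsIntervalColoring {V : Type*} (G : SimpleGraph V) (t : ℕ) (α : Sym2 V → ℕ) : Prop :=
  (∀ e ∈ G.edgeSet, 1 ≤ α e ∧ α e ≤ t) ∧
  (∀ e ∈ G.edgeSet, ∀ e' ∈ G.edgeSet, e ≠ e' → (∃ v : V, v ∈ e ∧ v ∈ e') → α e ≠ α e') ∧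
  (∀ c : ℕ, 1 ≤ c → c ≤ t → ∃ e ∈ G.edgeSet, α e = c) ∧
  (∀ v : V, ∀ c₁ c c₂ : ℕ,
    (∃ e ∈ G.edgeSet, v ∈ e ∧ α e = c₁) → (∃ e ∈ G.edgeSet, v ∈ e ∧ α e = c₂) →
    c₁ ≤ c → c ≤ c₂ → ∃ e ∈ G.edgeSet, v ∈ e ∧ α e = c)

/-- `G` is outerplanar: it has a crossing-free straight-line drawing with all
vertices on a common circle (equivalent to outerplanarity). -/
def HasOuterplanarEmbedding {V : Type*} (G : SimpleGraph V) : Prop :=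
  ∃ f : V → EuclideanSpace ℝ (Fin 2), Function.Injective f ∧ (∀ v : V, ‖f v‖ = 1) ∧
    (∀ u v x y : V, G.Adj u v → G.Adj x y → (s(u, v) : Sym2 V) ≠ s(x, y) →
      ∀ p, p ∈ openSegment ℝ (f u) (f v) → p ∉ openSegment ℝ (f x) (f y)) ∧
    (∀ u v w : V, G.Adj u v → w ≠ u → w ≠ v → f w ∉ openSegment ℝ (f u) (f v))


open Finset

namespace IOP

open scoped Classical

variable {V : Type*} [Fintype V]

noncomputable def supp (E : Finset (Sym2 V)) : Finset V :=
  univ.filter (fun v => ∃ e ∈ E, v ∈ e)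

lemma mem_supp {E : Finset (Sym2 V)} {v : V} : v ∈ supp E ↔ ∃ e ∈ E, v ∈ e := by
  simp [supp]

structure Valid (θ : V → ℝ) (α : Sym2 V → ℕ) (E : Finset (Sym2 V)) : Prop where
  nd : ∀ e ∈ E, ¬ e.IsDiag
  inj : Function.Injective θ
  proper : ∀ e ∈ E, ∀ e' ∈ E, e ≠ e' → (∃ v, v ∈ e ∧ v ∈ e') → α e ≠ α e'
  interv : ∀ v : V, ∀ c₁ c c₂ : ℕ, (∃ e ∈ E, v ∈ e ∧ α e = c₁) →
      (∃ e ∈ E, v ∈ e ∧ α e = c₂) → c₁ ≤ c → c ≤ c₂ → ∃ e ∈ E, v ∈ e ∧ α e = c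
  nc : ∀ u w x y : V, s(u,w) ∈ E → s(x,y) ∈ E → u ≠ x → u ≠ y → w ≠ x → w ≠ y →
       ¬ Xor' (θ x ∈ Set.Ioo (min (θ u) (θ w)) (max (θ u) (θ w)))
              (θ y ∈ Set.Ioo (min (θ u) (θ w)) (max (θ u) (θ w)))

variable {θ : V → ℝ} {α : Sym2 V → ℕ} {E : Finset (Sym2 V)}
set_option linter.unusedSectionVars false

lemma exists_pair (hv : Valid θ α E) {e : Sym2 V} (he : e ∈ E) :
    ∃ x y : V, x ≠ y ∧ e = s(x,y) := by
  induction e using Sym2.inductionOn with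
  | hf x y => exact ⟨x, y, by simpa [Sym2.isDiag_iff_proj_eq] using hv.nd _ he, rfl⟩

lemma two_le_supp (hv : Valid θ α E) (hne : E.Nonempty) : 2 ≤ (supp E).card := by
  obtain ⟨e, he⟩ := hne
  obtain ⟨x, y, hxy, rfl⟩ := exists_pair hv he
  have h1 : ({x, y} : Finset V) ⊆ supp E := by
    intro v hv'
    simp only [mem_insert, mem_singleton] at hv'
    rcases hv' with rfl | rfl
    · exact mem_supp.mpr ⟨_, he, by simp⟩
    · exact mem_supp.mpr ⟨_, he, by simp⟩
  calc 2 = ({x, y} : Finset V).card := by rw [card_insert_of_notMem (by simpa using hxy), card_singleton]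
  _ ≤ _ := card_le_card h1

/-- filtering by a subset of edges that is "vertex-closed": at each vertex, either all
of its edges stay or none does. -/
lemma valid_filter (hv : Valid θ α E) (P : Sym2 V → Prop)
    (hP : ∀ v : V, ∀ e ∈ E, ∀ e' ∈ E, v ∈ e → v ∈ e' → P e → P e') :
    Valid θ α (E.filter P) := by
  constructor
  · exact fun e he => hv.nd e (mem_filter.mp he).1
  · exact hv.inj
  · exact fun e he e' he' => hv.proper e (mem_filter.mp he).1 e' (mem_filter.mp he').1
  · intro v c₁ c c₂ h₁ h₂ hc₁ hc₂
    obtain ⟨e₁, he₁, hve₁, hα₁⟩ := h₁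
    obtain ⟨e₂, he₂, hve₂, hα₂⟩ := h₂
    obtain ⟨e, he, hve, hαe⟩ := hv.interv v c₁ c c₂ ⟨e₁, (mem_filter.mp he₁).1, hve₁, hα₁⟩
      ⟨e₂, (mem_filter.mp he₂).1, hve₂, hα₂⟩ hc₁ hc₂
    refine ⟨e, mem_filter.mpr ⟨he, ?_⟩, hve, hαe⟩
    exact hP v e₁ (mem_filter.mp he₁).1 e he hve₁ hve (mem_filter.mp he₁).2
  · intro u w x y h1 h2
    exact hv.nc u w x y (mem_filter.mp h1).1 (mem_filter.mp h2).1

/-- the "color window ≤ K" filter is vertex-closed in the needed weak sense: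
we only need interval property, proved directly. -/
lemma valid_le (hv : Valid θ α E) (K : ℕ) : Valid θ α (E.filter (fun e => α e ≤ K)) := by
  constructor
  · exact fun e he => hv.nd e (mem_filter.mp he).1
  · exact hv.inj
  · exact fun e he e' he' => hv.proper e (mem_filter.mp he).1 e' (mem_filter.mp he').1
  · intro v c₁ c c₂ h₁ h₂ hc₁ hc₂
    obtain ⟨e₁, he₁, hve₁, hα₁⟩ := h₁
    obtain ⟨e₂, he₂, hve₂, hα₂⟩ := h₂
    have hc₂K : c₂ ≤ K := hα₂ ▸ (mem_filter.mp he₂).2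
    obtain ⟨e, he, hve, hαe⟩ := hv.interv v c₁ c c₂ ⟨e₁, (mem_filter.mp he₁).1, hve₁, hα₁⟩
      ⟨e₂, (mem_filter.mp he₂).1, hve₂, hα₂⟩ hc₁ hc₂
    exact ⟨e, mem_filter.mpr ⟨he, by omega⟩, hve, hαe⟩
  · intro u w x y h1 h2
    exact hv.nc u w x y (mem_filter.mp h1).1 (mem_filter.mp h2).1

lemma valid_ge (hv : Valid θ α E) (K : ℕ) : Valid θ α (E.filter (fun e => K ≤ α e)) := by
  constructor
  · exact fun e he => hv.nd e (mem_filter.mp he).1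
  · exact hv.inj
  · exact fun e he e' he' => hv.proper e (mem_filter.mp he).1 e' (mem_filter.mp he').1
  · intro v c₁ c c₂ h₁ h₂ hc₁ hc₂
    obtain ⟨e₁, he₁, hve₁, hα₁⟩ := h₁
    obtain ⟨e₂, he₂, hve₂, hα₂⟩ := h₂
    have hc₁K : K ≤ c₁ := hα₁ ▸ (mem_filter.mp he₁).2
    obtain ⟨e, he, hve, hαe⟩ := hv.interv v c₁ c c₂ ⟨e₁, (mem_filter.mp he₁).1, hve₁, hα₁⟩
      ⟨e₂, (mem_filter.mp he₂).1, hve₂, hα₂⟩ hc₁ hc₂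
    exact ⟨e, mem_filter.mpr ⟨he, by omega⟩, hve, hαe⟩
  · intro u w x y h1 h2
    exact hv.nc u w x y (mem_filter.mp h1).1 (mem_filter.mp h2).1

/-- reachability through edges of `E` -/
def Reach (E : Finset (Sym2 V)) : V → V → Prop :=
  Relation.ReflTransGen (fun a b => s(a,b) ∈ E)

lemma reach_interval (hv : Valid θ α E)
    (hconn : ∀ u ∈ supp E, ∀ w ∈ supp E, Reach E u w)
    {c₁ c c₂ : ℕ} (h₁ : c₁ ∈ E.image α) (h₂ : c₂ ∈ E.image α)
    (hle₁ : c₁ ≤ c) (hle₂ : c ≤ c₂) : c ∈ E.image α := by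
  by_contra hc
  have noboth : ∀ v : V, (∃ e ∈ E, v ∈ e ∧ α e < c) → (∃ e ∈ E, v ∈ e ∧ c < α e) → False := by
    intro v ⟨e₁, he₁, hv₁, hlt₁⟩ ⟨e₂, he₂, hv₂, hlt₂⟩
    obtain ⟨e, he, -, hαe⟩ := hv.interv v (α e₁) c (α e₂) ⟨e₁, he₁, hv₁, rfl⟩ ⟨e₂, he₂, hv₂, rfl⟩
      (le_of_lt hlt₁) (le_of_lt hlt₂)
    exact hc (mem_image.mpr ⟨e, he, hαe⟩)
  have prop : ∀ x y : V, s(x,y) ∈ E → (∃ e ∈ E, x ∈ e ∧ c < α e) → (∃ e ∈ E, y ∈ e ∧ c < α e) := by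
    intro x y hxy hx
    rcases lt_or_gt_of_ne (show α s(x,y) ≠ c from fun h => hc (mem_image.mpr ⟨_, hxy, h⟩)) with h | h
    · exact absurd hx (fun hx' => noboth x ⟨s(x,y), hxy, by simp, h⟩ hx')
    · exact ⟨s(x,y), hxy, by simp, h⟩
  obtain ⟨e₂', he₂', hαe₂⟩ := mem_image.mp h₂
  obtain ⟨e₁', he₁', hαe₁⟩ := mem_image.mp h₁
  obtain ⟨x₂, y₂, -, rfl⟩ := exists_pair hv he₂'
  obtain ⟨x₁, y₁, -, rfl⟩ := exists_pair hv he₁'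
  have hx₂ : x₂ ∈ supp E := mem_supp.mpr ⟨_, he₂', by simp⟩
  have hx₁ : x₁ ∈ supp E := mem_supp.mpr ⟨_, he₁', by simp⟩
  have hreach := hconn x₂ hx₂ x₁ hx₁
  have hne₂ : c₂ ≠ c := fun h => hc (h ▸ h₂)
  have hne₁ : c₁ ≠ c := fun h => hc (h ▸ h₁)
  have hHi : ∃ e ∈ E, x₁ ∈ e ∧ c < α e := by
    clear hx₁ he₁' hαe₁
    induction hreach with
    | refl => exact ⟨_, he₂', by simp, by omega⟩
    | tail hab hbc ih => exact prop _ _ hbc ih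
  exact noboth x₁ ⟨_, he₁', by simp, by omega⟩ hHi

lemma exists_pair' (hnd : ∀ e ∈ E, ¬ e.IsDiag) {e : Sym2 V} (he : e ∈ E) :
    ∃ x y : V, x ≠ y ∧ e = s(x,y) := by
  induction e using Sym2.inductionOn with
  | hf x y => exact ⟨x, y, by simpa [Sym2.isDiag_iff_proj_eq] using hnd _ he, rfl⟩

lemma exists_pair_lt (hnd : ∀ e ∈ E, ¬ e.IsDiag) (hinj : Function.Injective θ)
    {e : Sym2 V} (he : e ∈ E) : ∃ x y : V, θ x < θ y ∧ e = s(x,y) := by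
  obtain ⟨x, y, hxy, rfl⟩ := exists_pair' hnd he
  rcases lt_or_gt_of_ne (fun h => hxy (hinj h)) with h | h
  · exact ⟨x, y, h, rfl⟩
  · exact ⟨y, x, h, Sym2.eq_swap⟩


lemma two_le_supp' (hnd : ∀ e ∈ E, ¬ e.IsDiag) (hne : E.Nonempty) : 2 ≤ (supp E).card := by
  obtain ⟨e, he⟩ := hne
  obtain ⟨x, y, hxy, rfl⟩ := exists_pair' hnd he
  have h1 : ({x, y} : Finset V) ⊆ supp E := by
    intro v hv'
    simp only [mem_insert, mem_singleton] at hv'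
    rcases hv' with rfl | rfl
    · exact mem_supp.mpr ⟨_, he, by simp⟩
    · exact mem_supp.mpr ⟨_, he, by simp⟩
  calc 2 = ({x, y} : Finset V).card := by
        rw [card_insert_of_notMem (by simpa using hxy), card_singleton]
  _ ≤ _ := card_le_card h1

lemma ncMain (hinj : Function.Injective θ) : ∀ N : ℕ, ∀ E : Finset (Sym2 V),
    (supp E).card ≤ N →
    (∀ e ∈ E, ¬ e.IsDiag) →
    (∀ u w x y : V, s(u,w) ∈ E → s(x,y) ∈ E → u ≠ x → u ≠ y → w ≠ x → w ≠ y →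
       ¬ Xor' (θ x ∈ Set.Ioo (min (θ u) (θ w)) (max (θ u) (θ w)))
              (θ y ∈ Set.Ioo (min (θ u) (θ w)) (max (θ u) (θ w)))) →
    E.Nonempty → E.card + 3 ≤ 2 * (supp E).card := by
  intro N
  induction N with
  | zero =>
    intro E hcard hnd hnc hne
    have := two_le_supp' hnd hne
    omega
  | succ N ih =>
    intro E hcard hnd hnc hne
    by_cases hsplit : ∃ u w, s(u,w) ∈ E ∧ θ u < θ w ∧
        (∃ p ∈ supp E, θ p ∈ Set.Ioo (θ u) (θ w)) ∧
        (∃ q ∈ supp E, θ q ∉ Set.Icc (θ u) (θ w))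
    · obtain ⟨u, w, he, huw, ⟨p, hp, hpI⟩, ⟨q, hq, hqI⟩⟩ := hsplit
      have huw' : u ≠ w := fun h => absurd (congrArg θ h) (ne_of_lt huw)
      -- the inner and outer parts
      set A := E.filter (fun e => ∀ x ∈ e, θ x ∈ Set.Icc (θ u) (θ w)) with hA
      set B := (E \ A) ∪ {s(u,w)} with hB
      have hsuwA : s(u,w) ∈ A := by
        refine mem_filter.mpr ⟨he, ?_⟩
        intro x hx
        rcases Sym2.mem_iff.mp hx with rfl | rfl
        · exact Set.mem_Icc.mpr ⟨le_rfl, le_of_lt huw⟩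
        · exact Set.mem_Icc.mpr ⟨le_of_lt huw, le_rfl⟩
      have hBsub : B ⊆ E := by
        intro e heB
        rcases mem_union.mp heB with h | h
        · exact (mem_sdiff.mp h).1
        · simpa using (mem_singleton.mp h) ▸ he
      have hAsub : A ⊆ E := filter_subset _ _
      -- edges outside A have both endpoints outside the open interval
      have houter : ∀ e ∈ E \ A, ∀ x ∈ e, θ x ∉ Set.Ioo (θ u) (θ w) := by
        intro e heEA
        obtain ⟨x, y, hxy, rfl⟩ := exists_pair' hnd (mem_sdiff.mp heEA).1
        have hnotA : ¬ (∀ z ∈ s(x,y), θ z ∈ Set.Icc (θ u) (θ w)) := by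
          intro hall
          exact (mem_sdiff.mp heEA).2 (mem_filter.mpr ⟨(mem_sdiff.mp heEA).1, hall⟩)
        -- one endpoint is out of Icc
        have hkey : ∀ z z' : V, s(z,z') = s(x,y) → θ z ∉ Set.Icc (θ u) (θ w) →
            (θ z ∉ Set.Ioo (θ u) (θ w)) ∧ (θ z' ∉ Set.Ioo (θ u) (θ w)) := by
          intro z z' hzz' hzout
          have hzIoo : θ z ∉ Set.Ioo (θ u) (θ w) := fun h => hzout (Set.Ioo_subset_Icc_self h)
          refine ⟨hzIoo, ?_⟩
          have hzu : z ≠ u := fun h => hzout (by rw [h]; exact Set.mem_Icc.mpr ⟨le_rfl, le_of_lt huw⟩)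
          have hzw : z ≠ w := fun h => hzout (by rw [h]; exact Set.mem_Icc.mpr ⟨le_of_lt huw, le_rfl⟩)
          by_cases hz'u : z' = u
          · exact hz'u ▸ (fun h => (lt_irrefl _ ((Set.mem_Ioo.mp h).1)))
          by_cases hz'w : z' = w
          · exact hz'w ▸ (fun h => (lt_irrefl _ ((Set.mem_Ioo.mp h).2)))
          have hzz'E : s(z,z') ∈ E := hzz' ▸ (mem_sdiff.mp heEA).1
          have := hnc u w z z' he hzz'E (fun h => hzu h.symm) (fun h => hz'u h.symm)
            (fun h => hzw h.symm) (fun h => hz'w h.symm)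
          rw [min_eq_left (le_of_lt huw), max_eq_right (le_of_lt huw)] at this
          intro hz'
          exact this (Or.inr ⟨hz', hzIoo⟩)
        by_cases hx' : θ x ∈ Set.Icc (θ u) (θ w)
        · by_cases hy' : θ y ∈ Set.Icc (θ u) (θ w)
          · exact absurd (fun z hz => by rcases Sym2.mem_iff.mp hz with rfl | rfl <;> assumption) hnotA
          · obtain ⟨h1, h2⟩ := hkey y x Sym2.eq_swap hy'
            intro z hz
            rcases Sym2.mem_iff.mp hz with rfl | rfl <;> assumption
        · obtain ⟨h1, h2⟩ := hkey x y rfl hx'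
          intro z hz
          rcases Sym2.mem_iff.mp hz with rfl | rfl <;> assumption
      -- support inclusions
      set Sin := (supp E).filter (fun v => θ v ∈ Set.Icc (θ u) (θ w)) with hSin
      set Sout := (supp E).filter (fun v => θ v ∉ Set.Ioo (θ u) (θ w)) with hSout
      have hsuppA : supp A ⊆ Sin := by
        intro v hvA
        obtain ⟨e, heA, hve⟩ := mem_supp.mp hvA
        refine mem_filter.mpr ⟨mem_supp.mpr ⟨e, hAsub heA, hve⟩, (mem_filter.mp heA).2 v hve⟩
      have hsuppB : supp B ⊆ Sout := by
        intro v hvB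
        obtain ⟨e, heB, hve⟩ := mem_supp.mp hvB
        have hvE : v ∈ supp E := mem_supp.mpr ⟨e, hBsub heB, hve⟩
        refine mem_filter.mpr ⟨hvE, ?_⟩
        rcases mem_union.mp heB with h | h
        · exact houter e h v hve
        · rw [mem_singleton] at h
          subst h
          rcases Sym2.mem_iff.mp hve with rfl | rfl
          · exact fun hh => (lt_irrefl _ ((Set.mem_Ioo.mp hh).1))
          · exact fun hh => (lt_irrefl _ ((Set.mem_Ioo.mp hh).2))
      have hq' : q ∉ Sin := fun h => hqI (mem_filter.mp h).2
      have hp' : p ∉ Sout := fun h => (mem_filter.mp h).2 hpI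
      have hSinN : Sin.card ≤ N := by
        have : Sin ⊂ supp E := ⟨filter_subset _ _, fun hsub => hq' (hsub hq)⟩
        have := card_lt_card this
        omega
      have hSoutN : Sout.card ≤ N := by
        have : Sout ⊂ supp E := ⟨filter_subset _ _, fun hsub => hp' (hsub hp)⟩
        have := card_lt_card this
        omega
      -- apply induction hypothesis
      have ihA := ih A (le_trans (card_le_card hsuppA) hSinN)
        (fun e heA => hnd e (hAsub heA))
        (fun a b c d h1 h2 => hnc a b c d (hAsub h1) (hAsub h2)) ⟨s(u,w), hsuwA⟩
      have ihB := ih B (le_trans (card_le_card hsuppB) hSoutN)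
        (fun e heB => hnd e (hBsub heB))
        (fun a b c d h1 h2 => hnc a b c d (hBsub h1) (hBsub h2))
        ⟨s(u,w), mem_union.mpr (Or.inr (mem_singleton_self _))⟩
      -- cardinalities
      have hcardAB : A.card + B.card = E.card + 1 := by
        have h1 : (E \ A).card + A.card = E.card := by
          rw [card_sdiff_add_card_eq_card hAsub]
        have h2 : B.card = (E \ A).card + 1 := by
          rw [hB, card_union_of_disjoint (by simp [disjoint_singleton_right, hsuwA])]
          simp
        omega
      have hSinSout : Sin.card + Sout.card = (supp E).card + 2 := by
        have hunion : Sin ∪ Sout = supp E := by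
          apply Finset.Subset.antisymm
          · exact union_subset (filter_subset _ _) (filter_subset _ _)
          · intro v hv
            by_cases h : θ v ∈ Set.Ioo (θ u) (θ w)
            · exact mem_union.mpr (Or.inl (mem_filter.mpr ⟨hv, Set.Ioo_subset_Icc_self h⟩))
            · exact mem_union.mpr (Or.inr (mem_filter.mpr ⟨hv, h⟩))
        have hinter : Sin ∩ Sout = {u, w} := by
          apply Finset.Subset.antisymm
          · intro v hv
            obtain ⟨hv1, hv2⟩ := mem_inter.mp hv
            have h1 := (mem_filter.mp hv1).2
            have h2 := (mem_filter.mp hv2).2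
            simp only [Set.mem_Icc] at h1
            simp only [Set.mem_Ioo, not_and, not_lt] at h2
            simp only [mem_insert, mem_singleton]
            rcases eq_or_lt_of_le h1.1 with h | h
            · exact Or.inl (hinj h.symm)
            · exact Or.inr (hinj (le_antisymm h1.2 (h2 h)))
          · intro v hv
            have huS : u ∈ supp E := mem_supp.mpr ⟨_, he, by simp⟩
            have hwS : w ∈ supp E := mem_supp.mpr ⟨_, he, by simp⟩
            simp only [mem_insert, mem_singleton] at hv
            rcases hv with rfl | rfl
            · exact mem_inter.mpr ⟨mem_filter.mpr ⟨huS, Set.mem_Icc.mpr ⟨le_rfl, le_of_lt huw⟩⟩,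
                mem_filter.mpr ⟨huS, fun hh => (lt_irrefl _ ((Set.mem_Ioo.mp hh).1))⟩⟩
            · exact mem_inter.mpr ⟨mem_filter.mpr ⟨hwS, Set.mem_Icc.mpr ⟨le_of_lt huw, le_rfl⟩⟩,
                mem_filter.mpr ⟨hwS, fun hh => (lt_irrefl _ ((Set.mem_Ioo.mp hh).2))⟩⟩
        have := card_union_add_card_inter Sin Sout
        rw [hunion, hinter] at this
        rw [card_insert_of_notMem (by simpa using huw'), card_singleton] at this
        omega
      have h1 : (supp A).card ≤ Sin.card := card_le_card hsuppA
      have h2 : (supp B).card ≤ Sout.card := card_le_card hsuppB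
      omega
    · -- no splitting chord: each edge is "consecutive" or the global extreme pair
      push_neg at hsplit
      obtain ⟨e₀, he₀⟩ := hne
      obtain ⟨x₀, y₀, hxy₀, rfl⟩ := exists_pair' hnd he₀
      haveI : Nonempty V := ⟨x₀⟩
      -- lower endpoint function
      set g : Sym2 V → V := fun e =>
        if h : ∃ x, x ∈ e ∧ ∀ y ∈ e, θ x ≤ θ y then h.choose else Classical.arbitrary V with hg
      have hgspec : ∀ x y : V, θ x < θ y → g s(x,y) = x := by
        intro x y hxy
        have hex : ∃ z, z ∈ s(x,y) ∧ ∀ y' ∈ s(x,y), θ z ≤ θ y' := by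
          refine ⟨x, by simp, ?_⟩
          intro y' hy'
          rcases Sym2.mem_iff.mp hy' with rfl | rfl
          · exact le_rfl
          · exact le_of_lt hxy
        rw [hg]
        simp only [dif_pos hex]
        have h1 := hex.choose_spec
        rcases Sym2.mem_iff.mp h1.1 with h | h
        · exact h
        · exfalso
          have := h1.2 x (by simp)
          rw [h] at this
          exact absurd hxy (not_lt.mpr this)
      -- the set of "inner-empty" edges
      set E' := E.filter (fun e => ∃ x ∈ e, ∃ y ∈ e, θ x < θ y ∧
          ∀ p ∈ supp E, θ p ∉ Set.Ioo (θ x) (θ y)) with hE'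
      -- edges not in E' : all of supp is within their Icc; at most one such edge
      have hout : ∀ x y : V, s(x,y) ∈ E \ E' → θ x < θ y →
          ∀ v ∈ supp E, θ x ≤ θ v ∧ θ v ≤ θ y := by
        intro x y hxyE hlt v hv
        by_cases hin : ∃ p ∈ supp E, θ p ∈ Set.Ioo (θ x) (θ y)
        · have h1 := hsplit x y (mem_sdiff.mp hxyE).1 hlt hin v hv
          exact Set.mem_Icc.mp h1
        · exfalso
          push_neg at hin
          exact (mem_sdiff.mp hxyE).2 (mem_filter.mpr ⟨(mem_sdiff.mp hxyE).1,
            ⟨x, by simp, y, by simp, hlt, hin⟩⟩)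
      have hEmE' : ∀ e₁ ∈ E \ E', ∀ e₂ ∈ E \ E', e₁ = e₂ := by
        intro e₁ he₁ e₂ he₂
        obtain ⟨x₁, y₁, hxy₁, rfl⟩ := exists_pair_lt hnd hinj (mem_sdiff.mp he₁).1
        obtain ⟨x₂, y₂, hxy₂, rfl⟩ := exists_pair_lt hnd hinj (mem_sdiff.mp he₂).1
        have hx1s : x₁ ∈ supp E := mem_supp.mpr ⟨_, (mem_sdiff.mp he₁).1, by simp⟩
        have hy1s : y₁ ∈ supp E := mem_supp.mpr ⟨_, (mem_sdiff.mp he₁).1, by simp⟩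
        have hx2s : x₂ ∈ supp E := mem_supp.mpr ⟨_, (mem_sdiff.mp he₂).1, by simp⟩
        have hy2s : y₂ ∈ supp E := mem_supp.mpr ⟨_, (mem_sdiff.mp he₂).1, by simp⟩
        have H1 := hout x₁ y₁ he₁ hxy₁
        have H2 := hout x₂ y₂ he₂ hxy₂
        have hx : x₁ = x₂ := hinj (le_antisymm (H1 x₂ hx2s).1 (H2 x₁ hx1s).1)
        have hy : y₁ = y₂ := hinj (le_antisymm (H2 y₁ hy1s).2 (H1 y₂ hy2s).2)
        rw [hx, hy]
      -- the maximum vertex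
      obtain ⟨M, hM, hMmax⟩ := Finset.exists_max_image (supp E) θ
        ⟨x₀, mem_supp.mpr ⟨_, he₀, by simp⟩⟩
      -- E' injects into supp E minus M
      have hE'inj : Set.InjOn g ↑E' := by
        intro e₁ he₁ e₂ he₂ hge
        simp only [Finset.mem_coe] at he₁ he₂
        obtain ⟨x₁, y₁, hxy₁, rfl⟩ := exists_pair_lt hnd hinj (mem_filter.mp he₁).1
        obtain ⟨x₂, y₂, hxy₂, rfl⟩ := exists_pair_lt hnd hinj (mem_filter.mp he₂).1
        rw [hgspec x₁ y₁ hxy₁, hgspec x₂ y₂ hxy₂] at hge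
        subst hge
        -- show y₁ = y₂
        by_contra hne'
        have hyne : y₁ ≠ y₂ := fun h => hne' (by rw [h])
        -- the inner-empty witness of each edge is its own (lower, upper) pair
        have hwit : ∀ y : V, s(x₁, y) ∈ E' → θ x₁ < θ y →
            ∀ p ∈ supp E, θ p ∉ Set.Ioo (θ x₁) (θ y) := by
          intro y hyE' hlty
          obtain ⟨a, ha, b, hb, hab, hinner⟩ := (mem_filter.mp hyE').2
          rcases Sym2.mem_iff.mp ha with rfl | rfl
          · rcases Sym2.mem_iff.mp hb with rfl | rfl
            · exact absurd hab (lt_irrefl _)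
            · exact hinner
          · rcases Sym2.mem_iff.mp hb with rfl | rfl
            · exact absurd (lt_trans hab hlty) (lt_irrefl _)
            · exact absurd hab (lt_irrefl _)
        rcases lt_or_gt_of_ne (fun h => hyne (hinj h)) with h | h
        · exact hwit y₂ he₂ hxy₂ y₁ (mem_supp.mpr ⟨_, (mem_filter.mp he₁).1, by simp⟩)
            (Set.mem_Ioo.mpr ⟨hxy₁, h⟩)
        · exact hwit y₁ he₁ hxy₁ y₂ (mem_supp.mpr ⟨_, (mem_filter.mp he₂).1, by simp⟩)
            (Set.mem_Ioo.mpr ⟨hxy₂, h⟩)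
      have hE'maps : ∀ e ∈ E', g e ∈ (supp E).erase M := by
        intro e heE'
        obtain ⟨x, y, hxy, rfl⟩ := exists_pair_lt hnd hinj (mem_filter.mp heE').1
        rw [hgspec x y hxy]
        refine mem_erase.mpr ⟨?_, mem_supp.mpr ⟨_, (mem_filter.mp heE').1, by simp⟩⟩
        intro hxM
        have hyS : y ∈ supp E := mem_supp.mpr ⟨_, (mem_filter.mp heE').1, by simp⟩
        have := hMmax y hyS
        rw [← hxM] at this
        exact absurd hxy (not_lt.mpr this)
      have hE'card : E'.card ≤ (supp E).card - 1 := by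
        have := Finset.card_le_card_of_injOn g hE'maps hE'inj
        rwa [card_erase_of_mem hM] at this
      have hrest : (E \ E').card ≤ 1 := card_le_one.mpr hEmE'
      have hEcard : E.card ≤ E'.card + (E \ E').card := by
        have h := card_sdiff_add_card_eq_card (filter_subset _ E : E' ⊆ E)
        rw [← hE'] at h
        omega
      have h2supp := two_le_supp' hnd ⟨_, he₀⟩
      by_cases h3 : 3 ≤ (supp E).card
      · omega
      · -- supp has exactly two elements; at most one edge
        have h2 : (supp E).card = 2 := by omega
        obtain ⟨a, b, hab, hsupp⟩ := Finset.card_eq_two.mp h2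
        have hone : ∀ e₁ ∈ E, ∀ e₂ ∈ E, e₁ = e₂ := by
          intro e₁ he₁ e₂ he₂
          have hpair : ∀ e ∈ E, e = s(a, b) := by
            intro e heE
            obtain ⟨x, y, hxy, rfl⟩ := exists_pair' hnd heE
            have hxs : x ∈ supp E := mem_supp.mpr ⟨_, heE, by simp⟩
            have hys : y ∈ supp E := mem_supp.mpr ⟨_, heE, by simp⟩
            rw [hsupp] at hxs hys
            simp only [mem_insert, mem_singleton] at hxs hys
            rcases hxs with rfl | rfl <;> rcases hys with rfl | rfl
            · exact absurd rfl hxy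
            · rfl
            · exact Sym2.eq_swap
            · exact absurd rfl hxy
          rw [hpair e₁ he₁, hpair e₂ he₂]
        have : E.card ≤ 1 := card_le_one.mpr hone
        omega


lemma mainBound : ∀ N : ℕ, ∀ E : Finset (Sym2 V), E.card ≤ N → Valid θ α E → E.Nonempty →
    (E.image α).card + 1 ≤ (supp E).card := by
  intro N
  induction N with
  | zero =>
    intro E hcard hv hne
    rw [Finset.card_eq_zero.mp (Nat.le_zero.mp hcard)] at hne
    exact absurd hne (by simp)
  | succ N ih =>
    intro E hcard hv hne
    by_cases hconn : ∀ u ∈ supp E, ∀ w ∈ supp E, Reach E u w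
    · -- connected case
      have hCne : (E.image α).Nonempty := hne.image α
      set C := E.image α with hC
      set a := C.min' hCne with ha
      set b := C.max' hCne with hb
      have hab : a ≤ b := Finset.min'_le _ _ (Finset.max'_mem _ _)
      have hicc : C = Finset.Icc a b := by
        apply Finset.Subset.antisymm
        · intro c hc
          exact Finset.mem_Icc.mpr ⟨Finset.min'_le _ _ hc, Finset.le_max' _ _ hc⟩
        · intro c hc
          obtain ⟨h1, h2⟩ := Finset.mem_Icc.mp hc
          exact reach_interval hv hconn (Finset.min'_mem _ _) (Finset.max'_mem _ _) h1 h2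
      have hcardC : C.card = b + 1 - a := by rw [hicc, Nat.card_Icc]
      obtain ⟨ea, hea, hαa⟩ := Finset.mem_image.mp (Finset.min'_mem C hCne)
      obtain ⟨eb, heb, hαb⟩ := Finset.mem_image.mp (Finset.max'_mem C hCne)
      have h2supp := two_le_supp hv hne
      rcases Nat.lt_or_ge a b with hab' | hab'
      rcases Nat.lt_or_ge (a+1) b with hab2 | hab2
      · -- a + 2 ≤ b : interior colors exist
        by_cases huniq : ∃ c, a < c ∧ c < b ∧ (E.filter (fun e => α e = c)).card = 1
        · obtain ⟨c, hac, hcb, hcount⟩ := huniq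
          obtain ⟨ec, hecs⟩ := Finset.card_eq_one.mp hcount
          have hec : ec ∈ E.filter (fun e => α e = c) := hecs ▸ Finset.mem_singleton_self ec
          have hecE : ec ∈ E := (Finset.mem_filter.mp hec).1
          have hαc : α ec = c := (Finset.mem_filter.mp hec).2
          set E₁ := E.filter (fun e => α e ≤ c) with hE₁
          set E₂ := E.filter (fun e => c ≤ α e) with hE₂
          have hv₁ := valid_le hv c
          have hv₂ := valid_ge hv c
          have hE₁ss : E₁ ⊂ E := by
            refine ⟨Finset.filter_subset _ _, fun hsub => ?_⟩
            have := (Finset.mem_filter.mp (hsub heb)).2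
            omega
          have hE₂ss : E₂ ⊂ E := by
            refine ⟨Finset.filter_subset _ _, fun hsub => ?_⟩
            have := (Finset.mem_filter.mp (hsub hea)).2
            omega
          have hne₁ : E₁.Nonempty := ⟨ea, Finset.mem_filter.mpr ⟨hea, by omega⟩⟩
          have hne₂ : E₂.Nonempty := ⟨eb, Finset.mem_filter.mpr ⟨heb, by omega⟩⟩
          have ih₁ := ih E₁ (by have := Finset.card_lt_card hE₁ss; omega) hv₁ hne₁
          have ih₂ := ih E₂ (by have := Finset.card_lt_card hE₂ss; omega) hv₂ hne₂
          have him₁ : E₁.image α = Finset.Icc a c := by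
            apply Finset.Subset.antisymm
            · intro γ hγ
              obtain ⟨e, he, rfl⟩ := Finset.mem_image.mp hγ
              have h1 : α e ∈ C := Finset.mem_image.mpr ⟨e, (Finset.mem_filter.mp he).1, rfl⟩
              exact Finset.mem_Icc.mpr ⟨Finset.min'_le _ _ h1, (Finset.mem_filter.mp he).2⟩
            · intro γ hγ
              obtain ⟨h1, h2⟩ := Finset.mem_Icc.mp hγ
              have : γ ∈ C := by
                rw [hicc]; exact Finset.mem_Icc.mpr ⟨h1, by omega⟩
              obtain ⟨e, he, rfl⟩ := Finset.mem_image.mp this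
              exact Finset.mem_image.mpr ⟨e, Finset.mem_filter.mpr ⟨he, h2⟩, rfl⟩
          have him₂ : E₂.image α = Finset.Icc c b := by
            apply Finset.Subset.antisymm
            · intro γ hγ
              obtain ⟨e, he, rfl⟩ := Finset.mem_image.mp hγ
              have h1 : α e ∈ C := Finset.mem_image.mpr ⟨e, (Finset.mem_filter.mp he).1, rfl⟩
              exact Finset.mem_Icc.mpr ⟨(Finset.mem_filter.mp he).2, Finset.le_max' _ _ h1⟩
            · intro γ hγ
              obtain ⟨h1, h2⟩ := Finset.mem_Icc.mp hγ
              have : γ ∈ C := by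
                rw [hicc]; exact Finset.mem_Icc.mpr ⟨by omega, h2⟩
              obtain ⟨e, he, rfl⟩ := Finset.mem_image.mp this
              exact Finset.mem_image.mpr ⟨e, Finset.mem_filter.mpr ⟨he, h1⟩, rfl⟩
          -- intersection of supports is inside the endpoints of ec
          obtain ⟨xc, yc, hxyc, rfl⟩ := exists_pair hv hecE
          have hinter : supp E₁ ∩ supp E₂ ⊆ {xc, yc} := by
            intro v hvin
            obtain ⟨hv1, hv2⟩ := Finset.mem_inter.mp hvin
            obtain ⟨e₁, he₁, hve₁⟩ := mem_supp.mp hv1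
            obtain ⟨e₂, he₂, hve₂⟩ := mem_supp.mp hv2
            obtain ⟨e, he, hve, hαe⟩ := hv.interv v (α e₁) c (α e₂)
              ⟨e₁, (Finset.mem_filter.mp he₁).1, hve₁, rfl⟩
              ⟨e₂, (Finset.mem_filter.mp he₂).1, hve₂, rfl⟩
              (Finset.mem_filter.mp he₁).2 (Finset.mem_filter.mp he₂).2
            have : e ∈ E.filter (fun e => α e = c) := Finset.mem_filter.mpr ⟨he, hαe⟩
            rw [hecs, Finset.mem_singleton] at this
            subst this
            rcases Sym2.mem_iff.mp hve with rfl | rfl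
            · exact Finset.mem_insert_self _ _
            · exact Finset.mem_insert_of_mem (Finset.mem_singleton_self _)
          have hsub12 : supp E₁ ∪ supp E₂ ⊆ supp E := by
            intro v hv'
            rcases Finset.mem_union.mp hv' with h | h
            · obtain ⟨e, he, hve⟩ := mem_supp.mp h
              exact mem_supp.mpr ⟨e, (Finset.mem_filter.mp he).1, hve⟩
            · obtain ⟨e, he, hve⟩ := mem_supp.mp h
              exact mem_supp.mpr ⟨e, (Finset.mem_filter.mp he).1, hve⟩
          have hcards := Finset.card_union_add_card_inter (supp E₁) (supp E₂)
          have hc1 : (supp E₁ ∪ supp E₂).card ≤ (supp E).card := Finset.card_le_card hsub12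
          have hc2 : (supp E₁ ∩ supp E₂).card ≤ 2 := by
            refine le_trans (Finset.card_le_card hinter) ?_
            exact le_trans (Finset.card_insert_le _ _) (by simp)
          rw [him₁, Nat.card_Icc] at ih₁
          rw [him₂, Nat.card_Icc] at ih₂
          omega
        · -- every interior color is on ≥ 2 edges
          push_neg at huniq
          have hfib : ∀ γ ∈ C, 1 ≤ (E.filter (fun e => α e = γ)).card := by
            intro γ hγ
            obtain ⟨e, he, rfl⟩ := Finset.mem_image.mp hγ
            exact Finset.card_pos.mpr ⟨e, Finset.mem_filter.mpr ⟨he, rfl⟩⟩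
          have hfib2 : ∀ γ ∈ Finset.Ioo a b, 2 ≤ (E.filter (fun e => α e = γ)).card := by
            intro γ hγ
            obtain ⟨h1, h2⟩ := Finset.mem_Ioo.mp hγ
            have hγC : γ ∈ C := by rw [hicc]; exact Finset.mem_Icc.mpr ⟨le_of_lt h1, le_of_lt h2⟩
            have := huniq γ h1 h2
            have := hfib γ hγC
            omega
          have hsum : E.card = ∑ γ ∈ C, (E.filter (fun e => α e = γ)).card :=
            Finset.card_eq_sum_card_fiberwise (fun e he => Finset.mem_image.mpr ⟨e, he, rfl⟩)
          have hIooC : Finset.Ioo a b ⊆ C := by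
            intro γ hγ
            obtain ⟨h1, h2⟩ := Finset.mem_Ioo.mp hγ
            rw [hicc]; exact Finset.mem_Icc.mpr ⟨le_of_lt h1, le_of_lt h2⟩
          have hsplitsum := (Finset.sum_sdiff hIooC (f := fun γ => (E.filter (fun e => α e = γ)).card)).symm
          have hs1 : (Finset.Ioo a b).card * 2 ≤ ∑ γ ∈ Finset.Ioo a b, (E.filter (fun e => α e = γ)).card := by
            simpa [mul_comm] using Finset.card_nsmul_le_sum (Finset.Ioo a b) _ 2 hfib2
          have hs2 : (C \ Finset.Ioo a b).card * 1 ≤ ∑ γ ∈ C \ Finset.Ioo a b, (E.filter (fun e => α e = γ)).card := by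
            simpa [mul_comm] using Finset.card_nsmul_le_sum (C \ Finset.Ioo a b) _ 1
              (fun γ hγ => hfib γ (Finset.mem_sdiff.mp hγ).1)
          have habs : ({a, b} : Finset ℕ) ⊆ C \ Finset.Ioo a b := by
            intro γ hγ
            simp only [Finset.mem_insert, Finset.mem_singleton] at hγ
            rcases hγ with rfl | rfl
            · exact Finset.mem_sdiff.mpr ⟨Finset.min'_mem _ _, by simp [Finset.mem_Ioo]⟩
            · exact Finset.mem_sdiff.mpr ⟨Finset.max'_mem _ _, by simp [Finset.mem_Ioo]⟩
          have habs2 : 2 ≤ (C \ Finset.Ioo a b).card := by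
            have h2 : ({a, b} : Finset ℕ).card = 2 := by
              rw [Finset.card_insert_of_notMem (by simp; omega), Finset.card_singleton]
            calc 2 = ({a, b} : Finset ℕ).card := h2.symm
            _ ≤ _ := Finset.card_le_card habs
          have hIoocard : (Finset.Ioo a b).card = b - a - 1 := Nat.card_Ioo a b
          have hNC := ncMain hv.inj (supp E).card E le_rfl hv.nd hv.nc hne
          omega
      · -- b = a + 1 : two colors, need at least 3 vertices
        have hb' : b = a + 1 := by omega
        have h3 : 3 ≤ (supp E).card := by
          by_contra h3'
          have h2 : (supp E).card = 2 := by omega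
          obtain ⟨x, y, hxy, hsupp⟩ := Finset.card_eq_two.mp h2
          have hpair : ∀ e ∈ E, e = s(x, y) := by
            intro e heE
            obtain ⟨x', y', hxy', rfl⟩ := exists_pair hv heE
            have hxs : x' ∈ supp E := mem_supp.mpr ⟨_, heE, by simp⟩
            have hys : y' ∈ supp E := mem_supp.mpr ⟨_, heE, by simp⟩
            rw [hsupp] at hxs hys
            simp only [Finset.mem_insert, Finset.mem_singleton] at hxs hys
            rcases hxs with rfl | rfl <;> rcases hys with rfl | rfl
            · exact absurd rfl hxy'
            · rfl
            · exact Sym2.eq_swap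
            · exact absurd rfl hxy'
          have : ea = eb := by rw [hpair ea hea, hpair eb heb]
          rw [this, hαb] at hαa
          omega
        omega
      · -- a = b : single color
        have : C.card = 1 := by omega
        omega
    · -- disconnected case
      push_neg at hconn
      obtain ⟨u, hu, w, hw, hnr⟩ := hconn
      set P : Sym2 V → Prop := fun e => ∀ x ∈ e, Reach E u x with hP
      have hstep : ∀ x y : V, s(x,y) ∈ E → Reach E u x → Reach E u y := by
        intro x y hxy hux
        exact Relation.ReflTransGen.tail hux hxy
      have hclosed : ∀ v : V, ∀ e ∈ E, ∀ e' ∈ E, v ∈ e → v ∈ e' → P e → P e' := by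
        intro v e he e' he' hve hve' hPe
        have huv : Reach E u v := hPe v hve
        obtain ⟨x', y', -, rfl⟩ := exists_pair hv he'
        have hx'y' : s(x', y') ∈ E := he'
        have hy'x' : s(y', x') ∈ E := Sym2.eq_swap ▸ he'
        intro x hx
        rcases Sym2.mem_iff.mp hve' with h1 | h1 <;> rcases Sym2.mem_iff.mp hx with h2 | h2
        · rw [h2, ← h1]; exact huv
        · rw [h2]; exact Relation.ReflTransGen.tail huv (by rw [h1]; exact hx'y')
        · rw [h2]; exact Relation.ReflTransGen.tail huv (by rw [h1]; exact hy'x')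
        · rw [h2, ← h1]; exact huv
      set E₁ := E.filter P with hE₁
      set E₂ := E.filter (fun e => ¬ P e) with hE₂
      have hv₁ : Valid θ α E₁ := by
        have h := valid_filter hv P hclosed
        rw [Finset.filter_congr_decidable] at h
        rwa [hE₁]
      have hv₂ : Valid θ α E₂ := by
        have h := valid_filter hv (fun e => ¬ P e)
          (fun v e he e' he' hve hve' hnPe hPe' => hnPe (hclosed v e' he' e he hve' hve hPe'))
        rw [Finset.filter_congr_decidable] at h
        rwa [hE₂]
      -- E₁ nonempty
      obtain ⟨e_u, he_u, hue_u⟩ := mem_supp.mp hu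
      obtain ⟨e_w, he_w, hwe_w⟩ := mem_supp.mp hw
      have hPeu : P e_u := by
        obtain ⟨x', y', -, rfl⟩ := exists_pair hv he_u
        have hx'y' : s(x', y') ∈ E := he_u
        have hy'x' : s(y', x') ∈ E := Sym2.eq_swap ▸ he_u
        intro x hx
        have h0 : Reach E u u := Relation.ReflTransGen.refl
        rcases Sym2.mem_iff.mp hue_u with h1 | h1 <;> rcases Sym2.mem_iff.mp hx with h2 | h2
        · rw [h2, ← h1]; exact h0
        · rw [h2]; exact Relation.ReflTransGen.tail h0 (by rw [h1]; exact hx'y')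
        · rw [h2]; exact Relation.ReflTransGen.tail h0 (by rw [h1]; exact hy'x')
        · rw [h2, ← h1]; exact h0
      have hnPew : ¬ P e_w := fun hPw => hnr (hPw w hwe_w)
      have hne₁ : E₁.Nonempty := ⟨e_u, Finset.mem_filter.mpr ⟨he_u, hPeu⟩⟩
      have hne₂ : E₂.Nonempty := ⟨e_w, Finset.mem_filter.mpr ⟨he_w, hnPew⟩⟩
      have hss₁ : E₁ ⊂ E := ⟨Finset.filter_subset _ _,
        fun hsub => hnPew (Finset.mem_filter.mp (hsub he_w)).2⟩
      have hss₂ : E₂ ⊂ E := ⟨Finset.filter_subset _ _,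
        fun hsub => (Finset.mem_filter.mp (hsub he_u)).2 hPeu⟩
      have ih₁ := ih E₁ (by have := Finset.card_lt_card hss₁; omega) hv₁ hne₁
      have ih₂ := ih E₂ (by have := Finset.card_lt_card hss₂; omega) hv₂ hne₂
      have hdisj : Disjoint (supp E₁) (supp E₂) := by
        rw [Finset.disjoint_left]
        intro v hv1 hv2
        obtain ⟨e₁, he₁, hve₁⟩ := mem_supp.mp hv1
        obtain ⟨e₂, he₂, hve₂⟩ := mem_supp.mp hv2
        exact (Finset.mem_filter.mp he₂).2
          (hclosed v e₁ (Finset.mem_filter.mp he₁).1 e₂ (Finset.mem_filter.mp he₂).1 hve₁ hve₂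
            (Finset.mem_filter.mp he₁).2)
      have hsub12 : supp E₁ ∪ supp E₂ ⊆ supp E := by
        intro v hv'
        rcases Finset.mem_union.mp hv' with h | h
        · obtain ⟨e, he, hve⟩ := mem_supp.mp h
          exact mem_supp.mpr ⟨e, (Finset.mem_filter.mp he).1, hve⟩
        · obtain ⟨e, he, hve⟩ := mem_supp.mp h
          exact mem_supp.mpr ⟨e, (Finset.mem_filter.mp he).1, hve⟩
      have hE12 : E = E₁ ∪ E₂ := by
        apply Finset.Subset.antisymm
        · intro e he
          by_cases hPe : P e
          · exact Finset.mem_union.mpr (Or.inl (Finset.mem_filter.mpr ⟨he, hPe⟩))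
          · exact Finset.mem_union.mpr (Or.inr (Finset.mem_filter.mpr ⟨he, hPe⟩))
        · exact Finset.union_subset (Finset.filter_subset _ _) (Finset.filter_subset _ _)
      have him : E.image α ⊆ E₁.image α ∪ E₂.image α := by
        rw [hE12, Finset.image_union]
      have h1 : (E.image α).card ≤ (E₁.image α).card + (E₂.image α).card :=
        le_trans (Finset.card_le_card him) (Finset.card_union_le _ _)
      have h2 : (supp E₁).card + (supp E₂).card ≤ (supp E).card := by
        rw [← Finset.card_union_of_disjoint hdisj]
        exact Finset.card_le_card hsub12
      omega

end IOP

open Complex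
namespace IOPGeo

noncomputable def gfun (z1 z2 w : ℂ) : ℝ := ((starRingEnd ℂ) (z2 - z1) * (w - z1)).im

lemma gfun_coord (z1 z2 w : ℂ) : gfun z1 z2 w =
    (z2.re - z1.re) * (w.im - z1.im) - (z2.im - z1.im) * (w.re - z1.re) := by
  simp [gfun, Complex.mul_im, Complex.sub_re, Complex.sub_im]
  ring

lemma gfun_affine (z1 z2 x y : ℂ) (a b : ℝ) (hab : a + b = 1) :
    gfun z1 z2 (a • x + b • y) = a * gfun z1 z2 x + b * gfun z1 z2 y := by
  have hb : b = 1 - a := by linarith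
  subst hb
  simp only [gfun_coord, Complex.add_re, Complex.add_im, Complex.real_smul,
    Complex.mul_re, Complex.mul_im, Complex.ofReal_re, Complex.ofReal_im]
  ring

lemma trig_key (A B C : ℝ) :
    (Real.cos B - Real.cos A) * (Real.sin C - Real.sin A)
      - (Real.sin B - Real.sin A) * (Real.cos C - Real.cos A)
    = 2 * Real.sin ((B-A)/2) * (Real.cos ((B-A)/2) - Real.cos (C - (A+B)/2)) := by
  have e0 : (Real.cos B - Real.cos A) * (Real.sin C - Real.sin A)
      - (Real.sin B - Real.sin A) * (Real.cos C - Real.cos A)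
      = Real.sin (B - A) - (Real.sin (C - A) - Real.sin (C - B)) := by
    rw [Real.sin_sub, Real.sin_sub, Real.sin_sub]; ring
  have e1 : Real.sin (B - A) = 2 * Real.sin ((B-A)/2) * Real.cos ((B-A)/2) := by
    have h1 : B - A = 2 * ((B-A)/2) := by ring
    rw [h1, Real.sin_two_mul]
    ring_nf
  have e2 : Real.sin (C - A) - Real.sin (C - B)
      = 2 * Real.sin ((B-A)/2) * Real.cos (C - (A+B)/2) := by
    rw [Real.sin_sub_sin]
    have h1 : (C - A - (C - B))/2 = (B-A)/2 := by ring
    have h2 : (C - A + (C - B))/2 = C - (A+B)/2 := by ring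
    rw [h1, h2]
  rw [e0, e1, e2]
  ring

lemma gfun_circle (A B C : ℝ) :
    gfun (Complex.exp (A * I)) (Complex.exp (B * I)) (Complex.exp (C * I)) =
      2 * Real.sin ((B-A)/2) * (Real.cos ((B-A)/2) - Real.cos (C - (A+B)/2)) := by
  rw [gfun_coord]
  simp only [Complex.exp_ofReal_mul_I_re, Complex.exp_ofReal_mul_I_im]
  rw [← trig_key]

lemma cos_lt_of {w d : ℝ} (hw0 : 0 < w) (hd : w < d) (hsum : d + w < 2 * Real.pi) :
    Real.cos d < Real.cos w := by
  rcases le_or_gt d Real.pi with h | h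
  · exact Real.cos_lt_cos_of_nonneg_of_le_pi (le_of_lt hw0) h hd
  · have h2 : Real.cos d = Real.cos (2 * Real.pi - d) := by
      rw [Real.cos_two_pi_sub]
    rw [h2]
    exact Real.cos_lt_cos_of_nonneg_of_le_pi (le_of_lt hw0) (by linarith) (by linarith)

lemma F_neg {A B C : ℝ} (hA : -Real.pi < A) (hAB : A < B) (hB : B ≤ Real.pi)
    (hC1 : A < C) (hC2 : C < B) :
    2 * Real.sin ((B-A)/2) * (Real.cos ((B-A)/2) - Real.cos (C - (A+B)/2)) < 0 := by
  have hpi := Real.pi_pos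
  have hw0 : 0 < (B-A)/2 := by linarith
  have hwpi : (B-A)/2 < Real.pi := by linarith
  have hsin : 0 < Real.sin ((B-A)/2) := Real.sin_pos_of_pos_of_lt_pi hw0 hwpi
  have habs : |C - (A+B)/2| < (B-A)/2 := by
    rw [abs_lt]; constructor <;> linarith
  have hcos : Real.cos ((B-A)/2) < Real.cos (C - (A+B)/2) := by
    rw [← Real.cos_abs (C - (A+B)/2)]
    exact Real.cos_lt_cos_of_nonneg_of_le_pi (abs_nonneg _) (by linarith) habs
  nlinarith

lemma F_pos {A B D : ℝ} (hA : -Real.pi < A) (hAB : A < B) (hB : B ≤ Real.pi)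
    (hD1 : -Real.pi < D) (hD2 : D ≤ Real.pi) (hout : D < A ∨ B < D) :
    0 < 2 * Real.sin ((B-A)/2) * (Real.cos ((B-A)/2) - Real.cos (D - (A+B)/2)) := by
  have hpi := Real.pi_pos
  have hw0 : 0 < (B-A)/2 := by linarith
  have hwpi : (B-A)/2 < Real.pi := by linarith
  have hsin : 0 < Real.sin ((B-A)/2) := Real.sin_pos_of_pos_of_lt_pi hw0 hwpi
  have hcos : Real.cos (D - (A+B)/2) < Real.cos ((B-A)/2) := by
    rw [← Real.cos_abs (D - (A+B)/2)]
    apply cos_lt_of hw0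
    · rcases hout with h | h
      · rw [_root_.abs_of_nonpos (by linarith)]; linarith
      · rw [_root_.abs_of_nonneg (by linarith)]; linarith
    · rcases hout with h | h
      · rw [_root_.abs_of_nonpos (by linarith)]; linarith
      · rw [_root_.abs_of_nonneg (by linarith)]; linarith
  nlinarith


lemma quad_aux {u v dr di s : ℝ} (hq1 : u*u + v*v = 1)
    (hq2 : (u+dr)*(u+dr) + (v+di)*(v+di) = 1)
    (hqp : (u + s*dr)*(u + s*dr) + (v + s*di)*(v + s*di) < 1)
    (hD : 0 < dr*dr + di*di) : 0 < s ∧ s < 1 := by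
  have hX : 2*(u*dr + v*di) + (dr*dr + di*di) = 0 := by linear_combination hq2 - hq1
  have e : (u + s*dr)*(u + s*dr) + (v + s*di)*(v + s*di)
      = 1 + (dr*dr + di*di) * (s*s - s) := by linear_combination hq1 + s * hX
  rw [e] at hqp
  have hqq : (dr*dr + di*di) * (s*s - s) < 0 := by linarith
  constructor
  · by_contra hs'
    push_neg at hs'
    have h1' : 0 ≤ s*s - s := by nlinarith
    have := mul_nonneg hD.le h1'
    linarith
  · by_contra hs'
    push_neg at hs'
    have h1' : 0 ≤ s*s - s := by nlinarith
    have := mul_nonneg hD.le h1'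
    linarith

lemma cross_core {z1 z2 z3 z4 : ℂ}
    (h1 : ‖z1‖ = 1) (h2 : ‖z2‖ = 1)
    (h3 : ‖z3‖ = 1) (h4 : ‖z4‖ = 1)
    (hAB : z1.arg < z2.arg)
    (hC : z3.arg ∈ Set.Ioo z1.arg z2.arg)
    (hD1 : z4.arg < z1.arg ∨ z2.arg < z4.arg) :
    ∃ p : ℂ, p ∈ openSegment ℝ z1 z2 ∧ p ∈ openSegment ℝ z3 z4 := by
  have hA := Complex.neg_pi_lt_arg z1
  have hB := Complex.arg_le_pi z2
  have hD3 := Complex.neg_pi_lt_arg z4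
  have hD4 := Complex.arg_le_pi z4
  obtain ⟨hC1, hC2⟩ := hC
  have hz1 : z1 = Complex.exp (↑z1.arg * I) := by
    conv_lhs => rw [← Complex.norm_mul_exp_arg_mul_I z1]
    rw [h1, Complex.ofReal_one, one_mul]
  have hz2 : z2 = Complex.exp (↑z2.arg * I) := by
    conv_lhs => rw [← Complex.norm_mul_exp_arg_mul_I z2]
    rw [h2, Complex.ofReal_one, one_mul]
  have hz3 : z3 = Complex.exp (↑z3.arg * I) := by
    conv_lhs => rw [← Complex.norm_mul_exp_arg_mul_I z3]
    rw [h3, Complex.ofReal_one, one_mul]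
  have hz4 : z4 = Complex.exp (↑z4.arg * I) := by
    conv_lhs => rw [← Complex.norm_mul_exp_arg_mul_I z4]
    rw [h4, Complex.ofReal_one, one_mul]
  have hg3 : gfun z1 z2 z3 < 0 := by
    nth_rewrite 1 [hz1, hz2, hz3]
    rw [gfun_circle]
    exact F_neg hA hAB hB hC1 hC2
  have hg4 : 0 < gfun z1 z2 z4 := by
    nth_rewrite 1 [hz1, hz2, hz4]
    rw [gfun_circle]
    exact F_pos hA hAB hB hD3 hD4 hD1
  obtain ⟨g3, hg3def⟩ : ∃ x, gfun z1 z2 z3 = x := ⟨_, rfl⟩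
  obtain ⟨g4, hg4def⟩ : ∃ x, gfun z1 z2 z4 = x := ⟨_, rfl⟩
  rw [hg3def] at hg3
  rw [hg4def] at hg4
  set t := g3 / (g3 - g4) with htdef
  have hgne : g3 - g4 < 0 := by linarith
  have hne0 : g3 - g4 ≠ 0 := ne_of_lt hgne
  have hteq : t = -g3 / (g4 - g3) := by rw [htdef, ← neg_div_neg_eq, neg_sub]
  have ht0 : 0 < t := by
    rw [hteq]
    exact div_pos (by linarith) (by linarith)
  have ht1 : t < 1 := by
    rw [hteq]
    exact (div_lt_one (by linarith)).mpr (by linarith)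
  set p := (1 - t) • z3 + t • z4 with hpdef
  have hseg34 : p ∈ openSegment ℝ z3 z4 := ⟨1 - t, t, by linarith, ht0, by ring, rfl⟩
  have hgp : gfun z1 z2 p = 0 := by
    rw [hpdef, gfun_affine _ _ _ _ _ _ (by ring)]
    rw [hg3def, hg4def, htdef]
    field_simp
    ring
  have hz34 : z3 ≠ z4 := by
    intro h
    rw [h] at hC1 hC2
    rcases hD1 with h' | h' <;> linarith
  have hpball : ‖p‖ < 1 := by
    have hmem3 : z3 ∈ Metric.closedBall (0:ℂ) 1 := by
      rw [Metric.mem_closedBall, dist_zero_right, h3]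
    have hmem4 : z4 ∈ Metric.closedBall (0:ℂ) 1 := by
      rw [Metric.mem_closedBall, dist_zero_right, h4]
    have hball := (strictConvex_closedBall ℝ (0:ℂ) 1) hmem3 hmem4 hz34
      (by linarith : (0:ℝ) < 1 - t) ht0 (by ring)
    rw [interior_closedBall _ one_ne_zero] at hball
    rw [Metric.mem_ball, dist_zero_right] at hball
    exact hball
  set Dz := z2 - z1 with hDz
  have hz12 : z1 ≠ z2 := fun h => by rw [h] at hAB; exact lt_irrefl _ hAB
  have hDz0 : Dz ≠ 0 := sub_ne_zero.mpr (Ne.symm hz12)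
  set r := ((starRingEnd ℂ) Dz * (p - z1)).re with hrdef
  have hcr : (starRingEnd ℂ) Dz * (p - z1) = (r : ℂ) := by
    apply Complex.ext
    · simp [hrdef]
    · simpa [gfun, hDz, Complex.ofReal_im] using hgp
  have hnsq0 : Complex.normSq Dz ≠ 0 := by
    simpa [Complex.normSq_eq_zero] using hDz0
  set s := r / Complex.normSq Dz with hsdef
  have hps : p = z1 + (s:ℂ) * Dz := by
    have h5 : (Complex.normSq Dz : ℂ) * (p - z1) = (r:ℂ) * Dz := by
      calc (Complex.normSq Dz : ℂ) * (p - z1)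
          = (Dz * (starRingEnd ℂ) Dz) * (p - z1) := by rw [Complex.mul_conj]
        _ = Dz * ((starRingEnd ℂ) Dz * (p - z1)) := by ring
        _ = Dz * (r:ℂ) := by rw [hcr]
        _ = (r:ℂ) * Dz := by ring
    have hcast : (Complex.normSq Dz : ℂ) ≠ 0 := by exact_mod_cast hnsq0
    have h6 : p - z1 = (s:ℂ) * Dz := by
      rw [hsdef]
      push_cast
      rw [div_mul_eq_mul_div, eq_div_iff hcast]
      linear_combination h5
    linear_combination h6
  have hDpos : 0 < Dz.re * Dz.re + Dz.im * Dz.im := by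
    have := Complex.normSq_pos.mpr hDz0
    rwa [Complex.normSq_apply] at this
  have hq1 : z1.re*z1.re + z1.im*z1.im = 1 := by
    have h := Complex.sq_norm z1
    rw [h1, Complex.normSq_apply] at h
    linear_combination -h
  have hq2' : (z1.re + Dz.re)*(z1.re + Dz.re) + (z1.im + Dz.im)*(z1.im + Dz.im) = 1 := by
    have hz : z2 = z1 + Dz := by rw [hDz]; ring
    have h := Complex.sq_norm z2
    rw [h2, hz, Complex.normSq_apply] at h
    simp only [Complex.add_re, Complex.add_im] at h
    linear_combination -h
  have hqp : (z1.re + s*Dz.re)*(z1.re + s*Dz.re) + (z1.im + s*Dz.im)*(z1.im + s*Dz.im) < 1 := by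
    have h2' : ‖p‖ ^ 2 < 1 := by nlinarith [hpball, norm_nonneg p]
    rw [hps] at h2'
    have h := Complex.sq_norm (z1 + (s:ℂ) * Dz)
    rw [Complex.normSq_apply] at h
    simp only [Complex.add_re, Complex.add_im, Complex.mul_re, Complex.mul_im,
      Complex.ofReal_re, Complex.ofReal_im, zero_mul, sub_zero, mul_zero, zero_add,
      add_zero] at h
    rw [h] at h2'
    linarith
  obtain ⟨hs0, hs1⟩ := quad_aux hq1 hq2' hqp hDpos
  refine ⟨p, ⟨1 - s, s, by linarith, hs0, by ring, ?_⟩, hseg34⟩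
  rw [hps, hDz]
  simp only [Complex.real_smul, Complex.ofReal_sub, Complex.ofReal_one]
  ring

lemma cross_ordered {z1 z2 z3 z4 : ℂ}
    (h1 : ‖z1‖ = 1) (h2 : ‖z2‖ = 1)
    (h3 : ‖z3‖ = 1) (h4 : ‖z4‖ = 1)
    (hAB : z1.arg < z2.arg)
    (hn31 : z3 ≠ z1) (hn32 : z3 ≠ z2) (hn41 : z4 ≠ z1) (hn42 : z4 ≠ z2)
    (hx : Xor' (z3.arg ∈ Set.Ioo z1.arg z2.arg) (z4.arg ∈ Set.Ioo z1.arg z2.arg)) :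
    ∃ p : ℂ, p ∈ openSegment ℝ z1 z2 ∧ p ∈ openSegment ℝ z3 z4 := by
  have hargne : ∀ a b : ℂ, ‖a‖ = 1 → ‖b‖ = 1 → a ≠ b → a.arg ≠ b.arg := by
    intro a b ha hb hne h
    exact hne (Complex.ext_norm_arg (by rw [ha, hb]) h)
  rcases hx with ⟨hin, hout⟩ | ⟨hin, hout⟩
  · have h41 := hargne z4 z1 h4 h1 hn41
    have h42 := hargne z4 z2 h4 h2 hn42
    have hD : z4.arg < z1.arg ∨ z2.arg < z4.arg := by
      simp only [Set.mem_Ioo, not_and, not_lt] at hout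
      rcases lt_or_gt_of_ne h41 with h | h
      · exact Or.inl h
      · exact Or.inr (lt_of_le_of_ne (hout h) (Ne.symm h42))
    exact cross_core h1 h2 h3 h4 hAB hin hD
  · have h31 := hargne z3 z1 h3 h1 hn31
    have h32 := hargne z3 z2 h3 h2 hn32
    have hD : z3.arg < z1.arg ∨ z2.arg < z3.arg := by
      simp only [Set.mem_Ioo, not_and, not_lt] at hout
      rcases lt_or_gt_of_ne h31 with h | h
      · exact Or.inl h
      · exact Or.inr (lt_of_le_of_ne (hout h) (Ne.symm h32))
    obtain ⟨p, hp1, hp2⟩ := cross_core h1 h2 h4 h3 hAB hin hD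
    exact ⟨p, hp1, openSegment_symm ℝ z4 z3 ▸ hp2⟩

lemma cross_any {z1 z2 z3 z4 : ℂ}
    (h1 : ‖z1‖ = 1) (h2 : ‖z2‖ = 1)
    (h3 : ‖z3‖ = 1) (h4 : ‖z4‖ = 1)
    (hn12 : z1 ≠ z2)
    (hn31 : z3 ≠ z1) (hn32 : z3 ≠ z2) (hn41 : z4 ≠ z1) (hn42 : z4 ≠ z2)
    (hx : Xor' (z3.arg ∈ Set.Ioo (min z1.arg z2.arg) (max z1.arg z2.arg))
               (z4.arg ∈ Set.Ioo (min z1.arg z2.arg) (max z1.arg z2.arg))) :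
    ∃ p : ℂ, p ∈ openSegment ℝ z1 z2 ∧ p ∈ openSegment ℝ z3 z4 := by
  have hargne : z1.arg ≠ z2.arg := by
    intro h
    exact hn12 (Complex.ext_norm_arg (by rw [h1, h2]) h)
  rcases lt_or_gt_of_ne hargne with h | h
  · rw [min_eq_left (le_of_lt h), max_eq_right (le_of_lt h)] at hx
    exact cross_ordered h1 h2 h3 h4 h hn31 hn32 hn41 hn42 hx
  · rw [min_eq_right (le_of_lt h), max_eq_left (le_of_lt h)] at hx
    obtain ⟨p, hp1, hp2⟩ := cross_ordered h2 h1 h3 h4 h hn32 hn31 hn42 hn41 hx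
    exact ⟨p, openSegment_symm ℝ z2 z1 ▸ hp1, hp2⟩

end IOPGeo


/-- If `G` is an outerplanar simple graph with at least two vertices admitting an
interval `t`-coloring, then `t ≤ |V(G)| - 1`. -/
theorem outerplanar_interval_coloring_bound {V : Type*} [Fintype V]
    (G : SimpleGraph V) (t : ℕ) (α : Sym2 V → ℕ)
    (hV : 2 ≤ Fintype.card V)
    (houter : HasOuterplanarEmbedding G)
    (hα : IsIntervalColoring G t α) :
    t ≤ Fintype.card V - 1 := by
  classical
  rcases Nat.eq_zero_or_pos t with rfl | ht
  · omega
  obtain ⟨f, hfinj, hnorm, hdisj, -⟩ := houter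
  set Φ := Complex.orthonormalBasisOneI.repr with hΦ
  set z : V → ℂ := fun v => Φ.symm (f v) with hz
  have habs : ∀ v, ‖(z v)‖ = 1 := by
    intro v
    have h : ‖z v‖ = 1 := by
      rw [hz]
      simp only [LinearIsometryEquiv.norm_map]
      exact hnorm v
    exact h
  have hzinj : Function.Injective z := fun a b hab => hfinj (Φ.symm.injective hab)
  set θ : V → ℝ := fun v => (z v).arg with hθ
  have hθinj : Function.Injective θ := by
    intro a b hab
    apply hzinj
    apply Complex.ext_norm_arg
    · rw [habs a, habs b]
    · exact hab
  set E : Finset (Sym2 V) := G.edgeSet.toFinite.toFinset with hE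
  have hmemE : ∀ e, e ∈ E ↔ e ∈ G.edgeSet := by
    intro e
    rw [hE]
    exact Set.Finite.mem_toFinset _
  have hvalid : IOP.Valid θ α E := by
    constructor
    · intro e he
      exact G.not_isDiag_of_mem_edgeSet ((hmemE e).mp he)
    · exact hθinj
    · intro e he e' he'
      exact hα.2.1 e ((hmemE e).mp he) e' ((hmemE e').mp he')
    · intro v c₁ c c₂ h1 h2 hc1 hc2
      obtain ⟨e1, he1, hv1, ha1⟩ := h1
      obtain ⟨e2, he2, hv2, ha2⟩ := h2
      obtain ⟨e, he, hve, hae⟩ := hα.2.2.2 v c₁ c c₂ ⟨e1, (hmemE e1).mp he1, hv1, ha1⟩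
        ⟨e2, (hmemE e2).mp he2, hv2, ha2⟩ hc1 hc2
      exact ⟨e, (hmemE e).mpr he, hve, hae⟩
    · intro u w x y huw hxy hux huy hwx hwy hXor
      have hGuw : G.Adj u w := (SimpleGraph.mem_edgeSet G).mp ((hmemE _).mp huw)
      have hGxy : G.Adj x y := (SimpleGraph.mem_edgeSet G).mp ((hmemE _).mp hxy)
      have hzne : ∀ a b : V, a ≠ b → z a ≠ z b := fun a b hab h => hab (hzinj h)
      obtain ⟨p, hp1, hp2⟩ := IOPGeo.cross_any (habs u) (habs w) (habs x) (habs y)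
        (hzne u w (G.ne_of_adj hGuw))
        (hzne x u (Ne.symm hux)) (hzne x w (Ne.symm hwx))
        (hzne y u (Ne.symm huy)) (hzne y w (Ne.symm hwy)) hXor
      obtain ⟨a, b, ha, hb, hab, hcomb⟩ := hp1
      obtain ⟨a', b', ha', hb', hab', hcomb'⟩ := hp2
      have hq1 : Φ p ∈ openSegment ℝ (f u) (f w) := by
        refine ⟨a, b, ha, hb, hab, ?_⟩
        rw [← hcomb]
        rw [map_add, map_smul, map_smul]
        rw [hz]
        simp only [LinearIsometryEquiv.apply_symm_apply]
      have hq2 : Φ p ∈ openSegment ℝ (f x) (f y) := by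
        refine ⟨a', b', ha', hb', hab', ?_⟩
        rw [← hcomb']
        rw [map_add, map_smul, map_smul]
        rw [hz]
        simp only [LinearIsometryEquiv.apply_symm_apply]
      have hne_s : (s(u, w) : Sym2 V) ≠ s(x, y) := by
        intro h
        have hu : u ∈ (s(x,y) : Sym2 V) := by rw [← h]; simp
        rcases Sym2.mem_iff.mp hu with h' | h'
        · exact hux h'
        · exact huy h'
      exact hdisj u w x y hGuw hGxy hne_s (Φ p) hq1 hq2
  have hEne : E.Nonempty := by
    obtain ⟨e, he, -⟩ := hα.2.2.1 1 le_rfl ht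
    exact ⟨e, (hmemE e).mpr he⟩
  have hcolors : E.image α = Finset.Icc 1 t := by
    apply Finset.Subset.antisymm
    · intro c hc
      obtain ⟨e, he, rfl⟩ := Finset.mem_image.mp hc
      exact Finset.mem_Icc.mpr (hα.1 e ((hmemE e).mp he))
    · intro c hc
      obtain ⟨h1, h2⟩ := Finset.mem_Icc.mp hc
      obtain ⟨e, he, hae⟩ := hα.2.2.1 c h1 h2
      exact Finset.mem_image.mpr ⟨e, (hmemE e).mpr he, hae⟩
  have hmb := IOP.mainBound E.card E le_rfl hvalid hEne
  rw [hcolors, Nat.card_Icc] at hmb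
  have hsupp : (IOP.supp E).card ≤ Fintype.card V := Finset.card_le_univ _
  omega
end

section
/- Let α be an interval coloring of G and let c_1 < c_2 be two colors each used on exactly one edge, e_1 = u_1v_1 with color c_1 and e_2 with color c_2. Let G' be the subgraph induced by edges with colors in [1, c_1] and G'' the subgraph induced by edges with colors in [c_1, c_2] (each on their incident vertices). Then V(G') ∩ V(G'') = {u_1, v_1} and the only common edge of G' and G'' is e_1. -/
namespace IsIntervalColoring

variable {V : Type*} {G : SimpleGraph V} {t : ℕ} {α : Sym2 V → ℕ}

theorem exists_incident_eq_of_le_of_le (hα : IsIntervalColoring G t α) {w : V}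
    {e e' : Sym2 V} (he : e ∈ G.edgeSet) (hwe : w ∈ e) (he' : e' ∈ G.edgeSet) (hwe' : w ∈ e')
    {c : ℕ} (hec : α e ≤ c) (hce' : c ≤ α e') :
    ∃ f ∈ G.edgeSet, w ∈ f ∧ α f = c :=
  hα.2.2.2 w (α e) c (α e') ⟨e, he, hwe, rfl⟩ ⟨e', he', hwe', rfl⟩ hec hce'

theorem eq_or_eq_of_incident_le_of_incident_ge (hα : IsIntervalColoring G t α) {c : ℕ}
    {u v : V} (huniq : ∀ e ∈ G.edgeSet, α e = c → e = s(u, v)) {w : V}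
    {e e' : Sym2 V} (he : e ∈ G.edgeSet) (hwe : w ∈ e) (he' : e' ∈ G.edgeSet) (hwe' : w ∈ e')
    (hec : α e ≤ c) (hce' : c ≤ α e') :
    w = u ∨ w = v := by
  obtain ⟨f, hf, hwf, hfc⟩ := hα.exists_incident_eq_of_le_of_le he hwe he' hwe' hec hce'
  rw [huniq f hf hfc] at hwf
  exact Sym2.mem_iff.mp hwf

end IsIntervalColoring

theorem consecutive_color_subgraphs_intersection_general {V : Type*}
    (G : SimpleGraph V) (t : ℕ) (α : Sym2 V → ℕ)
    (hα : IsIntervalColoring G t α) (c₁ c₂ : ℕ) (hlt : c₁ < c₂)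
    (u₁ v₁ : V)
    (he₁ : s(u₁, v₁) ∈ G.edgeSet) (hc₁ : α s(u₁, v₁) = c₁)
    (huniq₁ : ∀ e ∈ G.edgeSet, α e = c₁ → e = s(u₁, v₁)) :
    {w : V | ∃ e ∈ G.edgeSet, w ∈ e ∧ α e ≤ c₁} ∩
      {w : V | ∃ e ∈ G.edgeSet, w ∈ e ∧ c₁ ≤ α e ∧ α e ≤ c₂} = {u₁, v₁} ∧
    {e ∈ G.edgeSet | α e ≤ c₁} ∩ {e ∈ G.edgeSet | c₁ ≤ α e ∧ α e ≤ c₂} =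
      {s(u₁, v₁)} := by
  have he₁_mem : c₁ ≤ α s(u₁, v₁) ∧ α s(u₁, v₁) ≤ c₂ := ⟨hc₁.ge, hc₁ ▸ hlt.le⟩
  constructor
  · ext w
    constructor
    · rintro ⟨⟨e, he, hwe, hec⟩, e', he', hwe', hce', -⟩
      exact hα.eq_or_eq_of_incident_le_of_incident_ge huniq₁ he hwe he' hwe' hec hce'
    · intro hw
      have hw₁ : w ∈ s(u₁, v₁) := Sym2.mem_iff.mpr hw
      exact ⟨⟨_, he₁, hw₁, hc₁.le⟩, _, he₁, hw₁, he₁_mem⟩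
  · ext e
    constructor
    · rintro ⟨⟨he, hec⟩, -, hce, -⟩
      exact huniq₁ e he (le_antisymm hec hce)
    · rintro rfl
      exact ⟨⟨he₁, hc₁.le⟩, he₁, he₁_mem⟩

/-- For once-used colors `c₁ < c₂`, the subgraph on edges with colors in `[1, c₁]`
and the subgraph on edges with colors in `[c₁, c₂]` share exactly the vertices
`u₁, v₁` and exactly the edge `e₁ = u₁v₁` of color `c₁`. -/
theorem consecutive_color_subgraphs_intersection {V : Type*}
    (G : SimpleGraph V) (t : ℕ) (α : Sym2 V → ℕ)
    (hα : IsIntervalColoring G t α) (c₁ c₂ : ℕ) (hlt : c₁ < c₂)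
    (u₁ v₁ : V) (e₂ : Sym2 V)
    (he₁ : s(u₁, v₁) ∈ G.edgeSet) (hc₁ : α s(u₁, v₁) = c₁)
    (huniq₁ : ∀ e ∈ G.edgeSet, α e = c₁ → e = s(u₁, v₁))
    (he₂ : e₂ ∈ G.edgeSet) (hc₂ : α e₂ = c₂)
    (huniq₂ : ∀ e ∈ G.edgeSet, α e = c₂ → e = e₂) :
    {w : V | ∃ e ∈ G.edgeSet, w ∈ e ∧ α e ≤ c₁} ∩
      {w : V | ∃ e ∈ G.edgeSet, w ∈ e ∧ c₁ ≤ α e ∧ α e ≤ c₂} = {u₁, v₁} ∧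
    {e ∈ G.edgeSet | α e ≤ c₁} ∩ {e ∈ G.edgeSet | c₁ ≤ α e ∧ α e ≤ c₂} =
      {s(u₁, v₁)} :=
  consecutive_color_subgraphs_intersection_general G t α hα c₁ c₂ hlt u₁ v₁ he₁ hc₁ huniq₁
end

section
/- If a graph G admits an interval t-coloring, then the chromatic index of G equals its maximum degree: χ'(G) = Δ(G). -/
/-- The chromatic index of `G`: the least `n` such that `G` has a proper
edge-coloring using colors `0,…,n-1`. -/
noncomputable def chromaticIndex {V : Type*} (G : SimpleGraph V) : ℕ :=
  sInf {n : ℕ | ∃ β : Sym2 V → ℕ, (∀ e ∈ G.edgeSet, β e < n) ∧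
    (∀ e ∈ G.edgeSet, ∀ e' ∈ G.edgeSet, e ≠ e' → (∃ v : V, v ∈ e ∧ v ∈ e') → β e ≠ β e')}

/-- Colors at a vertex lie in a window shorter than the degree. -/
lemma interval_color_diff_lt {V : Type*} [Fintype V] (G : SimpleGraph V) [DecidableRel G.Adj]
    (t : ℕ) (α : Sym2 V → ℕ) (hα : IsIntervalColoring G t α)
    (v : V) (e e' : Sym2 V) (he : e ∈ G.edgeSet) (he' : e' ∈ G.edgeSet)
    (hv : v ∈ e) (hv' : v ∈ e') (hle : α e ≤ α e') :
    α e' - α e < G.degree v := by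
  classical
  obtain ⟨_, _, _, hint⟩ := hα
  have hsub : Finset.Icc (α e) (α e') ⊆ (G.incidenceFinset v).image α := by
    intro c hc
    simp only [Finset.mem_Icc] at hc
    obtain ⟨f, hf, hvf, hfc⟩ :=
      hint v (α e) c (α e') ⟨e, he, hv, rfl⟩ ⟨e', he', hv', rfl⟩ hc.1 hc.2
    exact Finset.mem_image.2 ⟨f, by simp [SimpleGraph.mem_incidenceFinset,
      SimpleGraph.incidenceSet, hf, hvf], hfc⟩
  have h1 := Finset.card_le_card hsub
  have h2 : ((G.incidenceFinset v).image α).card ≤ G.degree v := by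
    rw [← G.card_incidenceFinset_eq_degree v]
    exact Finset.card_image_le
  rw [Nat.card_Icc] at h1
  omega

/-- Any proper edge coloring with `n` colors needs `n ≥ Δ`. -/
lemma maxDegree_le_of_proper {V : Type*} [Fintype V] (G : SimpleGraph V) [DecidableRel G.Adj]
    (n : ℕ) (β : Sym2 V → ℕ) (hlt : ∀ e ∈ G.edgeSet, β e < n)
    (hp : ∀ e ∈ G.edgeSet, ∀ e' ∈ G.edgeSet, e ≠ e' → (∃ v : V, v ∈ e ∧ v ∈ e') → β e ≠ β e') :
    G.maxDegree ≤ n := by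
  classical
  apply SimpleGraph.maxDegree_le_of_forall_degree_le
  intro v
  rw [← G.card_incidenceFinset_eq_degree v]
  have : (G.incidenceFinset v).card ≤ (Finset.range n).card := by
    apply Finset.card_le_card_of_injOn β
    · intro e he
      rw [Finset.mem_coe, SimpleGraph.mem_incidenceFinset] at he
      exact Finset.mem_coe.2 (Finset.mem_range.2 (hlt e he.1))
    · intro e he e' he' hβ
      rw [Finset.mem_coe, SimpleGraph.mem_incidenceFinset] at he he'
      by_contra hne
      exact hp e he.1 e' he'.1 hne ⟨v, he.2, he'.2⟩ hβ
  simpa using this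


/-- If `G` admits an interval `t`-coloring, then `χ'(G) = Δ(G)`. -/
theorem interval_colorable_chromaticIndex_eq_maxDegree {V : Type*} [Fintype V]
    (G : SimpleGraph V) [DecidableRel G.Adj] (t : ℕ) (α : Sym2 V → ℕ)
    (hα : IsIntervalColoring G t α) :
    chromaticIndex G = G.maxDegree := by
  classical
  have hkey : ∀ e ∈ G.edgeSet, ∀ e' ∈ G.edgeSet, e ≠ e' → (∃ v : V, v ∈ e ∧ v ∈ e') →
      (α e - 1) % G.maxDegree ≠ (α e' - 1) % G.maxDegree := by
    intro e he e' he' hne hv heq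
    obtain ⟨v, hv, hv'⟩ := hv
    have hd := hα.2.1 e he e' he' hne ⟨v, hv, hv'⟩
    have h1 := (hα.1 e he).1
    have h1' := (hα.1 e' he').1
    -- wlog α e < α e'
    rcases lt_or_gt_of_ne hd with hlt | hlt
    · have hdiff : α e' - α e < G.degree v :=
        interval_color_diff_lt G t α hα v e e' he he' hv hv' hlt.le
      have hΔ : α e' - α e < G.maxDegree := lt_of_lt_of_le hdiff (G.degree_le_maxDegree v)
      have hdvd : G.maxDegree ∣ (α e' - 1) - (α e - 1) :=
        (Nat.modEq_iff_dvd' (by omega)).mp heq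
      have := Nat.le_of_dvd (by omega) hdvd
      omega
    · have hdiff : α e - α e' < G.degree v :=
        interval_color_diff_lt G t α hα v e' e he' he hv' hv hlt.le
      have hΔ : α e - α e' < G.maxDegree := lt_of_lt_of_le hdiff (G.degree_le_maxDegree v)
      have hdvd : G.maxDegree ∣ (α e - 1) - (α e' - 1) :=
        (Nat.modEq_iff_dvd' (by omega)).mp heq.symm
      have := Nat.le_of_dvd (by omega) hdvd
      omega
  have hmem : G.maxDegree ∈ {n : ℕ | ∃ β : Sym2 V → ℕ, (∀ e ∈ G.edgeSet, β e < n) ∧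
      (∀ e ∈ G.edgeSet, ∀ e' ∈ G.edgeSet, e ≠ e' → (∃ v : V, v ∈ e ∧ v ∈ e') → β e ≠ β e')} := by
    by_cases hΔ : G.maxDegree = 0
    · have hne : ∀ e, e ∉ G.edgeSet := by
        intro e he
        induction e with
        | h a b =>
          rw [SimpleGraph.mem_edgeSet] at he
          have h1 : 1 ≤ G.degree a := by
            rw [← SimpleGraph.card_neighborFinset_eq_degree]
            exact Finset.card_pos.2 ⟨b, by simp [he]⟩
          have := G.degree_le_maxDegree a
          omega
      exact ⟨α, fun e he => absurd he (hne e), fun e he => absurd he (hne e)⟩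
    · exact ⟨fun e => (α e - 1) % G.maxDegree,
        fun e _ => Nat.mod_lt _ (Nat.pos_of_ne_zero hΔ), hkey⟩
  refine le_antisymm (Nat.sInf_le hmem) (le_csInf ⟨_, hmem⟩ ?_)
  rintro n ⟨β, hlt, hp⟩
  exact maxDegree_le_of_proper G n β hlt hp
end

section
/- If a triangle-free graph G admits an interval t-coloring, then t ≤ |V(G)| − 1. -/
section IntervalAux

variable {V : Type*}

/-- `v` is incident with an edge of color `c`. -/
abbrev HasCol (G : SimpleGraph V) (α : Sym2 V → ℕ) (v : V) (c : ℕ) : Prop :=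
  ∃ e ∈ G.edgeSet, v ∈ e ∧ α e = c

lemma hasCol_left {G : SimpleGraph V} {α : Sym2 V → ℕ} {u v : V} (h : G.Adj u v) :
    HasCol G α u (α s(u, v)) :=
  ⟨s(u, v), (G.mem_edgeSet).mpr h, Sym2.mem_mk_left u v, rfl⟩

lemma hasCol_right {G : SimpleGraph V} {α : Sym2 V → ℕ} {u v : V} (h : G.Adj u v) :
    HasCol G α v (α s(u, v)) :=
  ⟨s(u, v), (G.mem_edgeSet).mpr h, Sym2.mem_mk_right u v, rfl⟩

lemma hasCol_iff {G : SimpleGraph V} {α : Sym2 V → ℕ} {v : V} {c : ℕ} :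
    HasCol G α v c ↔ ∃ z, G.Adj v z ∧ α s(v, z) = c := by
  constructor
  · rintro ⟨e, he, hv, rfl⟩
    obtain ⟨z, rfl⟩ := Sym2.mem_iff_exists.mp hv
    exact ⟨z, (G.mem_edgeSet).mp he, rfl⟩
  · rintro ⟨z, hz, rfl⟩
    exact hasCol_left hz

open Classical in
/-- The largest color incident with `v` (0 if none). -/
noncomputable def topc [Fintype V] (G : SimpleGraph V) (α : Sym2 V → ℕ) (v : V) : ℕ :=
  Finset.univ.sup (fun z => if G.Adj v z then α s(v, z) else 0)

lemma le_topc [Fintype V] {G : SimpleGraph V} {α : Sym2 V → ℕ} {v : V} {c : ℕ}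
    (h : HasCol G α v c) : c ≤ topc G α v := by
  classical
  obtain ⟨z, hz, rfl⟩ := hasCol_iff.mp h
  have hle := Finset.le_sup (s := Finset.univ)
    (f := fun z => if G.Adj v z then α s(v, z) else 0) (Finset.mem_univ z)
  rw [if_pos hz] at hle
  exact hle

lemma exists_ge_of_le_topc [Fintype V] {G : SimpleGraph V} {α : Sym2 V → ℕ} {v : V} {c : ℕ}
    (h0 : 0 < c) (h : c ≤ topc G α v) : ∃ d, HasCol G α v d ∧ c ≤ d := by
  classical
  by_contra hcon
  push_neg at hcon
  have hlt : topc G α v < c := by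
    unfold topc
    rw [Finset.sup_lt_iff (show (⊥ : ℕ) < c from h0)]
    intro z _
    by_cases hz : G.Adj v z
    · rw [if_pos hz]; exact hcon _ (hasCol_left hz)
    · rw [if_neg hz]; exact h0
  omega

/-- The key geodesic lemma: if `x` sees color `lo`, `y` sees color `hi`, and
`x`, `y` are in the same component, then there are at least `hi + 1 - lo`
vertices in the component of `x`, distinct from `x`. -/
lemma geo [Fintype V] {G : SimpleGraph V} {α : Sym2 V → ℕ}
    (hint : ∀ v c₁ c c₂, HasCol G α v c₁ → HasCol G α v c₂ → c₁ ≤ c → c ≤ c₂ → HasCol G α v c)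
    (htf : G.CliqueFree 3)
    {x y : V} (hr : G.Reachable x y) {lo hi : ℕ} (hlo : 1 ≤ lo) (hlh : lo ≤ hi)
    (hx : HasCol G α x lo) (hy : HasCol G α y hi) :
    ∃ S : Finset V, hi + 1 - lo ≤ S.card ∧ ∀ v ∈ S, G.Reachable x v ∧ v ≠ x := by
  classical
  -- a walk from x to y, as a function ℕ → V
  have hex : ∃ k, ∃ w : ℕ → V, w 0 = x ∧ w k = y ∧ ∀ i < k, G.Adj (w i) (w (i + 1)) := by
    obtain ⟨p⟩ := hr
    exact ⟨p.length, p.getVert, p.getVert_zero, p.getVert_length,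
      fun i hi => p.adj_getVert_succ hi⟩
  set k₀ := Nat.find hex with hk₀
  obtain ⟨w₀, hch₀⟩ := Nat.find_spec hex
  set Ch : (ℕ → V) → Prop :=
    fun w' => w' 0 = x ∧ w' k₀ = y ∧ ∀ i < k₀, G.Adj (w' i) (w' (i + 1)) with hCh
  set B : (ℕ → V) → ℕ := fun w' => ∑ i ∈ Finset.range (k₀ + 1), topc G α (w' i) with hB
  set M := Finset.univ.sup (topc G α) with hM
  have hBle : ∀ w' : ℕ → V, B w' ≤ (k₀ + 1) * M := by
    intro w'
    have := Finset.sum_le_card_nsmul (Finset.range (k₀ + 1)) (fun i => topc G α (w' i)) M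
      (fun i _ => Finset.le_sup (Finset.mem_univ _))
    simpa [Finset.card_range, smul_eq_mul] using this
  set P : ℕ → Prop := fun n => ∃ w', Ch w' ∧ B w' = n with hP
  have hNspec : P (Nat.findGreatest P ((k₀ + 1) * M)) :=
    Nat.findGreatest_spec (hBle w₀) ⟨w₀, hch₀, rfl⟩
  obtain ⟨w, hwCh, hBw⟩ := hNspec
  have hmax : ∀ w', Ch w' → B w' ≤ B w := by
    intro w' hw'
    rw [hBw]
    exact Nat.le_findGreatest (hBle w') ⟨w', hw', rfl⟩
  obtain ⟨hw0, hwk, hwadj⟩ := hwCh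
  -- every color in [lo, hi] appears at some vertex of the walk
  have hcov : ∀ c, lo ≤ c → c ≤ hi → ∃ i, i ≤ k₀ ∧ HasCol G α (w i) c := by
    intro c hlc hch
    by_contra hcon
    push_neg at hcon
    have hkey : ∀ i, i ≤ k₀ → ∀ d, HasCol G α (w i) d → d < c := by
      intro i
      induction i with
      | zero =>
        intro _ d hd
        by_contra hdc
        push_neg at hdc
        have hx0 : HasCol G α (w 0) lo := by rw [hw0]; exact hx
        obtain ⟨e, he, hve, hec⟩ := hint _ lo c d hx0 hd hlc hdc
        exact hcon 0 (Nat.zero_le _) e he hve hec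
      | succ i ih =>
        intro hik d hd
        have hik' : i < k₀ := by omega
        have hadj := hwadj i hik'
        have hγ := ih (by omega) _ (hasCol_left hadj)
        by_contra hdc
        push_neg at hdc
        obtain ⟨e, he, hve, hec⟩ := hint _ _ c d (hasCol_right hadj) hd (by omega) hdc
        exact hcon (i + 1) hik e he hve hec
    have hyk : HasCol G α (w k₀) hi := by rw [hwk]; exact hy
    have := hkey k₀ le_rfl hi hyk
    omega
  -- minimal index of each color, and the corresponding neighbor
  have hcov' : ∀ c ∈ Finset.Icc lo hi,
      ∃ i, (i ≤ k₀ ∧ HasCol G α (w i) c) ∧ ∀ j, j < i → ¬ HasCol G α (w j) c := by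
    intro c hc
    rw [Finset.mem_Icc] at hc
    have h := hcov c hc.1 hc.2
    refine ⟨Nat.find h, Nat.find_spec h, ?_⟩
    intro j hj hcol
    by_cases hjk : j ≤ k₀
    · exact Nat.find_min h hj ⟨hjk, hcol⟩
    · have := (Nat.find_spec h).1; omega
  choose idx hidxspec hidxmin using hcov'
  have hφex : ∀ (c : ℕ) (hc : c ∈ Finset.Icc lo hi),
      ∃ z, G.Adj (w (idx c hc)) z ∧ α s(w (idx c hc), z) = c :=
    fun c hc => hasCol_iff.mp (hidxspec c hc).2
  choose φ hφadj hφcol using hφex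
  -- walk vertices are reachable from x
  have hreach : ∀ i, i ≤ k₀ → G.Reachable x (w i) := by
    intro i
    induction i with
    | zero => intro _; rw [hw0]
    | succ i ih =>
      intro h
      exact (ih (by omega)).trans (hwadj i (by omega)).reachable
  -- φ never hits x
  have hφne : ∀ c hc, φ c hc ≠ x := by
    intro c hc hfx
    have hx0 : HasCol G α (w 0) c := by
      rw [hw0, ← hfx]
      exact ⟨s(w (idx c hc), φ c hc), (G.mem_edgeSet).mpr (hφadj c hc),
        Sym2.mem_mk_right _ _, hφcol c hc⟩
    have h0 : idx c hc = 0 := by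
      by_contra h
      exact hidxmin c hc 0 (by omega) hx0
    have hadj := hφadj c hc
    rw [h0, hw0, hfx] at hadj
    exact G.loopless.irrefl x hadj
  -- the key injectivity argument
  have key : ∀ (c c' : ℕ) (hc : c ∈ Finset.Icc lo hi) (hc' : c' ∈ Finset.Icc lo hi),
      φ c hc = φ c' hc' → idx c hc < idx c' hc' → False := by
    intro c c' hc hc' hzz hpq
    set p := idx c hc with hp
    set q := idx c' hc' with hq
    set z := φ c' hc' with hzdef
    have hqk : q ≤ k₀ := (hidxspec c' hc').1
    have hadjp : G.Adj (w p) z := by rw [← hzz]; exact hφadj c hc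
    have hcolp : α s(w p, z) = c := by rw [← hzz]; exact hφcol c hc
    have hadjq : G.Adj (w q) z := hφadj c' hc'
    have hcolq : α s(w q, z) = c' := hφcol c' hc'
    have hcase : q = p + 1 ∨ q = p + 2 ∨ p + 3 ≤ q := by omega
    rcases hcase with h1 | h2 | h3
    · -- distance 1: triangle
      have hadjpq : G.Adj (w p) (w q) := by
        rw [h1]; exact hwadj p (by omega)
      exact htf {z, w p, w q}
        (SimpleGraph.is3Clique_triple_iff.mpr ⟨hadjp.symm, hadjq.symm, hadjpq⟩)
    · -- distance 2: either a shortcut in colors below, or a swap improving B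
      have hmk : p + 1 < k₀ := by omega
      have hc'1 : 1 ≤ c' := le_trans hlo (Finset.mem_Icc.mp hc').1
      have hzq : HasCol G α z c' := by rw [← hcolq]; exact hasCol_right hadjq
      by_cases hbc : topc G α (w (p + 1)) < c'
      · -- swap w (p+1) for z : strictly increases B
        set w2 : ℕ → V := fun n => if n = p + 1 then z else w n with hw2def
        have hch2 : Ch w2 := by
          refine ⟨?_, ?_, ?_⟩
          · show (if 0 = p + 1 then z else w 0) = x
            rw [if_neg (by omega)]; exact hw0
          · show (if k₀ = p + 1 then z else w k₀) = y
            rw [if_neg (by omega)]; exact hwk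
          · intro n hn
            show G.Adj (if n = p + 1 then z else w n) (if n + 1 = p + 1 then z else w (n + 1))
            by_cases ha : n = p + 1
            · rw [if_pos ha, if_neg (by omega)]
              have hnq : n + 1 = q := by omega
              rw [hnq]
              exact hadjq.symm
            · rw [if_neg ha]
              by_cases hb : n + 1 = p + 1
              · rw [if_pos hb]
                have hnp : n = p := by omega
                rw [hnp]
                exact hadjp
              · rw [if_neg hb]
                exact hwadj n hn
        have hlt : B w < B w2 := by
          apply Finset.sum_lt_sum
          · intro i _
            by_cases ha : i = p + 1
            · subst ha
              show topc G α (w (p + 1)) ≤ topc G α (if p + 1 = p + 1 then z else w (p + 1))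
              rw [if_pos rfl]
              exact le_of_lt (lt_of_lt_of_le hbc (le_topc hzq))
            · show topc G α (w i) ≤ topc G α (if i = p + 1 then z else w i)
              rw [if_neg ha]
          · refine ⟨p + 1, Finset.mem_range.mpr (by omega), ?_⟩
            show topc G α (w (p + 1)) < topc G α (if p + 1 = p + 1 then z else w (p + 1))
            rw [if_pos rfl]
            exact lt_of_lt_of_le hbc (le_topc hzq)
        have := hmax w2 hch2
        omega
      · -- all colors at every w j, j ≤ p+1, exceed c' : contradiction with lo at x
        push_neg at hbc
        obtain ⟨β, hβ, hβge⟩ := exists_ge_of_le_topc (by omega) hbc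
        have hdown : ∀ s, s ≤ p + 1 → ∀ d, HasCol G α (w (p + 1 - s)) d → c' < d := by
          intro s
          induction s with
          | zero =>
            intro _ d hd
            by_contra hdc
            push_neg at hdc
            have : HasCol G α (w (p + 1)) c' := hint _ d c' β hd hβ hdc hβge
            exact hidxmin c' hc' (p + 1) (by omega) this
          | succ s ih =>
            intro hs d hd
            have hstep : p + 1 - (s + 1) + 1 = p + 1 - s := by omega
            have hadjj : G.Adj (w (p + 1 - (s + 1))) (w (p + 1 - (s + 1) + 1)) :=
              hwadj _ (by omega)
            rw [hstep] at hadjj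
            have hγgt := ih (by omega) _ (hasCol_right (α := α) hadjj)
            by_contra hdc
            push_neg at hdc
            have : HasCol G α (w (p + 1 - (s + 1))) c' :=
              hint _ d c' _ hd (hasCol_left hadjj) hdc (le_of_lt hγgt)
            exact hidxmin c' hc' (p + 1 - (s + 1)) (by omega) this
        have hxgt : c' < lo := by
          have h := hdown (p + 1) le_rfl lo ?_
          · exact h
          · rw [Nat.sub_self, hw0]; exact hx
        have : lo ≤ c' := (Finset.mem_Icc.mp hc').1
        omega
    · -- distance ≥ 3: shortcut through z contradicts minimality of k₀
      set g := q - p with hgdef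
      have hg3 : 3 ≤ g := by omega
      set k' := k₀ - g + 2 with hk'def
      have hk'lt : k' < k₀ := by omega
      apply Nat.find_min hex hk'lt
      refine ⟨fun m => if m ≤ p then w m else if m = p + 1 then z else w (m + g - 2), ?_, ?_, ?_⟩
      · show (if 0 ≤ p then w 0 else _) = x
        rw [if_pos (Nat.zero_le _)]; exact hw0
      · show (if k' ≤ p then w k' else if k' = p + 1 then z else w (k' + g - 2)) = y
        rw [if_neg (by omega), if_neg (by omega)]
        have : k' + g - 2 = k₀ := by omega
        rw [this]; exact hwk
      · intro m hm
        rcases lt_trichotomy m p with hmp | hmp | hmp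
        · show G.Adj (if m ≤ p then w m else _) (if m + 1 ≤ p then w (m + 1) else _)
          rw [if_pos (by omega), if_pos (by omega)]
          exact hwadj m (by omega)
        · show G.Adj (if m ≤ p then w m else _)
            (if m + 1 ≤ p then w (m + 1) else if m + 1 = p + 1 then z else _)
          rw [if_pos (by omega : m ≤ p), if_neg (by omega : ¬ m + 1 ≤ p),
            if_pos (by omega : m + 1 = p + 1), hmp]
          exact hadjp
        · by_cases hm1 : m = p + 1
          · subst hm1
            show G.Adj (if p + 1 ≤ p then _ else if p + 1 = p + 1 then z else _)
              (if p + 1 + 1 ≤ p then _ else if p + 1 + 1 = p + 1 then z else w (p + 1 + 1 + g - 2))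
            rw [if_neg (by omega), if_pos rfl, if_neg (by omega), if_neg (by omega)]
            have : p + 1 + 1 + g - 2 = q := by omega
            rw [this]
            exact hadjq.symm
          · show G.Adj (if m ≤ p then _ else if m = p + 1 then z else w (m + g - 2))
              (if m + 1 ≤ p then _ else if m + 1 = p + 1 then z else w (m + 1 + g - 2))
            rw [if_neg (by omega), if_neg hm1, if_neg (by omega), if_neg (by omega)]
            have : m + 1 + g - 2 = (m + g - 2) + 1 := by omega
            rw [this]
            exact hwadj (m + g - 2) (by omega)
  -- assemble the finset
  set ψ : {c // c ∈ Finset.Icc lo hi} → V := fun c => φ c.1 c.2 with hψ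
  have hinj : Set.InjOn ψ ↑(Finset.Icc lo hi).attach := by
    intro a _ b _ hab
    by_contra hne
    have hab' : φ a.1 a.2 = φ b.1 b.2 := hab
    rcases lt_trichotomy (idx a.1 a.2) (idx b.1 b.2) with h | h | h
    · exact key a.1 b.1 a.2 b.2 hab' h
    · apply hne
      apply Subtype.ext
      have h1 := hφcol a.1 a.2
      have h2 := hφcol b.1 b.2
      rw [← h1, ← h2, hab', h]
    · exact key b.1 a.1 b.2 a.2 hab'.symm h
  refine ⟨(Finset.Icc lo hi).attach.image ψ, ?_, ?_⟩
  · rw [Finset.card_image_of_injOn hinj, Finset.card_attach, Nat.card_Icc]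
  · intro v hv
    obtain ⟨c, _, rfl⟩ := Finset.mem_image.mp hv
    exact ⟨(hreach _ (hidxspec c.1 c.2).1).trans (hφadj c.1 c.2).reachable, hφne c.1 c.2⟩

end IntervalAux

/-- If a triangle-free graph `G` admits an interval `t`-coloring, then
`t ≤ |V(G)| - 1`. -/
theorem triangle_free_interval_coloring_bound {V : Type*} [Fintype V]
    (G : SimpleGraph V) (t : ℕ) (α : Sym2 V → ℕ)
    (htf : G.CliqueFree 3)
    (hα : IsIntervalColoring G t α) :
    t ≤ Fintype.card V - 1 := by
  classical
  obtain ⟨hbound, hproper, hused, hint⟩ := hα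
  rcases Nat.eq_zero_or_pos t with rfl | ht
  · exact Nat.zero_le _
  -- pick a vertex seeing each color
  have hXex : ∀ c ∈ Finset.Icc 1 t, ∃ v, HasCol G α v c := by
    intro c hc
    rw [Finset.mem_Icc] at hc
    obtain ⟨e, he, hec⟩ := hused c hc.1 hc.2
    induction e with
    | _ u v' => exact ⟨u, s(u, v'), he, Sym2.mem_mk_left u v', hec⟩
  have hVne : Nonempty V := by
    obtain ⟨v, _⟩ := hXex 1 (Finset.mem_Icc.mpr ⟨le_rfl, ht⟩)
    exact ⟨v⟩
  set X : ℕ → V := fun c =>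
    if h : ∃ v, HasCol G α v c then h.choose else Classical.arbitrary V with hX
  have hXspec : ∀ c ∈ Finset.Icc 1 t, HasCol G α (X c) c := by
    intro c hc
    have h := hXex c hc
    simp only [hX, dif_pos h]
    exact h.choose_spec
  set κmap : ℕ → G.ConnectedComponent := fun c => G.connectedComponentMk (X c) with hκ
  set T := (Finset.Icc 1 t).image κmap with hT
  -- per-component bound
  have hper : ∀ κ₀ ∈ T,
      ((Finset.Icc 1 t).filter (fun c => κmap c = κ₀)).card + 1
        ≤ (Finset.univ.filter (fun v => G.connectedComponentMk v = κ₀)).card := by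
    intro κ₀ hκ₀
    set F := (Finset.Icc 1 t).filter (fun c => κmap c = κ₀) with hF
    have hFne : F.Nonempty := by
      obtain ⟨c, hc, hcκ⟩ := Finset.mem_image.mp hκ₀
      exact ⟨c, Finset.mem_filter.mpr ⟨hc, hcκ⟩⟩
    set lo := F.min' hFne with hlodef
    set hi' := F.max' hFne with hhidef
    have hlomem := Finset.mem_filter.mp (F.min'_mem hFne)
    have himem := Finset.mem_filter.mp (F.max'_mem hFne)
    have hlo1 : 1 ≤ lo := (Finset.mem_Icc.mp hlomem.1).1
    have hlh : lo ≤ hi' := F.min'_le _ (F.max'_mem hFne)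
    have hxcol : HasCol G α (X lo) lo := hXspec lo hlomem.1
    have hycol : HasCol G α (X hi') hi' := hXspec hi' himem.1
    have hreach : G.Reachable (X lo) (X hi') := by
      apply SimpleGraph.ConnectedComponent.exact
      have e1 : G.connectedComponentMk (X lo) = κ₀ := hlomem.2
      have e2 : G.connectedComponentMk (X hi') = κ₀ := himem.2
      rw [e1, e2]
    obtain ⟨S, hScard, hSmem⟩ := geo hint htf hreach hlo1 hlh hxcol hycol
    have hsub : insert (X lo) S ⊆
        Finset.univ.filter (fun v => G.connectedComponentMk v = κ₀) := by
      intro v hv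
      rw [Finset.mem_insert] at hv
      refine Finset.mem_filter.mpr ⟨Finset.mem_univ _, ?_⟩
      rcases hv with rfl | hv
      · exact hlomem.2
      · have h1 := (hSmem v hv).1
        rw [← SimpleGraph.ConnectedComponent.sound h1]
        exact hlomem.2
    have hxnotS : X lo ∉ S := fun h => (hSmem _ h).2 rfl
    have hFsub : F ⊆ Finset.Icc lo hi' := fun c hc =>
      Finset.mem_Icc.mpr ⟨F.min'_le c hc, F.le_max' c hc⟩
    have h1 : F.card ≤ hi' + 1 - lo := by
      have := Finset.card_le_card hFsub
      rwa [Nat.card_Icc] at this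
    have h2 : S.card + 1 ≤
        (Finset.univ.filter (fun v => G.connectedComponentMk v = κ₀)).card := by
      rw [← Finset.card_insert_of_notMem hxnotS]
      exact Finset.card_le_card hsub
    omega
  -- total counting
  have hsum1 : t = ∑ κ₀ ∈ T, ((Finset.Icc 1 t).filter (fun c => κmap c = κ₀)).card := by
    have h := Finset.card_eq_sum_card_fiberwise
      (f := κmap) (s := Finset.Icc 1 t) (t := T)
      (fun c hc => Finset.mem_image_of_mem _ hc)
    rw [Nat.card_Icc] at h
    simpa using h
  have hsum2 : ∑ κ₀ ∈ T, (Finset.univ.filter (fun v => G.connectedComponentMk v = κ₀)).card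
      ≤ Fintype.card V := by
    set s := Finset.univ.filter (fun v => G.connectedComponentMk v ∈ T) with hs
    have hcards : s.card =
        ∑ κ₀ ∈ T, (s.filter (fun v => G.connectedComponentMk v = κ₀)).card :=
      Finset.card_eq_sum_card_fiberwise (fun v hv => (Finset.mem_filter.mp hv).2)
    have heq : ∀ κ₀ ∈ T, s.filter (fun v => G.connectedComponentMk v = κ₀)
        = Finset.univ.filter (fun v => G.connectedComponentMk v = κ₀) := by
      intro κ₀ hκ₀
      ext v
      simp only [hs, Finset.mem_filter, Finset.mem_univ, true_and]
      constructor
      · rintro ⟨_, h2⟩; exact h2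
      · intro h; exact ⟨h ▸ hκ₀, h⟩
    calc ∑ κ₀ ∈ T, (Finset.univ.filter (fun v => G.connectedComponentMk v = κ₀)).card
        = ∑ κ₀ ∈ T, (s.filter (fun v => G.connectedComponentMk v = κ₀)).card := by
          apply Finset.sum_congr rfl
          intro κ₀ hκ₀
          rw [heq κ₀ hκ₀]
      _ = s.card := hcards.symm
      _ ≤ Fintype.card V := by
          have := Finset.card_filter_le (Finset.univ : Finset V)
            (fun v => G.connectedComponentMk v ∈ T)
          simpa using this
  have hTne : T.Nonempty :=
    ⟨κmap 1, Finset.mem_image_of_mem _ (Finset.mem_Icc.mpr ⟨le_rfl, ht⟩)⟩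
  have hmain : t + T.card ≤ Fintype.card V := by
    have hstep : t + T.card
        = ∑ κ₀ ∈ T, (((Finset.Icc 1 t).filter (fun c => κmap c = κ₀)).card + 1) := by
      rw [Finset.sum_add_distrib, ← hsum1, Finset.sum_const, smul_eq_mul, mul_one]
    rw [hstep]
    exact le_trans (Finset.sum_le_sum hper) hsum2
  have hT1 : 1 ≤ T.card := Finset.card_pos.mpr hTne
  omega
end

section
/- If a simple graph G with at least one edge admits an interval t-coloring, then t ≤ 2|V(G)| − 3. -/
/-!
Cut the color range `[1, t]` greedily into blocks `(c₀, c₁], …, (c_{r-1}, c_r]`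
with `c₀ = 0`, `c_r = t`: `c_{l+1}` is the largest color seen by a vertex that also sees
`c_l + 1`. Some vertex `u_l` sees the whole block `(c_l, c_{l+1}]`; together with its
neighbours along those edges it spans a set `P_l` of `c_{l+1} - c_l + 1` vertices, so that
`∑ |P_l| = t + r`. A vertex lying in `P_i` and `P_j` with `j ≥ i + 2` would see `c_{i+1} + 1`
and a color above `c_{i+2}`, against the choice of `c_{i+2}`; so every vertex lies in at most
two of the `P_l`, and `u_0`, which sees color `1`, only in `P_0`. Hence `t + r ≤ 2n - 1`,
which is the bound once `r ≥ 2`; if `r = 1` then `u_0` sees all `t` colors and `t ≤ n - 1`.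
-/

open Finset

theorem Finset.card_le_two_of_forall_le_add_one {s : Finset ℕ}
    (h : ∀ a ∈ s, ∀ b ∈ s, b ≤ a + 1) : #s ≤ 2 := by
  rcases s.eq_empty_or_nonempty with rfl | hs
  · simp
  · calc #s ≤ #(Icc (s.min' hs) (s.min' hs + 1)) :=
          card_le_card fun b hb => mem_Icc.2 ⟨s.min'_le b hb, h _ (s.min'_mem hs) b hb⟩
      _ = 2 := by simp only [Nat.card_Icc]; omega

theorem Finset.sum_card_eq_sum_card_filter_mem {ι α : Type*} [Fintype α] [DecidableEq α]
    (s : Finset ι) (P : ι → Finset α) :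
    ∑ i ∈ s, #(P i) = ∑ a, #{i ∈ s | a ∈ P i} := by
  simp only [card_filter]
  rw [sum_comm]
  simp

section IntervalColoring

variable {V : Type*} {G : SimpleGraph V} {t : ℕ} {α : Sym2 V → ℕ}

variable (G α) in
def SeesColor (x : V) (m : ℕ) : Prop :=
  ∃ e ∈ G.edgeSet, x ∈ e ∧ α e = m

variable (G α) in
open Classical in
noncomputable def colorStar [Fintype V] (u : V) (a b : ℕ) : Finset V :=
  insert u ({y | G.Adj u y ∧ α s(u, y) ∈ Ioc a b} : Finset V)

theorem exists_seesColor_of_mem_colorStar [Fintype V] {u x : V} {a b : ℕ} (hab : a < b)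
    (hu : SeesColor G α u b) (hx : x ∈ colorStar G α u a b) :
    ∃ m ∈ Ioc a b, SeesColor G α x m := by
  classical
  rcases mem_insert.1 hx with rfl | hx
  · exact ⟨b, right_mem_Ioc.2 hab, hu⟩
  · obtain ⟨-, hadj, hm⟩ := mem_filter.1 hx
    exact ⟨_, hm, s(u, x), hadj, Sym2.mem_mk_right u x, rfl⟩

variable (G t α) in
structure IsLadder (c : ℕ → ℕ) (r : ℕ) : Prop where
  zero : c 0 = 0
  last : c r = t
  lt_succ : ∀ l < r, c l < c (l + 1)
  exists_seesColor : ∀ l < r, ∃ u, SeesColor G α u (c l + 1) ∧ SeesColor G α u (c (l + 1))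
  le_of_seesColor :
    ∀ l < r, ∀ x m, SeesColor G α x (c l + 1) → SeesColor G α x m → m ≤ c (l + 1)

-- `Nat.findGreatest` is `0` when no vertex sees `c + 1`, i.e. when `t ≤ c`.
variable (G t α) in
open Classical in
noncomputable def ladderStep (c : ℕ) : ℕ :=
  Nat.findGreatest (fun m => ∃ x, SeesColor G α x (c + 1) ∧ SeesColor G α x m) t

theorem ladderStep_le (c : ℕ) : ladderStep G t α c ≤ t := by
  classical
  exact Nat.findGreatest_le t

namespace IsIntervalColoring

variable (hα : IsIntervalColoring G t α)
include hα

theorem le_of_seesColor {x : V} {m : ℕ} (h : SeesColor G α x m) : 1 ≤ m ∧ m ≤ t := by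
  obtain ⟨e, he, -, rfl⟩ := h
  exact hα.1 e he

theorem seesColor_of_le_of_le {x : V} {a b m : ℕ} (ha : SeesColor G α x a)
    (hb : SeesColor G α x b) (ham : a ≤ m) (hmb : m ≤ b) : SeesColor G α x m :=
  hα.2.2.2 x a m b ha hb ham hmb

theorem exists_seesColor {m : ℕ} (h1 : 1 ≤ m) (ht : m ≤ t) : ∃ x, SeesColor G α x m := by
  obtain ⟨e, he, rfl⟩ := hα.2.2.1 m h1 ht
  induction e using Sym2.ind with
  | h x y => exact ⟨x, s(x, y), he, Sym2.mem_mk_left x y, rfl⟩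

theorem card_colorStar [Fintype V] {u : V} {a b : ℕ}
    (hu : ∀ m ∈ Ioc a b, SeesColor G α u m) :
    #(colorStar G α u a b) = b - a + 1 := by
  classical
  rw [colorStar, card_insert_of_notMem (by simp), ← Nat.card_Ioc]
  congr 1
  refine card_nbij (fun y => α s(u, y)) (fun y hy => (mem_filter.1 hy).2.2) ?_ ?_
  · intro y hy y' hy' hcol
    by_contra hne
    exact hα.2.1 _ (mem_filter.1 hy).2.1 _ (mem_filter.1 hy').2.1
      (mt Sym2.congr_right.1 hne) ⟨u, Sym2.mem_mk_left u y, Sym2.mem_mk_left u y'⟩ hcol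
  · intro m hm
    obtain ⟨e, he, hue, rfl⟩ := hu m hm
    obtain ⟨y, rfl⟩ := Sym2.mem_iff_exists.1 hue
    exact ⟨y, mem_filter.2 ⟨mem_univ y, he, hm⟩, rfl⟩

theorem sub_add_one_le_card [Fintype V] {u : V} {a b : ℕ}
    (hu : ∀ m ∈ Ioc a b, SeesColor G α u m) : b - a + 1 ≤ Fintype.card V :=
  card_colorStar hα hu ▸ card_le_univ _

theorem le_ladderStep {c m : ℕ} {x : V} (hc : SeesColor G α x (c + 1))
    (hm : SeesColor G α x m) : m ≤ ladderStep G t α c := by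
  classical
  exact Nat.le_findGreatest (hα.le_of_seesColor hm).2 ⟨x, hc, hm⟩

theorem lt_ladderStep {c : ℕ} (hc : c < t) : c < ladderStep G t α c := by
  obtain ⟨x, hx⟩ := hα.exists_seesColor (m := c + 1) (by omega) hc
  exact hα.le_ladderStep hx hx

theorem exists_seesColor_ladderStep {c : ℕ} (hc : c < t) :
    ∃ x, SeesColor G α x (c + 1) ∧ SeesColor G α x (ladderStep G t α c) := by
  classical
  obtain ⟨x, hx⟩ := hα.exists_seesColor (m := c + 1) (by omega) hc
  exact Nat.findGreatest_spec (P := fun m => ∃ x, SeesColor G α x (c + 1) ∧ SeesColor G α x m)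
    hc ⟨x, hx, hx⟩

theorem exists_isLadder : ∃ c r, IsLadder G t α c r := by
  set c : ℕ → ℕ := fun l => (ladderStep G t α)^[l] 0
  have hsucc (l : ℕ) : c (l + 1) = ladderStep G t α (c l) :=
    Function.iterate_succ_apply' _ _ _
  have hle (l : ℕ) : c l ≤ t := by
    cases l with
    | zero => exact Nat.zero_le t
    | succ l => exact hsucc l ▸ ladderStep_le _
  have hreach : ∃ r, c r = t := by
    by_contra! hne
    have hgrow (l : ℕ) : l ≤ c l := by
      induction l with
      | zero => exact Nat.zero_le _
      | succ l ih =>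
        have := hα.lt_ladderStep (lt_of_le_of_ne (hle l) (hne l))
        rw [hsucc]
        omega
    exact absurd (hgrow (t + 1)) (by have := hle (t + 1); omega)
  have hlt {l : ℕ} (hl : l < Nat.find hreach) : c l < t :=
    lt_of_le_of_ne (hle l) (Nat.find_min hreach hl)
  refine ⟨c, Nat.find hreach, rfl, Nat.find_spec hreach, fun l hl => ?_, fun l hl => ?_,
    fun l hl x m hx hm => ?_⟩
  · exact hsucc l ▸ hα.lt_ladderStep (hlt hl)
  · exact hsucc l ▸ hα.exists_seesColor_ladderStep (hlt hl)
  · exact hsucc l ▸ hα.le_ladderStep hx hm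

end IsIntervalColoring

namespace IsLadder

variable {c : ℕ → ℕ} {r : ℕ} (hc : IsLadder G t α c r)
include hc

theorem le_of_le {i j : ℕ} (hij : i ≤ j) (hj : j ≤ r) : c i ≤ c j := by
  induction j, hij using Nat.le_induction with
  | base => exact le_rfl
  | succ j _ ih => exact (ih (by omega)).trans (hc.lt_succ j hj).le

theorem exists_seesColor_Ioc (hα : IsIntervalColoring G t α) {l : ℕ} (hl : l < r) :
    ∃ u, ∀ m ∈ Ioc (c l) (c (l + 1)), SeesColor G α u m := by
  obtain ⟨u, hu, hu'⟩ := hc.exists_seesColor l hl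
  exact ⟨u, fun m hm => hα.seesColor_of_le_of_le hu hu' (mem_Ioc.1 hm).1 (mem_Ioc.1 hm).2⟩

theorem le_of_seesColor_of_le (hα : IsIntervalColoring G t α) {i j m m' : ℕ} {x : V}
    (hij : i < j) (hj : j ≤ r) (hm : SeesColor G α x m) (hmi : m ≤ c i + 1)
    (hm' : SeesColor G α x m') : m' ≤ c j := by
  have hstep := hc.lt_succ i (by omega)
  have hcj := hc.le_of_le (show i + 1 ≤ j by omega) hj
  by_contra! hlt
  have hx := hα.seesColor_of_le_of_le hm hm' hmi (by omega)
  have := hc.le_of_seesColor i (by omega) x m' hx hm'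
  omega

theorem card_filter_mem_le_two [DecidableEq V] (hα : IsIntervalColoring G t α)
    {P : ℕ → Finset V}
    (hP : ∀ l < r, ∀ x ∈ P l, ∃ m ∈ Ioc (c l) (c (l + 1)), SeesColor G α x m) (x : V) :
    #{l ∈ range r | x ∈ P l} ≤ 2 := by
  refine card_le_two_of_forall_le_add_one fun i hi j hj => ?_
  simp only [mem_filter, mem_range] at hi hj
  obtain ⟨m, hm, hxm⟩ := hP i hi.1 x hi.2
  obtain ⟨m', hm', hxm'⟩ := hP j hj.1 x hj.2
  rw [mem_Ioc] at hm hm'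
  by_contra! hij
  have := hc.le_of_seesColor_of_le hα (i := i + 1) (by omega) hj.1.le hxm (by omega) hxm'
  omega

theorem card_filter_mem_le_one [DecidableEq V] (hα : IsIntervalColoring G t α)
    {P : ℕ → Finset V}
    (hP : ∀ l < r, ∀ x ∈ P l, ∃ m ∈ Ioc (c l) (c (l + 1)), SeesColor G α x m) {x : V}
    (hx : SeesColor G α x 1) : #{l ∈ range r | x ∈ P l} ≤ 1 := by
  have hzero {l : ℕ} (hl : l ∈ ({l ∈ range r | x ∈ P l} : Finset ℕ)) : l = 0 := by
    simp only [mem_filter, mem_range] at hl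
    obtain ⟨m', hm', hxm'⟩ := hP l hl.1 x hl.2
    rw [mem_Ioc] at hm'
    by_contra! hl₀
    have := hc.le_of_seesColor_of_le hα (Nat.pos_of_ne_zero hl₀) hl.1.le hx (by omega) hxm'
    omega
  exact card_le_one.2 fun i hi j hj => (hzero hi).trans (hzero hj).symm

theorem add_lt_two_mul_card [Fintype V] (hα : IsIntervalColoring G t α) (hr : 0 < r) :
    t + r < 2 * Fintype.card V := by
  classical
  have : Nonempty V := ⟨(hc.exists_seesColor_Ioc hα hr).choose⟩
  choose! u hu using fun l => hc.exists_seesColor_Ioc hα (l := l)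
  set P : ℕ → Finset V := fun l => colorStar G α (u l) (c l) (c (l + 1))
  have hP : ∀ l < r, ∀ x ∈ P l, ∃ m ∈ Ioc (c l) (c (l + 1)), SeesColor G α x m :=
    fun l hl _ hx => exists_seesColor_of_mem_colorStar (hc.lt_succ l hl)
      (hu l hl _ (right_mem_Ioc.2 (hc.lt_succ l hl))) hx
  have hsum {k : ℕ} (hk : k ≤ r) : ∑ l ∈ range k, #(P l) = c k + k := by
    induction k with
    | zero => simp [hc.zero]
    | succ k ih =>
      rw [sum_range_succ, ih (by omega), hα.card_colorStar (hu k (by omega))]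
      have := hc.lt_succ k (by omega)
      omega
  have hu₀ : SeesColor G α (u 0) (c 0 + 1) :=
    hu 0 hr _ (mem_Ioc.2 ⟨lt_add_one _, hc.lt_succ 0 hr⟩)
  rw [hc.zero, zero_add] at hu₀
  calc t + r = ∑ l ∈ range r, #(P l) := by rw [hsum le_rfl, hc.last]
    _ = ∑ x, #{l ∈ range r | x ∈ P l} := sum_card_eq_sum_card_filter_mem _ _
    _ < ∑ _x : V, 2 := sum_lt_sum (fun x _ => hc.card_filter_mem_le_two hα hP x)
      ⟨u 0, mem_univ _, Nat.lt_succ_of_le (hc.card_filter_mem_le_one hα hP hu₀)⟩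
    _ = 2 * Fintype.card V := by rw [sum_const, card_univ, smul_eq_mul, mul_comm]

end IsLadder

end IntervalColoring

theorem interval_coloring_bound_two_n_sub_three_general {V : Type*} [Fintype V]
    (G : SimpleGraph V) (t : ℕ) (α : Sym2 V → ℕ)
    (hα : IsIntervalColoring G t α) :
    t ≤ 2 * Fintype.card V - 3 := by
  obtain ⟨c, r, hc⟩ := hα.exists_isLadder
  rcases r with _ | _ | r
  · simp [← hc.last, hc.zero]
  · obtain ⟨u, hu⟩ := hc.exists_seesColor_Ioc hα zero_lt_one
    have := hα.sub_add_one_le_card hu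
    rw [hc.zero, hc.last] at this
    omega
  · have := hc.add_lt_two_mul_card hα (by omega)
    omega

/-- If a simple graph `G` with at least one edge admits an interval `t`-coloring,
then `t ≤ 2|V(G)| - 3`. -/
theorem interval_coloring_bound_two_n_sub_three {V : Type*} [Fintype V]
    (G : SimpleGraph V) (t : ℕ) (α : Sym2 V → ℕ)
    (hE : G.edgeSet.Nonempty)
    (hα : IsIntervalColoring G t α) :
    t ≤ 2 * Fintype.card V - 3 :=
  interval_coloring_bound_two_n_sub_three_general G t α hα
end

section
/- If a connected graph G admits an interval t-coloring, then t ≤ (diam(G) + 1)(Δ(G) − 1) + 1, where diam(G) is the diameter and Δ(G) the maximum degree of G. -/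
/-- If a connected graph `G` admits an interval `t`-coloring, then
`t ≤ (diam(G) + 1)(Δ(G) - 1) + 1`. -/
theorem connected_interval_coloring_diam_bound {V : Type*} [Fintype V]
    (G : SimpleGraph V) [DecidableRel G.Adj] (t : ℕ) (α : Sym2 V → ℕ)
    (hconn : G.Connected)
    (hα : IsIntervalColoring G t α) :
    t ≤ (G.diam + 1) * (G.maxDegree - 1) + 1 := by
  classical
  obtain ⟨hrange, hproper, hall, hint⟩ := hα
  rcases Nat.eq_zero_or_pos t with ht0 | ht1
  · omega
  set Δ := G.maxDegree with hΔdef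
  -- the spread lemma: two colors at a common vertex differ by less than Δ
  have spread : ∀ (v : V) (c₁ c₂ : ℕ), (∃ e ∈ G.edgeSet, v ∈ e ∧ α e = c₁) →
      (∃ e ∈ G.edgeSet, v ∈ e ∧ α e = c₂) → c₁ ≤ c₂ → c₂ + 1 ≤ c₁ + Δ := by
    intro v c₁ c₂ h1 h2 hle
    obtain ⟨e₀, he₀, hve₀, _⟩ := id h1
    have hne : Nonempty (Sym2 V) := ⟨e₀⟩
    have hmem : ∀ c ∈ Finset.Icc c₁ c₂, ∃ e, e ∈ G.edgeSet ∧ v ∈ e ∧ α e = c := by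
      intro c hc
      rw [Finset.mem_Icc] at hc
      obtain ⟨e, he, hv, ha⟩ := hint v c₁ c c₂ h1 h2 hc.1 hc.2
      exact ⟨e, he, hv, ha⟩
    set f : ℕ → Sym2 V := fun c =>
      if h : ∃ e, e ∈ G.edgeSet ∧ v ∈ e ∧ α e = c then h.choose else Classical.arbitrary _
      with hf
    have hfspec : ∀ c ∈ Finset.Icc c₁ c₂, f c ∈ G.edgeSet ∧ v ∈ f c ∧ α (f c) = c := by
      intro c hc
      have h := hmem c hc
      simp only [hf, dif_pos h]
      exact h.choose_spec
    have hcard : (Finset.Icc c₁ c₂).card ≤ (G.incidenceFinset v).card := by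
      apply Finset.card_le_card_of_injOn f
      · intro c hc
        obtain ⟨h1, h2, _⟩ := hfspec c hc
        rw [Finset.mem_coe, SimpleGraph.mem_incidenceFinset]
        exact ⟨h1, h2⟩
      · intro a ha b hb hab
        obtain ⟨_, _, ha3⟩ := hfspec a ha
        obtain ⟨_, _, hb3⟩ := hfspec b hb
        rw [← ha3, ← hb3, hab]
    rw [SimpleGraph.card_incidenceFinset_eq_degree, Nat.card_Icc] at hcard
    have hdeg : G.degree v ≤ Δ := G.degree_le_maxDegree v
    omega
  -- Δ ≥ 1 since there is an edge
  obtain ⟨e₁, he₁, hc₁⟩ := hall 1 le_rfl ht1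
  have hΔ1 : 1 ≤ Δ := by
    have := spread e₁.out.1 1 1 ⟨e₁, he₁, Sym2.out_fst_mem e₁, hc₁⟩
      ⟨e₁, he₁, Sym2.out_fst_mem e₁, hc₁⟩ le_rfl
    omega
  -- walk lemma
  have walklem : ∀ (x y : V) (p : G.Walk x y) (B : ℕ),
      (∃ c, c ≤ B ∧ ∃ e ∈ G.edgeSet, x ∈ e ∧ α e = c) →
      ∃ c, c ≤ B + p.length * (Δ - 1) ∧ ∃ e ∈ G.edgeSet, y ∈ e ∧ α e = c := by
    intro x y p
    induction p with
    | nil => intro B h; simpa using h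
    | @cons x z y hadj q ih =>
      intro B ⟨c, hcB, e, he, hxe, hce⟩
      have hezz : s(x, z) ∈ G.edgeSet := hadj
      set c' := α s(x, z) with hc'
      have hc'x : ∃ e ∈ G.edgeSet, x ∈ e ∧ α e = c' :=
        ⟨s(x, z), hezz, Sym2.mem_mk_left x z, rfl⟩
      have hc'B : c' ≤ B + (Δ - 1) := by
        rcases le_or_gt c' c with h | h
        · omega
        · have := spread x c c' ⟨e, he, hxe, hce⟩ hc'x h.le
          omega
      have step : ∃ c, c ≤ B + (Δ - 1) ∧ ∃ e ∈ G.edgeSet, z ∈ e ∧ α e = c :=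
        ⟨c', hc'B, s(x, z), hezz, Sym2.mem_mk_right x z, rfl⟩
      obtain ⟨c'', hc'', hrest⟩ := ih (B + (Δ - 1)) step
      refine ⟨c'', ?_, hrest⟩
      have hlen : (SimpleGraph.Walk.cons hadj q).length = q.length + 1 :=
        SimpleGraph.Walk.length_cons hadj q
      rw [hlen]
      have : (q.length + 1) * (Δ - 1) = Δ - 1 + q.length * (Δ - 1) := by ring
      omega
  -- edge with color t and its vertex
  obtain ⟨eₜ, heₜ, hcₜ⟩ := hall t ht1 le_rfl
  set u : V := e₁.out.1 with hu
  set w : V := eₜ.out.1 with hw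
  -- ediam is not ⊤
  have hnetop : G.ediam ≠ ⊤ := by
    have : Nonempty V := hconn.nonempty
    obtain ⟨a, b, hab⟩ := G.exists_edist_eq_ediam_of_finite
    rw [← hab]
    exact SimpleGraph.edist_ne_top_iff_reachable.mpr (hconn a b)
  obtain ⟨p, hp⟩ := hconn.exists_walk_length_eq_dist u w
  have hdist : G.dist u w ≤ G.diam := SimpleGraph.dist_le_diam hnetop
  obtain ⟨c, hcle, hcw⟩ := walklem u w p 1
    ⟨1, le_rfl, e₁, he₁, Sym2.out_fst_mem e₁, hc₁⟩
  have hplen : p.length * (Δ - 1) ≤ G.diam * (Δ - 1) :=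
    Nat.mul_le_mul_right _ (hp ▸ hdist)
  have htw : ∃ e ∈ G.edgeSet, w ∈ e ∧ α e = t := ⟨eₜ, heₜ, Sym2.out_fst_mem eₜ, hcₜ⟩
  have hfinal : t + 1 ≤ c + Δ ∨ t ≤ c := by
    rcases le_or_gt c t with h | h
    · exact Or.inl (spread w c t hcw htw h)
    · exact Or.inr h.le
  have hexp : (G.diam + 1) * (Δ - 1) = G.diam * (Δ - 1) + (Δ - 1) := by ring
  omega
end

section
/- If a connected bipartite graph G admits an interval t-coloring, then t ≤ diam(G)·(Δ(G) − 1) + 1. -/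
open Finset in
/-- Colors of two edges sharing a vertex `v` differ by at most `deg v - 1`. -/
lemma interval_color_diff_le {V : Type*} [Fintype V] (G : SimpleGraph V) [DecidableRel G.Adj]
    (t : ℕ) (α : Sym2 V → ℕ) (hα : IsIntervalColoring G t α) {v : V} (e f : Sym2 V)
    (he : e ∈ G.edgeSet) (hf : f ∈ G.edgeSet) (hve : v ∈ e) (hvf : v ∈ f) :
    α f ≤ α e + (G.degree v - 1) := by
  classical
  by_cases hle : α f ≤ α e
  · omega
  push_neg at hle
  have hex : ∀ c ∈ Finset.Icc (α e) (α f), ∃ e' ∈ G.edgeSet, v ∈ e' ∧ α e' = c := by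
    intro c hc
    rw [Finset.mem_Icc] at hc
    exact hα.2.2.2 v (α e) c (α f) ⟨e, he, hve, rfl⟩ ⟨f, hf, hvf, rfl⟩ hc.1 hc.2
  choose g hg1 hg2 hg3 using hex
  have hcard : (Finset.Icc (α e) (α f)).card ≤ G.degree v := by
    rw [← SimpleGraph.card_incidenceFinset_eq_degree]
    apply Finset.card_le_card_of_injOn (fun c => if h : c ∈ Finset.Icc (α e) (α f) then g c h else e)
    · intro c hc
      rw [Finset.mem_coe] at hc ⊢
      simp only [hc, dif_pos]
      rw [SimpleGraph.mem_incidenceFinset]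
      exact ⟨hg1 c hc, hg2 c hc⟩
    · intro c₁ h₁ c₂ h₂ heq
      simp only [Finset.mem_coe] at h₁ h₂
      simp only at heq
      rw [dif_pos h₁, dif_pos h₂] at heq
      rw [← hg3 c₁ h₁, heq, hg3 c₂ h₂]
  rw [Nat.card_Icc] at hcard
  omega

/-- Chain bound along a walk. -/
lemma interval_color_walk_bound {V : Type*} [Fintype V] (G : SimpleGraph V) [DecidableRel G.Adj]
    (t : ℕ) (α : Sym2 V → ℕ) (hα : IsIntervalColoring G t α) :
    ∀ {x w : V} (p : G.Walk x w) (e f : Sym2 V), e ∈ G.edgeSet → x ∈ e →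
      f ∈ G.edgeSet → w ∈ f → α f ≤ α e + (p.length + 1) * (G.maxDegree - 1) := by
  intro x w p
  induction p with
  | nil =>
    rename_i y
    intro e f he hxe hf hwf
    have h := interval_color_diff_le G t α hα e f he hf hxe hwf
    have hd := G.degree_le_maxDegree y
    simp only [SimpleGraph.Walk.length_nil]
    omega
  | @cons a b c hab q ih =>
    intro e f he hae hf hcf
    have hq : s(a, b) ∈ G.edgeSet := G.mem_edgeSet.mpr hab
    have h1 : α s(a, b) ≤ α e + (G.degree a - 1) :=
      interval_color_diff_le G t α hα e s(a, b) he hq hae (by simp)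
    have h2 := ih s(a, b) f hq (by simp) hf hcf
    have hd := G.degree_le_maxDegree a
    have hd1 : G.degree a - 1 ≤ G.maxDegree - 1 := by omega
    simp only [SimpleGraph.Walk.length_cons]
    calc α f ≤ α e + (G.degree a - 1) + (q.length + 1) * (G.maxDegree - 1) := by omega
    _ ≤ α e + (G.maxDegree - 1) + (q.length + 1) * (G.maxDegree - 1) := by omega
    _ = α e + (q.length + 1 + 1) * (G.maxDegree - 1) := by ring

/-- Parity of walk length vs 2-coloring. -/
lemma walk_parity {V : Type*} {G : SimpleGraph V} (C : G.Coloring (Fin 2)) :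
    ∀ {a b : V} (p : G.Walk a b), (C a = C b ↔ Even p.length) := by
  intro a b p
  induction p with
  | nil => simp
  | @cons a b c hab q ih =>
    have hne : C a ≠ C b := C.valid hab
    have key : ∀ x y z : Fin 2, x ≠ y → (x = z ↔ ¬ y = z) := by decide
    rw [SimpleGraph.Walk.length_cons, Nat.even_add_one, ← ih]
    exact key _ _ _ hne

/-- If a connected bipartite graph `G` admits an interval `t`-coloring, then
`t ≤ diam(G)·(Δ(G) - 1) + 1`. -/
theorem connected_bipartite_interval_coloring_diam_bound {V : Type*} [Fintype V]
    (G : SimpleGraph V) [DecidableRel G.Adj] (t : ℕ) (α : Sym2 V → ℕ)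
    (hconn : G.Connected) (hbip : G.Colorable 2)
    (hα : IsIntervalColoring G t α) :
    t ≤ G.diam * (G.maxDegree - 1) + 1 := by
  classical
  by_cases ht : t = 0
  · omega
  have ht1 : 1 ≤ t := Nat.one_le_iff_ne_zero.mpr ht
  obtain ⟨e₁, he₁, hc₁⟩ := hα.2.2.1 1 le_rfl ht1
  obtain ⟨et, het, hct⟩ := hα.2.2.1 t ht1 le_rfl
  obtain ⟨u, u', rfl⟩ : ∃ a b, e₁ = s(a, b) := Sym2.inductionOn e₁ (fun a b => ⟨a, b, rfl⟩)
  obtain ⟨w, w', rfl⟩ : ∃ a b, et = s(a, b) := Sym2.inductionOn et (fun a b => ⟨a, b, rfl⟩)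
  have hadj : G.Adj u u' := G.mem_edgeSet.mp he₁
  have hN : Nonempty V := ⟨u⟩
  have hED : G.ediam ≠ ⊤ := by
    obtain ⟨a, b, hab⟩ := SimpleGraph.exists_edist_eq_ediam_of_finite (G := G)
    rw [← hab]
    exact SimpleGraph.edist_ne_top_iff_reachable.mpr (hconn a b)
  set D := G.diam with hDdef
  have hD1 : 1 ≤ D := by
    have h1 : G.dist u u' = 1 := by
      rwa [SimpleGraph.dist_eq_one_iff_adj]
    have := G.dist_le_diam hED (u := u) (v := u')
    omega
  obtain ⟨C⟩ := hbip
  have parity : ∀ a b : V, (C a = C b ↔ Even (G.dist a b)) := by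
    intro a b
    obtain ⟨p, hp⟩ := (hconn a b).exists_walk_length_eq_dist
    rw [← hp]
    exact walk_parity C p
  have hCuu' : C u ≠ C u' := C.valid hadj
  have hxw : ∃ x, x ∈ s(u, u') ∧ G.dist x w ≤ D - 1 := by
    have h1 := G.dist_le_diam hED (u := u) (v := w)
    have h2 := G.dist_le_diam hED (u := u') (v := w)
    have hpar : ¬ (Even (G.dist u w) ↔ Even (G.dist u' w)) := by
      rw [← parity u w, ← parity u' w]
      have key : ∀ x y z : Fin 2, x ≠ y → ¬((x = z) ↔ (y = z)) := by decide
      exact key _ _ _ hCuu'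
    by_cases h : G.dist u w ≤ D - 1
    · exact ⟨u, by simp, h⟩
    · refine ⟨u', by simp, ?_⟩
      have hu : G.dist u w = D := by omega
      have hu' : G.dist u' w ≠ D := by
        intro hh
        exact hpar (by rw [hu, hh])
      omega
  obtain ⟨x, hxe, hxd⟩ := hxw
  obtain ⟨p, hp⟩ := (hconn x w).exists_walk_length_eq_dist
  have hbound := interval_color_walk_bound G t α hα p s(u, u') s(w, w') he₁ hxe het (by simp)
  rw [hc₁, hct, hp] at hbound
  have hle : G.dist x w + 1 ≤ D := by omega
  calc t ≤ 1 + (G.dist x w + 1) * (G.maxDegree - 1) := hbound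
  _ ≤ 1 + D * (G.maxDegree - 1) := by
      have := Nat.mul_le_mul_right (G.maxDegree - 1) hle
      omega
  _ = D * (G.maxDegree - 1) + 1 := by omega
end

section
/- The complete bipartite graph K_{m,n} has an interval t-coloring if and only if m + n − gcd(m,n) ≤ t ≤ m + n − 1. -/
open Finset

namespace IKmn

/-- Base coloring of `K_{d,d}` with `d + s` colors. -/
def gam (d s ι κ : ℕ) : ℕ :=
  if (ι + κ) % d + 1 < min ι s + 1 then (ι + κ) % d + 1 + d else (ι + κ) % d + 1

lemma gam_range {d s ι κ : ℕ} (hι : ι < d) (hκ : κ < d) :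
    min ι s + 1 ≤ gam d s ι κ ∧ gam d s ι κ ≤ min ι s + d := by
  have h := Nat.mod_lt (ι + κ) (show 0 < d by omega)
  unfold gam; split <;> omega

lemma gam_mod (d s ι κ : ℕ) : gam d s ι κ % d = (ι + κ + 1) % d := by
  have h : ((ι + κ) % d + 1) % d = (ι + κ + 1) % d := (Nat.mod_modEq (ι + κ) d).add_right 1
  unfold gam; split
  · rw [Nat.add_mod_right]; exact h
  · exact h

lemma gam_row_inj {d s ι κ κ' : ℕ} (hκ : κ < d) (hκ' : κ' < d)
    (h : gam d s ι κ = gam d s ι κ') : κ = κ' := by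
  have h1 := gam_mod d s ι κ
  have h2 := gam_mod d s ι κ'
  rw [h, h2] at h1
  have h3 : ι + 1 + κ ≡ ι + 1 + κ' [MOD d] := by
    have e1 : ι + 1 + κ = ι + κ + 1 := by ring
    have e2 : ι + 1 + κ' = ι + κ' + 1 := by ring
    rw [e1, e2]; exact h1.symm
  have h4 : κ ≡ κ' [MOD d] := Nat.ModEq.add_left_cancel (Nat.ModEq.refl (ι + 1)) h3
  have h5 : κ % d = κ' % d := h4
  rw [Nat.mod_eq_of_lt hκ, Nat.mod_eq_of_lt hκ'] at h5
  exact h5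

lemma gam_row_surj {d s ι v : ℕ} (hι : ι < d) (h1 : min ι s + 1 ≤ v) (h2 : v ≤ min ι s + d) :
    ∃ κ, κ < d ∧ gam d s ι κ = v := by
  have hd : 0 < d := by omega
  set r : ℕ := if v ≤ d then v else v - d with hr
  have hr1 : 1 ≤ r ∧ r ≤ d := by rw [hr]; split <;> omega
  refine ⟨(d + r - 1 - ι) % d, Nat.mod_lt _ hd, ?_⟩
  have key : (ι + (d + r - 1 - ι) % d) % d = r - 1 := by
    have e1 : (ι + (d + r - 1 - ι) % d) % d = (ι + (d + r - 1 - ι)) % d :=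
      (Nat.ModEq.add_left ι (Nat.mod_modEq _ d)).symm ▸ rfl
    rw [Nat.add_mod_mod, show ι + (d + r - 1 - ι) = (r - 1) + d by omega,
      Nat.add_mod_right, Nat.mod_eq_of_lt (by omega)]
  unfold gam
  rw [key]
  have hrv : r - 1 + 1 = r := by omega
  rw [hrv]
  rw [hr]
  split
  · have : ¬ (v < min ι s + 1) := by omega
    simp only [this, if_false]
  · have : v - d < min ι s + 1 := by omega
    simp only [this, if_true]
    omega

lemma gam_symm {d s ι κ : ℕ} (hι : ι < d) (hκ : κ < d) :
    gam d s ι κ = gam d s κ ι := by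
  have hd : 0 < d := by omega
  unfold gam
  rw [Nat.add_comm κ ι]
  have hρ : (ι + κ) % d < d := Nat.mod_lt _ hd
  have hcase : (ι + κ) % d = ι + κ ∨ (ι + κ) % d + d = ι + κ := by
    rcases Nat.lt_or_ge (ι + κ) d with h | h
    · exact Or.inl (Nat.mod_eq_of_lt h)
    · right
      rw [Nat.mod_eq_sub_mod h, Nat.mod_eq_of_lt (by omega)]
      omega
  split_ifs <;> omega

lemma gam_glob {d s v : ℕ} (hd : 0 < d) (hs : s < d) (h1 : 1 ≤ v) (h2 : v ≤ d + s) :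
    ∃ ι κ, ι < d ∧ κ < d ∧ gam d s ι κ = v := by
  refine ⟨min (v - 1) s, ?_⟩
  have hι : min (v - 1) s < d := by omega
  obtain ⟨κ, hκ, hg⟩ := gam_row_surj (s := s) (v := v) hι (by omega) (by omega)
  exact ⟨κ, hι, hκ, hg⟩


def Gam (d s i j : ℕ) : ℕ := d * (i / d + j / d) + gam d s (i % d) (j % d)
def rowStart (d s i : ℕ) : ℕ := d * (i / d) + min (i % d) s + 1

lemma div_lt_div_of_dvd {d j n : ℕ} (hdn : d ∣ n) (hj : j < n) : j / d < n / d := by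
  have h1 : d * (n / d) = n := Nat.mul_div_cancel' hdn
  have h2 : d * (j / d) ≤ j := Nat.mul_div_le j d
  by_contra hcon
  push_neg at hcon
  have := Nat.mul_le_mul_left d hcon
  omega

lemma Gam_row_range {d s i j n : ℕ} (hd : 0 < d) (hdn : d ∣ n) (hj : j < n) :
    rowStart d s i ≤ Gam d s i j ∧ Gam d s i j < rowStart d s i + n := by
  have hι : i % d < d := Nat.mod_lt _ hd
  have hκ : j % d < d := Nat.mod_lt _ hd
  have hg := gam_range (s := s) hι hκ
  have hq : j / d + 1 ≤ n / d := div_lt_div_of_dvd hdn hj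
  have e3 : d * (n / d) = n := Nat.mul_div_cancel' hdn
  have e2 : d * (j / d + 1) ≤ d * (n / d) := Nat.mul_le_mul_left d hq
  unfold Gam rowStart
  rw [Nat.mul_add]
  rw [Nat.mul_add] at e2
  set P := d * (i / d)
  set Q := d * (j / d)
  omega

lemma Gam_lt_of_q_lt {d s i j j' : ℕ} (hd : 0 < d) (h : j / d < j' / d) :
    Gam d s i j < Gam d s i j' := by
  have hι : i % d < d := Nat.mod_lt _ hd
  have hκ : j % d < d := Nat.mod_lt _ hd
  have hκ' : j' % d < d := Nat.mod_lt _ hd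
  have hg := gam_range (s := s) hι hκ
  have hg' := gam_range (s := s) hι hκ'
  have e2 : d * (j / d + 1) ≤ d * (j' / d) := Nat.mul_le_mul_left d h
  unfold Gam
  rw [Nat.mul_add, Nat.mul_add]
  rw [Nat.mul_add] at e2
  set P := d * (i / d)
  set Q := d * (j / d)
  set Q' := d * (j' / d)
  omega

lemma Gam_row_inj {d s i j j' : ℕ} (hd : 0 < d) (hne : j ≠ j')
    (h : Gam d s i j = Gam d s i j') : False := by
  rcases Nat.lt_trichotomy (j / d) (j' / d) with hq | hq | hq
  · exact absurd h (Nat.ne_of_lt (Gam_lt_of_q_lt hd hq))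
  · have hκ : j % d < d := Nat.mod_lt _ hd
    have hκ' : j' % d < d := Nat.mod_lt _ hd
    have hmod : j % d = j' % d := by
      have hgam : gam d s (i % d) (j % d) = gam d s (i % d) (j' % d) := by
        unfold Gam at h; rw [hq] at h; omega
      exact gam_row_inj hκ hκ' hgam
    have d1 := Nat.div_add_mod j d
    have d2 := Nat.div_add_mod j' d
    rw [hq, hmod] at d1
    omega
  · exact absurd h.symm (Nat.ne_of_lt (Gam_lt_of_q_lt hd hq))

lemma Gam_row_surj {d s i C n : ℕ} (hd : 0 < d) (hdn : d ∣ n) (hn : 0 < n)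
    (hC1 : rowStart d s i ≤ C) (hC2 : C < rowStart d s i + n) :
    ∃ j, j < n ∧ Gam d s i j = C := by
  have hι : i % d < d := Nat.mod_lt _ hd
  set u := C - rowStart d s i with hu
  set q := u / d with hq
  set o := u % d with ho
  have ho' : o < d := Nat.mod_lt _ hd
  have huq : d * q + o = u := Nat.div_add_mod u d
  have hun : u < n := by omega
  have hqn : q + 1 ≤ n / d := div_lt_div_of_dvd hdn hun
  obtain ⟨κ, hκ, hgam⟩ := gam_row_surj (s := s) (v := min (i % d) s + 1 + o) hι (by omega) (by omega)
  refine ⟨q * d + κ, ?_, ?_⟩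
  · have e1 : (q + 1) * d ≤ (n / d) * d := Nat.mul_le_mul_right d hqn
    have e2 : (n / d) * d = n := Nat.div_mul_cancel hdn
    have e3 : (q + 1) * d = q * d + d := by ring
    omega
  · have ediv : (q * d + κ) / d = q := by
      rw [Nat.mul_comm, Nat.mul_add_div hd, Nat.div_eq_of_lt hκ, Nat.add_zero]
    have emod : (q * d + κ) % d = κ := by
      rw [Nat.mul_add_mod']
      exact Nat.mod_eq_of_lt hκ
    unfold Gam
    rw [ediv, emod, hgam]
    unfold rowStart at hu hC1 hC2
    rw [Nat.mul_add]
    set P := d * (i / d)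
    set Q := d * q
    omega


lemma Gam_symm {d s i j : ℕ} (hd : 0 < d) : Gam d s i j = Gam d s j i := by
  unfold Gam
  rw [gam_symm (Nat.mod_lt _ hd) (Nat.mod_lt _ hd), Nat.add_comm (i / d)]

lemma rowStart_le {d s i m : ℕ} (hd : 0 < d) (hdm : d ∣ m) (hi : i < m) (hs : s < d) :
    rowStart d s i + d ≤ m + s + 1 := by
  have h1 : i / d + 1 ≤ m / d := by
    have h1 : d * (m / d) = m := Nat.mul_div_cancel' hdm
    have h2 : d * (i / d) ≤ i := Nat.mul_div_le i d
    by_contra hcon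
    have hcon' : m / d ≤ i / d := by omega
    have := Nat.mul_le_mul_left d hcon'
    omega
  have e2 : d * (i / d + 1) ≤ d * (m / d) := Nat.mul_le_mul_left d h1
  have e3 : d * (m / d) = m := Nat.mul_div_cancel' hdm
  have hι : i % d < d := Nat.mod_lt _ hd
  unfold rowStart
  rw [Nat.mul_add] at e2
  set P := d * (i / d)
  omega

lemma Gam_glob {d s m n C : ℕ} (hd : 0 < d) (hs : s < d) (hdm : d ∣ m) (hdn : d ∣ n)
    (hm : 0 < m) (hn : 0 < n) (hC1 : 1 ≤ C) (hC2 : C + d ≤ m + n + s) :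
    ∃ i j, i < m ∧ j < n ∧ Gam d s i j = C := by
  set m' := m / d with hm'
  set n' := n / d with hn'
  have em : d * m' = m := Nat.mul_div_cancel' hdm
  have en : d * n' = n := Nat.mul_div_cancel' hdn
  have hm1 : 1 ≤ m' := by
    rcases Nat.eq_zero_or_pos m' with h | h
    · rw [h] at em; omega
    · exact h
  have hn1 : 1 ≤ n' := by
    rcases Nat.eq_zero_or_pos n' with h | h
    · rw [h] at en; omega
    · exact h
  set K := m' + n' - 2 with hK
  set k := min ((C - 1) / d) K with hk
  have h1 : d * k ≤ C - 1 := by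
    have : d * ((C - 1) / d) ≤ C - 1 := Nat.mul_div_le _ d
    have hk' : k ≤ (C - 1) / d := Nat.min_le_left _ _
    have := Nat.mul_le_mul_left d hk'
    omega
  have h2 : C ≤ d * k + d + s := by
    rcases Nat.le_total ((C - 1) / d) K with h | h
    · have hkk : k = (C - 1) / d := by omega
      have : C - 1 < d * ((C - 1) / d) + d := by
        have := Nat.div_add_mod (C - 1) d
        have := Nat.mod_lt (C - 1) hd
        omega
      rw [hkk]
      omega
    · have hkk : k = K := by omega
      have eK : d * (K + 2) = d * m' + d * n' := by
        rw [hK]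
        have : m' + n' - 2 + 2 = m' + n' := by omega
        rw [this]
        ring
      rw [hkk]
      rw [Nat.mul_add] at eK
      omega
  set p := min k (m' - 1) with hp
  set q := k - p with hq
  have hpq : p + q = k := by omega
  have hpm : p + 1 ≤ m' := by omega
  have hqn : q + 1 ≤ n' := by
    rcases Nat.le_total k (m' - 1) with h | h
    · have : p = k := by omega
      omega
    · have : p = m' - 1 := by omega
      omega
  obtain ⟨ι, κ, hι, hκ, hg⟩ := gam_glob hd hs (v := C - d * k) (by omega) (by omega)
  refine ⟨p * d + ι, q * d + κ, ?_, ?_, ?_⟩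
  · have : (p + 1) * d ≤ m' * d := Nat.mul_le_mul_right d hpm
    have : m' * d = m := by rw [Nat.mul_comm]; exact em
    nlinarith [Nat.mul_le_mul_right d hpm]
  · have : n' * d = n := by rw [Nat.mul_comm]; exact en
    nlinarith [Nat.mul_le_mul_right d hqn]
  · have ediv1 : (p * d + ι) / d = p := by
      rw [Nat.mul_comm, Nat.mul_add_div hd, Nat.div_eq_of_lt hι, Nat.add_zero]
    have emod1 : (p * d + ι) % d = ι := by
      rw [Nat.mul_add_mod']; exact Nat.mod_eq_of_lt hι
    have ediv2 : (q * d + κ) / d = q := by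
      rw [Nat.mul_comm, Nat.mul_add_div hd, Nat.div_eq_of_lt hκ, Nat.add_zero]
    have emod2 : (q * d + κ) % d = κ := by
      rw [Nat.mul_add_mod']; exact Nat.mod_eq_of_lt hκ
    unfold Gam
    rw [ediv1, emod1, ediv2, emod2, hpq, hg]
    omega

variable {m n : ℕ}

def colF (d s : ℕ) : (Fin m ⊕ Fin n) → (Fin m ⊕ Fin n) → ℕ
  | .inl i, .inr j => Gam d s i.1 j.1
  | .inr j, .inl i => Gam d s i.1 j.1
  | _, _ => 0

lemma colF_symm (d s : ℕ) : ∀ u v : Fin m ⊕ Fin n, colF d s u v = colF d s v u := by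
  rintro (i | j) (i' | j') <;> rfl

def colα (d s : ℕ) : Sym2 (Fin m ⊕ Fin n) → ℕ := Sym2.lift ⟨colF d s, colF_symm d s⟩

lemma colα_mk (d s : ℕ) (i : Fin m) (j : Fin n) :
    colα d s s(Sum.inl i, Sum.inr j) = Gam d s i.1 j.1 := rfl

lemma edge_mem (i : Fin m) (j : Fin n) :
    s(Sum.inl i, Sum.inr j) ∈ (completeBipartiteGraph (Fin m) (Fin n)).edgeSet := by
  simp [SimpleGraph.mem_edgeSet]

lemma edge_form {e : Sym2 (Fin m ⊕ Fin n)}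
    (he : e ∈ (completeBipartiteGraph (Fin m) (Fin n)).edgeSet) :
    ∃ i j, e = s(Sum.inl i, Sum.inr j) := by
  induction e with
  | _ u v =>
    rw [SimpleGraph.mem_edgeSet] at he
    rcases u with i | j <;> rcases v with i' | j'
    · simp at he
    · exact ⟨i, j', rfl⟩
    · exact ⟨i', j, Sym2.eq_swap⟩
    · simp at he

lemma mem_left_iff (i i' : Fin m) (j : Fin n) :
    (Sum.inl i : Fin m ⊕ Fin n) ∈ s(Sum.inl i', Sum.inr j) ↔ i = i' := by
  simp [Sym2.mem_iff]

lemma mem_right_iff (j j' : Fin n) (i : Fin m) :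
    (Sum.inr j : Fin m ⊕ Fin n) ∈ s(Sum.inl i, Sum.inr j') ↔ j = j' := by
  simp [Sym2.mem_iff]

lemma edge_eq_iff (i i' : Fin m) (j j' : Fin n) :
    s(Sum.inl i, Sum.inr j) = (s(Sum.inl i', Sum.inr j') : Sym2 (Fin m ⊕ Fin n)) ↔
      i = i' ∧ j = j' := by
  simp [Sym2.eq_iff]


lemma sufficiency {m n t : ℕ} (hm : 1 ≤ m) (hn : 1 ≤ n)
    (h1 : m + n - Nat.gcd m n ≤ t) (h2 : t ≤ m + n - 1) :
    ∃ α : Sym2 (Fin m ⊕ Fin n) → ℕ,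
      IsIntervalColoring (completeBipartiteGraph (Fin m) (Fin n)) t α := by
  set d := Nat.gcd m n with hdd
  have hd : 0 < d := Nat.gcd_pos_of_pos_left n hm
  have hdm : d ∣ m := Nat.gcd_dvd_left m n
  have hdn : d ∣ n := Nat.gcd_dvd_right m n
  have hdle : d ≤ m := Nat.le_of_dvd hm hdm
  set s := d - (m + n - t) with hss
  have hs : s < d := by omega
  have hts : t + d = m + n + s := by omega
  refine ⟨colα d s, ?_, ?_, ?_, ?_⟩
  · -- bounds
    intro e he
    obtain ⟨i, j, rfl⟩ := edge_form he
    rw [colα_mk]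
    have hr := Gam_row_range (s := s) (i := i.1) hd hdn j.2
    have h1le : 1 ≤ rowStart d s i.1 := Nat.le_add_left 1 _
    have hup := rowStart_le (s := s) (i := i.1) hd hdm i.2 hs
    omega
  · -- properness
    intro e he e' he' hne ⟨v, hv, hv'⟩
    obtain ⟨i, j, rfl⟩ := edge_form he
    obtain ⟨i', j', rfl⟩ := edge_form he'
    rw [colα_mk, colα_mk]
    intro hEq
    rcases v with x | y
    · have hxi : x = i := (mem_left_iff x i j).1 hv
      have hxi' : x = i' := (mem_left_iff x i' j').1 hv'
      subst hxi; subst hxi'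
      have hj : j ≠ j' := by
        intro h; exact hne ((edge_eq_iff x x j j').2 ⟨rfl, h ▸ rfl⟩)
      exact Gam_row_inj hd (fun h => hj (Fin.val_injective h)) hEq
    · have hyj : y = j := (mem_right_iff y j i).1 hv
      have hyj' : y = j' := (mem_right_iff y j' i').1 hv'
      subst hyj; subst hyj'
      have hi : i ≠ i' := by
        intro h; exact hne ((edge_eq_iff i i' y y).2 ⟨h, rfl⟩)
      rw [Gam_symm hd, Gam_symm hd (i := i'.1)] at hEq
      exact Gam_row_inj hd (fun h => hi (Fin.val_injective h)) hEq
  · -- all colors used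
    intro c hc1 hc2
    obtain ⟨i, j, hi, hj, hg⟩ := Gam_glob hd hs hdm hdn hm hn hc1 (by omega)
    exact ⟨s(Sum.inl ⟨i, hi⟩, Sum.inr ⟨j, hj⟩), edge_mem _ _, hg⟩
  · -- interval property
    intro v c₁ c c₂ hE1 hE2 hle1 hle2
    obtain ⟨e₁, he₁, hv₁, hc₁⟩ := hE1
    obtain ⟨i₁, j₁, rfl⟩ := edge_form he₁
    obtain ⟨e₂, he₂, hv₂, hc₂⟩ := hE2
    obtain ⟨i₂, j₂, rfl⟩ := edge_form he₂
    rcases v with x | y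
    · have hx1 : x = i₁ := (mem_left_iff x i₁ j₁).1 hv₁
      have hx2 : x = i₂ := (mem_left_iff x i₂ j₂).1 hv₂
      subst hx1; subst hx2
      rw [colα_mk] at hc₁ hc₂
      have hr1 := Gam_row_range (s := s) (i := x.1) hd hdn j₁.2
      have hr2 := Gam_row_range (s := s) (i := x.1) hd hdn j₂.2
      obtain ⟨j, hj, hg⟩ := Gam_row_surj (s := s) (i := x.1) (C := c) hd hdn hn
        (by omega) (by omega)
      exact ⟨s(Sum.inl x, Sum.inr ⟨j, hj⟩), edge_mem _ _,
        (mem_left_iff x x _).2 rfl, hg⟩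
    · have hy1 : y = j₁ := (mem_right_iff y j₁ i₁).1 hv₁
      have hy2 : y = j₂ := (mem_right_iff y j₂ i₂).1 hv₂
      subst hy1; subst hy2
      rw [colα_mk] at hc₁ hc₂
      rw [Gam_symm hd] at hc₁ hc₂
      have hr1 := Gam_row_range (s := s) (i := y.1) hd hdm i₁.2
      have hr2 := Gam_row_range (s := s) (i := y.1) hd hdm i₂.2
      obtain ⟨i, hi, hg⟩ := Gam_row_surj (s := s) (i := y.1) (C := c) hd hdm hm
        (by omega) (by omega)
      refine ⟨s(Sum.inl ⟨i, hi⟩, Sum.inr y), edge_mem _ _,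
        (mem_right_iff y y _).2 rfl, ?_⟩
      rw [colα_mk, Gam_symm hd]
      exact hg

lemma image_eq_Icc {N : ℕ} (hN : 0 < N) (f : Fin N → ℕ) (hinj : Function.Injective f)
    (hconv : ∀ c₁ c c₂ : ℕ, (∃ x, f x = c₁) → (∃ x, f x = c₂) → c₁ ≤ c → c ≤ c₂ →
      ∃ x, f x = c) :
    image f univ = Icc ((image f univ).min' ⟨f ⟨0, hN⟩, mem_image_of_mem _ (mem_univ _)⟩)
      ((image f univ).min' ⟨f ⟨0, hN⟩, mem_image_of_mem _ (mem_univ _)⟩ + N - 1) := by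
  have hne : (image f univ).Nonempty := ⟨f ⟨0, hN⟩, mem_image_of_mem _ (mem_univ _)⟩
  set S := image f univ with hS
  set a := S.min' hne
  set M := S.max' hne
  have hmem_iff : ∀ z, z ∈ S ↔ ∃ y, f y = z := by
    intro z; rw [hS, Finset.mem_image]; simp
  have hSM : S = Icc a M := by
    apply Finset.Subset.antisymm
    · intro x hx; rw [mem_Icc]; exact ⟨Finset.min'_le S x hx, Finset.le_max' S x hx⟩
    · intro x hx; rw [mem_Icc] at hx
      have h1 : ∃ y, f y = a := (hmem_iff a).1 (S.min'_mem hne)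
      have h2 : ∃ y, f y = M := (hmem_iff M).1 (S.max'_mem hne)
      obtain ⟨y, hy⟩ := hconv a x M h1 h2 hx.1 hx.2
      exact (hmem_iff x).2 ⟨y, hy⟩
  have hcard : S.card = N := by
    rw [hS, card_image_of_injective _ hinj, card_univ, Fintype.card_fin]
  have haM : a ≤ M := S.min'_le _ (S.max'_mem hne)
  rw [hSM] at hcard
  rw [Nat.card_Icc] at hcard
  show S = Icc a (a + N - 1)
  rw [hSM]
  congr 1
  omega

lemma pow_gcd_eq_one {z : ℂ} {m n : ℕ} (hm : 0 < m) (hzm : z ^ m = 1) (hzn : z ^ n = 1) :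
    z ^ Nat.gcd m n = 1 := by
  have hz : z ≠ 0 := by
    intro h; rw [h, zero_pow hm.ne'] at hzm; exact one_ne_zero hzm.symm
  have h1 : z ^ (m : ℤ) = 1 := by rw [zpow_natCast]; exact hzm
  have h2 : z ^ (n : ℤ) = 1 := by rw [zpow_natCast]; exact hzn
  have hb := Nat.gcd_eq_gcd_ab m n
  have hkey : z ^ (Nat.gcd m n : ℤ) = 1 := by
    rw [hb, zpow_add₀ hz, zpow_mul, zpow_mul, h1, h2, one_zpow, one_zpow, one_mul]
  rw [← zpow_natCast]; exact hkey

lemma necessity {m n t : ℕ} (hm : 1 ≤ m) (hn : 1 ≤ n)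
    (α : Sym2 (Fin m ⊕ Fin n) → ℕ)
    (h : IsIntervalColoring (completeBipartiteGraph (Fin m) (Fin n)) t α) :
    m + n - Nat.gcd m n ≤ t ∧ t ≤ m + n - 1 := by
  obtain ⟨hbound, hproper, hall, hint⟩ := h
  set γ : Fin m → Fin n → ℕ := fun i j => α s(Sum.inl i, Sum.inr j) with hγ
  have hγbound : ∀ i j, 1 ≤ γ i j ∧ γ i j ≤ t := fun i j => hbound _ (edge_mem i j)
  have hrow_inj : ∀ i : Fin m, Function.Injective (γ i) := by
    intro i j j' hEq
    by_contra hne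
    have hEne : s(Sum.inl i, Sum.inr j) ≠ (s(Sum.inl i, Sum.inr j') : Sym2 (Fin m ⊕ Fin n)) :=
      fun hE => hne ((edge_eq_iff i i j j').1 hE).2
    exact hproper _ (edge_mem i j) _ (edge_mem i j') hEne
      ⟨Sum.inl i, (mem_left_iff i i j).2 rfl, (mem_left_iff i i j').2 rfl⟩ hEq
  have hcol_inj : ∀ j : Fin n, Function.Injective (fun i => γ i j) := by
    intro j i i' hEq
    by_contra hne
    have hEne : s(Sum.inl i, Sum.inr j) ≠ (s(Sum.inl i', Sum.inr j) : Sym2 (Fin m ⊕ Fin n)) :=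
      fun hE => hne ((edge_eq_iff i i' j j).1 hE).1
    exact hproper _ (edge_mem i j) _ (edge_mem i' j) hEne
      ⟨Sum.inr j, (mem_right_iff j j i).2 rfl, (mem_right_iff j j i').2 rfl⟩ hEq
  have hat_left : ∀ (i : Fin m) (c : ℕ),
      (∃ e ∈ (completeBipartiteGraph (Fin m) (Fin n)).edgeSet, Sum.inl i ∈ e ∧ α e = c) ↔
      ∃ j, γ i j = c := by
    intro i c
    constructor
    · rintro ⟨e, he, hv, hc⟩
      obtain ⟨i', j', rfl⟩ := edge_form he
      have : i = i' := (mem_left_iff i i' j').1 hv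
      subst this
      exact ⟨j', hc⟩
    · rintro ⟨j, hj⟩
      exact ⟨s(Sum.inl i, Sum.inr j), edge_mem i j, (mem_left_iff i i j).2 rfl, hj⟩
  have hat_right : ∀ (j : Fin n) (c : ℕ),
      (∃ e ∈ (completeBipartiteGraph (Fin m) (Fin n)).edgeSet, Sum.inr j ∈ e ∧ α e = c) ↔
      ∃ i, γ i j = c := by
    intro j c
    constructor
    · rintro ⟨e, he, hv, hc⟩
      obtain ⟨i', j', rfl⟩ := edge_form he
      have : j = j' := (mem_right_iff j j' i').1 hv
      subst this
      exact ⟨i', hc⟩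
    · rintro ⟨i, hi⟩
      exact ⟨s(Sum.inl i, Sum.inr j), edge_mem i j, (mem_right_iff j j i).2 rfl, hi⟩
  have rowA : ∀ i : Fin m, ∃ a, 1 ≤ a ∧ a + n - 1 ≤ t ∧
      image (γ i) univ = Icc a (a + n - 1) := by
    intro i
    have hIcc := image_eq_Icc hn (γ i) (hrow_inj i) ?conv
    case conv =>
      intro c₁ c c₂ h₁ h₂ hle₁ hle₂
      exact (hat_left i c).1 (hint (Sum.inl i) c₁ c c₂ ((hat_left i c₁).2 h₁)
        ((hat_left i c₂).2 h₂) hle₁ hle₂)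
    set a := (image (γ i) univ).min' _ with ha
    refine ⟨a, ?_, ?_, hIcc⟩
    · have : a ∈ image (γ i) univ := (image (γ i) univ).min'_mem _
      rw [Finset.mem_image] at this
      obtain ⟨j, _, hj⟩ := this
      have := (hγbound i j).1
      omega
    · have hmem : a + n - 1 ∈ image (γ i) univ := by
        rw [hIcc, mem_Icc]; omega
      rw [Finset.mem_image] at hmem
      obtain ⟨j, _, hj⟩ := hmem
      have := (hγbound i j).2
      omega
  have colB : ∀ j : Fin n, ∃ b, 1 ≤ b ∧ b + m - 1 ≤ t ∧
      image (fun i => γ i j) univ = Icc b (b + m - 1) := by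
    intro j
    have hIcc := image_eq_Icc hm (fun i => γ i j) (hcol_inj j) ?conv
    case conv =>
      intro c₁ c c₂ h₁ h₂ hle₁ hle₂
      exact (hat_right j c).1 (hint (Sum.inr j) c₁ c c₂ ((hat_right j c₁).2 h₁)
        ((hat_right j c₂).2 h₂) hle₁ hle₂)
    set b := (image (fun i => γ i j) univ).min' _ with hb
    refine ⟨b, ?_, ?_, hIcc⟩
    · have : b ∈ image (fun i => γ i j) univ := (image (fun i => γ i j) univ).min'_mem _
      rw [Finset.mem_image] at this
      obtain ⟨i, _, hi⟩ := this
      have := (hγbound i j).1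
      omega
    · have hmem : b + m - 1 ∈ image (fun i => γ i j) univ := by
        rw [hIcc, mem_Icc]; omega
      rw [Finset.mem_image] at hmem
      obtain ⟨i, _, hi⟩ := hmem
      have := (hγbound i j).2
      omega
  choose a ha1 hat haIcc using rowA
  choose b hb1 hbt hbIcc using colB
  have hγrow : ∀ i j, a i ≤ γ i j ∧ γ i j ≤ a i + n - 1 := by
    intro i j
    have : γ i j ∈ image (γ i) univ := mem_image_of_mem _ (mem_univ j)
    rw [haIcc i, mem_Icc] at this
    exact this
  have hγcol : ∀ i j, b j ≤ γ i j ∧ γ i j ≤ b j + m - 1 := by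
    intro i j
    have : γ i j ∈ image (fun i => γ i j) univ := mem_image_of_mem _ (mem_univ i)
    rw [hbIcc j, mem_Icc] at this
    exact this
  -- upper bound
  have ht1 : 1 ≤ t := by have := hγbound ⟨0, hm⟩ ⟨0, hn⟩; omega
  obtain ⟨e1, he1, hce1⟩ := hall 1 le_rfl ht1
  obtain ⟨i₀, j₀, rfl⟩ := edge_form he1
  obtain ⟨e2, he2, hce2⟩ := hall t ht1 le_rfl
  obtain ⟨i₁, j₁, rfl⟩ := edge_form he2
  have hce1' : γ i₀ j₀ = 1 := hce1
  have hce2' : γ i₁ j₁ = t := hce2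
  have hb0 : b j₀ = 1 := by
    have h1 := (hγcol i₀ j₀).1
    have := hb1 j₀
    omega
  have hup : t ≤ m + n - 1 := by
    have h1 := (hγrow i₁ j₁).2
    have h2 := (hγrow i₁ j₀).1
    have h3 := (hγcol i₁ j₀).2
    omega
  refine ⟨?_, hup⟩
  -- lower bound via complex roots of unity
  have key : ∀ ζ : ℂ, ζ ^ m = 1 → ζ ^ n ≠ 1 → ∑ i : Fin m, ζ ^ (a i) = 0 := by
    intro ζ hζm hζn
    have hζ1 : ζ ≠ 1 := fun hc => hζn (by rw [hc, one_pow])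
    have hIcc : ∀ (x N : ℕ), 0 < N →
        ∑ c ∈ Icc x (x + N - 1), ζ ^ c = ζ ^ x * ∑ k ∈ range N, ζ ^ k := by
      intro x N hN
      have himg : Icc x (x + N - 1) = image (fun k => x + k) (range N) := by
        ext y; simp only [mem_Icc, Finset.mem_image, mem_range]
        constructor
        · intro hy; exact ⟨y - x, by omega, by omega⟩
        · rintro ⟨k, hk, rfl⟩; omega
      rw [himg, Finset.sum_image (by intro p _ q _ hpq; simp only at hpq; omega), Finset.mul_sum]
      exact Finset.sum_congr rfl fun k _ => pow_add ζ x k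
    have hrowsum : ∀ i, ∑ j : Fin n, ζ ^ (γ i j) = ζ ^ (a i) * ∑ k ∈ range n, ζ ^ k := by
      intro i
      calc ∑ j : Fin n, ζ ^ (γ i j)
          = ∑ x ∈ image (γ i) univ, ζ ^ x :=
            (Finset.sum_image fun j _ j' _ hjj => hrow_inj i hjj).symm
        _ = ∑ x ∈ Icc (a i) (a i + n - 1), ζ ^ x := by rw [haIcc i]
        _ = _ := hIcc _ n hn
    have hcolsum : ∀ j, ∑ i : Fin m, ζ ^ (γ i j) = ζ ^ (b j) * ∑ k ∈ range m, ζ ^ k := by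
      intro j
      calc ∑ i : Fin m, ζ ^ (γ i j)
          = ∑ x ∈ image (fun i => γ i j) univ, ζ ^ x :=
            (Finset.sum_image fun i _ i' _ hii => hcol_inj j hii).symm
        _ = ∑ x ∈ Icc (b j) (b j + m - 1), ζ ^ x := by rw [hbIcc j]
        _ = _ := hIcc _ m hm
    have hdouble : (∑ i : Fin m, ζ ^ (a i)) * (∑ k ∈ range n, ζ ^ k) =
        (∑ j : Fin n, ζ ^ (b j)) * (∑ k ∈ range m, ζ ^ k) := by
      calc (∑ i : Fin m, ζ ^ (a i)) * (∑ k ∈ range n, ζ ^ k)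
          = ∑ i : Fin m, ζ ^ (a i) * ∑ k ∈ range n, ζ ^ k := by rw [Finset.sum_mul]
        _ = ∑ i : Fin m, ∑ j : Fin n, ζ ^ (γ i j) :=
            Finset.sum_congr rfl fun i _ => (hrowsum i).symm
        _ = ∑ j : Fin n, ∑ i : Fin m, ζ ^ (γ i j) := Finset.sum_comm
        _ = ∑ j : Fin n, ζ ^ (b j) * ∑ k ∈ range m, ζ ^ k :=
            Finset.sum_congr rfl fun j _ => hcolsum j
        _ = _ := (Finset.sum_mul _ _ _).symm
    have hgm : ∑ k ∈ range m, ζ ^ k = 0 := by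
      rw [geom_sum_eq hζ1, hζm, sub_self, zero_div]
    have hgn : ∑ k ∈ range n, ζ ^ k ≠ 0 := by
      rw [geom_sum_eq hζ1]
      exact div_ne_zero (sub_ne_zero.2 hζn) (sub_ne_zero.2 hζ1)
    rw [hgm, mul_zero] at hdouble
    exact (mul_eq_zero.1 hdouble).resolve_right hgn
  set d := Nat.gcd m n with hdd
  have hd : 0 < d := Nat.gcd_pos_of_pos_left n hm
  have hdm : d ∣ m := Nat.gcd_dvd_left m n
  have hdn : d ∣ n := Nat.gcd_dvd_right m n
  have hdlm : d ≤ m := Nat.le_of_dvd hm hdm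
  set P : Polynomial ℂ := ∑ i : Fin m, Polynomial.X ^ (a i) with hP
  have hPeval : ∀ z : ℂ, P.eval z = ∑ i : Fin m, z ^ (a i) := by
    intro z
    rw [hP, Polynomial.eval_finset_sum]
    exact Finset.sum_congr rfl fun i _ => by rw [Polynomial.eval_pow, Polynomial.eval_X]
  have hPne : P ≠ 0 := by
    intro h0
    have hev := hPeval 1
    rw [h0] at hev
    simp only [Polynomial.eval_zero, one_pow, Finset.sum_const, card_univ,
      Fintype.card_fin, nsmul_eq_mul, mul_one] at hev
    have : (m : ℂ) ≠ 0 := Nat.cast_ne_zero.2 (by omega)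
    exact this hev.symm
  have hdeg : P.natDegree ≤ t + 1 - n := by
    rw [hP]
    apply Polynomial.natDegree_sum_le_of_forall_le
    intro i _
    rw [Polynomial.natDegree_X_pow]
    have := hat i
    have := ha1 i
    omega
  set Z : Finset ℂ :=
    insert 0 ((Polynomial.nthRootsFinset m (1 : ℂ)) \ (Polynomial.nthRootsFinset n (1 : ℂ))) with hZ
  have hZroot : ∀ z ∈ Z, P.eval z = 0 := by
    intro z hz
    rw [hZ, Finset.mem_insert] at hz
    rcases hz with rfl | hz
    · rw [hPeval]
      apply Finset.sum_eq_zero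
      intro i _
      exact zero_pow (by have := ha1 i; omega)
    · rw [Finset.mem_sdiff] at hz
      have hzm : z ^ m = 1 := (Polynomial.mem_nthRootsFinset hm 1).1 hz.1
      have hzn : z ^ n ≠ 1 := fun hc => hz.2 ((Polynomial.mem_nthRootsFinset hn 1).2 hc)
      rw [hPeval]
      exact key z hzm hzn
  have hZsub : Z ⊆ P.roots.toFinset := by
    intro z hz
    rw [Multiset.mem_toFinset, Polynomial.mem_roots hPne]
    exact hZroot z hz
  have hcard_m : (Polynomial.nthRootsFinset m (1 : ℂ)).card = m :=
    (Complex.isPrimitiveRoot_exp m (by omega)).card_nthRootsFinset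
  have hcard_d : (Polynomial.nthRootsFinset d (1 : ℂ)).card = d :=
    (Complex.isPrimitiveRoot_exp d (by omega)).card_nthRootsFinset
  have hinter : Polynomial.nthRootsFinset m (1 : ℂ) ∩ Polynomial.nthRootsFinset n (1 : ℂ) =
      Polynomial.nthRootsFinset d (1 : ℂ) := by
    ext z
    rw [Finset.mem_inter, Polynomial.mem_nthRootsFinset hm, Polynomial.mem_nthRootsFinset hn,
      Polynomial.mem_nthRootsFinset hd]
    constructor
    · rintro ⟨h1, h2⟩; exact pow_gcd_eq_one hm h1 h2
    · intro h1
      constructor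
      · rw [← Nat.mul_div_cancel' hdm, pow_mul, h1, one_pow]
      · rw [← Nat.mul_div_cancel' hdn, pow_mul, h1, one_pow]
  have hdiffcard :
      ((Polynomial.nthRootsFinset m (1 : ℂ)) \ (Polynomial.nthRootsFinset n (1 : ℂ))).card = m - d := by
    rw [← Finset.sdiff_inter_self_left, Finset.card_sdiff_of_subset Finset.inter_subset_left, hinter,
      hcard_m, hcard_d]
  have h0notin : (0 : ℂ) ∉ (Polynomial.nthRootsFinset m (1 : ℂ)) \ (Polynomial.nthRootsFinset n (1 : ℂ)) := by
    intro h0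
    have := (Polynomial.mem_nthRootsFinset hm 1).1 (Finset.mem_sdiff.1 h0).1
    rw [zero_pow (by omega)] at this
    exact zero_ne_one this
  have hZcard : Z.card = m - d + 1 := by
    rw [hZ, Finset.card_insert_of_notMem h0notin, hdiffcard]
  have hchain : m - d + 1 ≤ t + 1 - n := by
    calc m - d + 1 = Z.card := hZcard.symm
      _ ≤ P.roots.toFinset.card := Finset.card_le_card hZsub
      _ ≤ Multiset.card P.roots := Multiset.toFinset_card_le _
      _ ≤ P.natDegree := Polynomial.card_roots' P
      _ ≤ t + 1 - n := hdeg
  have hnt : n ≤ t := by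
    have := hat ⟨0, hm⟩
    have := ha1 ⟨0, hm⟩
    omega
  omega

end IKmn

/-- The complete bipartite graph `K_{m,n}` has an interval `t`-coloring if and
only if `m + n - gcd(m,n) ≤ t ≤ m + n - 1`. -/
theorem completeBipartiteGraph_interval_coloring_iff (m n : ℕ) (hm : 1 ≤ m) (hn : 1 ≤ n)
    (t : ℕ) :
    (∃ α : Sym2 (Fin m ⊕ Fin n) → ℕ,
      IsIntervalColoring (completeBipartiteGraph (Fin m) (Fin n)) t α) ↔
    m + n - Nat.gcd m n ≤ t ∧ t ≤ m + n - 1 := by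
  constructor
  · rintro ⟨α, hα⟩
    exact IKmn.necessity hm hn α hα
  · rintro ⟨h1, h2⟩
    exact IKmn.sufficiency hm hn h1 h2
end

section
/- The n-dimensional hypercube Q_n has an interval t-coloring if and only if n ≤ t ≤ n(n+1)/2. -/
/-- The `n`-dimensional hypercube: vertices `{0,1}^n`, adjacent iff they
differ in exactly one coordinate. -/
def hypercube (n : ℕ) : SimpleGraph (Fin n → Bool) where
  Adj x y := (Finset.univ.filter fun i : Fin n => x i ≠ y i).card = 1
  symm := by
    constructor
    intro x y h
    simpa [ne_comm] using h
  loopless := by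
    constructor
    intro x h
    simp at h

namespace HCproof
open Finset

variable {n : ℕ}

/-- flip coordinate i -/
def flip (i : Fin n) (x : Fin n → Bool) : Fin n → Bool := Function.update x i (!x i)

@[simp] lemma flip_same (i : Fin n) (x : Fin n → Bool) : flip i x i = !x i := by
  simp [flip]

lemma flip_ne (i j : Fin n) (x : Fin n → Bool) (h : j ≠ i) : flip i x j = x j := by
  simp [flip, Function.update_apply, h]

@[simp] lemma flip_flip (i : Fin n) (x : Fin n → Bool) : flip i (flip i x) = x := by
  funext j
  by_cases h : j = i
  · subst h; simp
  · rw [flip_ne _ _ _ h, flip_ne _ _ _ h]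

lemma filter_flip (i : Fin n) (x : Fin n → Bool) :
    (Finset.univ.filter fun j : Fin n => x j ≠ flip i x j) = {i} := by
  ext j
  simp only [mem_filter, mem_univ, true_and, mem_singleton]
  constructor
  · intro h
    by_contra hj
    exact h (flip_ne i j x hj).symm
  · intro h; subst h; simp

lemma adj_flip (i : Fin n) (x : Fin n → Bool) : (hypercube n).Adj x (flip i x) := by
  show (Finset.univ.filter fun j : Fin n => x j ≠ flip i x j).card = 1
  rw [filter_flip]; simp

lemma adj_iff {x y : Fin n → Bool} : (hypercube n).Adj x y ↔ ∃ i, y = flip i x := by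
  constructor
  · intro h
    obtain ⟨i, hi⟩ := Finset.card_eq_one.mp h
    refine ⟨i, funext fun j => ?_⟩
    by_cases hj : j = i
    · subst hj
      have : x j ≠ y j := by
        have : j ∈ Finset.univ.filter fun k : Fin n => x k ≠ y k := by
          rw [hi]; simp
        simpa using this
      cases hx : x j <;> cases hy : y j <;> simp_all [flip]
    · have : x j = y j := by
        by_contra hne
        have : j ∈ Finset.univ.filter fun k : Fin n => x k ≠ y k := by
          simp [hne]
        rw [hi] at this; simp at this; exact hj this
      rw [flip_ne _ _ _ hj, this]
  · rintro ⟨i, rfl⟩; exact adj_flip i x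

lemma mem_edge_exists_flip {e : Sym2 (Fin n → Bool)} {v : Fin n → Bool}
    (he : e ∈ (hypercube n).edgeSet) (hv : v ∈ e) : ∃ i, e = s(v, flip i v) := by
  induction e with
  | _ x y =>
    rw [SimpleGraph.mem_edgeSet] at he
    rcases Sym2.mem_iff.mp hv with rfl | rfl
    · obtain ⟨i, rfl⟩ := adj_iff.mp he
      exact ⟨i, rfl⟩
    · obtain ⟨i, rfl⟩ := adj_iff.mp he.symm
      exact ⟨i, Sym2.eq_swap⟩

lemma flip_injective (x : Fin n → Bool) : Function.Injective (fun i => flip i x) := by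
  intro i j h
  by_contra hij
  have : flip i x i = flip j x i := congrFun h i
  rw [flip_same, flip_ne j i x hij] at this
  cases x i <;> simp_all

section Necessity

variable {t : ℕ} {α : Sym2 (Fin n → Bool) → ℕ}

/-- colors incident to `v` -/
def Cv (α : Sym2 (Fin n → Bool) → ℕ) (v : Fin n → Bool) : Finset ℕ :=
  Finset.univ.image fun i => α s(v, flip i v)

lemma mem_Cv_iff {v : Fin n → Bool} {c : ℕ} :
    c ∈ Cv α v ↔ ∃ e ∈ (hypercube n).edgeSet, v ∈ e ∧ α e = c := by
  constructor
  · intro h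
    obtain ⟨i, -, hi⟩ := Finset.mem_image.mp h
    exact ⟨s(v, flip i v), (SimpleGraph.mem_edgeSet _).mpr (adj_flip i v),
      Sym2.mem_mk_left _ _, hi⟩
  · rintro ⟨e, he, hv, rfl⟩
    obtain ⟨i, rfl⟩ := mem_edge_exists_flip he hv
    exact Finset.mem_image.mpr ⟨i, Finset.mem_univ i, rfl⟩

lemma edge_color_injOn (hα : IsIntervalColoring (hypercube n) t α) (v : Fin n → Bool) :
    Function.Injective (fun i : Fin n => α s(v, flip i v)) := by
  intro i j hij
  by_contra hne
  refine hα.2.1 s(v, flip i v) ((SimpleGraph.mem_edgeSet _).mpr (adj_flip i v))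
    s(v, flip j v) ((SimpleGraph.mem_edgeSet _).mpr (adj_flip j v)) ?_
    ⟨v, Sym2.mem_mk_left _ _, Sym2.mem_mk_left _ _⟩ hij
  intro h
  exact hne (flip_injective v (Sym2.congr_right.mp h))

lemma card_Cv (hα : IsIntervalColoring (hypercube n) t α) (v : Fin n → Bool) :
    (Cv α v).card = n := by
  rw [Cv, Finset.card_image_of_injective _ (edge_color_injOn hα v)]
  simp

lemma Cv_nonempty (hα : IsIntervalColoring (hypercube n) t α) (hn : 1 ≤ n)
    (v : Fin n → Bool) : (Cv α v).Nonempty := by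
  rw [← Finset.card_pos, card_Cv hα]; omega

/-- min color at v -/
noncomputable def aC (α : Sym2 (Fin n → Bool) → ℕ)
    (hα : IsIntervalColoring (hypercube n) t α) (hn : 1 ≤ n) (v : Fin n → Bool) : ℕ :=
  (Cv α v).min' (Cv_nonempty hα hn v)

lemma Cv_eq_Icc (hα : IsIntervalColoring (hypercube n) t α) (hn : 1 ≤ n)
    (v : Fin n → Bool) :
    Cv α v = Finset.Icc (aC α hα hn v) (aC α hα hn v + (n - 1)) := by
  set a := aC α hα hn v with ha
  set M := (Cv α v).max' (Cv_nonempty hα hn v) with hM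
  have hsub : Cv α v ⊆ Finset.Icc a M := by
    intro c hc
    exact Finset.mem_Icc.mpr ⟨Finset.min'_le _ _ hc, Finset.le_max' _ _ hc⟩
  have hsup : Finset.Icc a M ⊆ Cv α v := by
    intro c hc
    rw [Finset.mem_Icc] at hc
    rw [mem_Cv_iff]
    exact hα.2.2.2 v a c M (mem_Cv_iff.mp (Finset.min'_mem _ _))
      (mem_Cv_iff.mp (Finset.max'_mem _ _)) hc.1 hc.2
  have heq : Cv α v = Finset.Icc a M := Finset.Subset.antisymm hsub hsup
  have hcard : (Finset.Icc a M).card = n := by rw [← heq, card_Cv hα]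
  rw [Nat.card_Icc] at hcard
  have haM : a ≤ M := Finset.min'_le _ _ (Finset.max'_mem _ _)
  have : M = a + (n - 1) := by omega
  rw [heq, this]

lemma spec_lt (hα : IsIntervalColoring (hypercube n) t α) (hn : 1 ≤ n)
    {v : Fin n → Bool} {c : ℕ} (hc : c ∈ Cv α v) : c < aC α hα hn v + n := by
  rw [Cv_eq_Icc hα hn] at hc
  rw [Finset.mem_Icc] at hc
  omega

lemma spec_ge (hα : IsIntervalColoring (hypercube n) t α) (hn : 1 ≤ n)
    {v : Fin n → Bool} {c : ℕ} (hc : c ∈ Cv α v) : aC α hα hn v ≤ c :=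
  Finset.min'_le _ _ hc

lemma dist_bound (hα : IsIntervalColoring (hypercube n) t α) (hn : 1 ≤ n) :
    ∀ (d : ℕ) (u v : Fin n → Bool),
      (Finset.univ.filter fun i => u i ≠ v i).card = d →
      aC α hα hn v ≤ aC α hα hn u + ∑ j ∈ Finset.range d, (n - 1 - j) := by
  intro d
  induction d with
  | zero =>
    intro u v hzero
    have : u = v := by
      funext j
      by_contra hj
      have : j ∈ Finset.univ.filter fun i => u i ≠ v i := by simp [hj]
      rw [Finset.card_eq_zero.mp hzero] at this
      simp at this
    subst this
    simp
  | succ d ih =>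
    intro u v hD
    set D := Finset.univ.filter fun i => u i ≠ v i with hDdef
    have hDn : D.card ≤ n := by
      calc D.card ≤ Finset.univ.card := Finset.card_le_univ D
      _ = n := by simp
    -- colors of edges from v towards u
    set T := D.image (fun i => α s(v, flip i v)) with hT
    have hTcard : T.card = d + 1 := by
      rw [hT, Finset.card_image_of_injective _ (edge_color_injOn hα v), hD]
    have hTne : T.Nonempty := by rw [← Finset.card_pos, hTcard]; omega
    have hTsub : T ⊆ Cv α v := by
      intro c hc
      obtain ⟨i, -, hi⟩ := Finset.mem_image.mp hc
      exact Finset.mem_image.mpr ⟨i, Finset.mem_univ i, hi⟩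
    set c := T.max' hTne with hc
    obtain ⟨i, hiD, hie⟩ := Finset.mem_image.mp (Finset.max'_mem T hTne)
    -- c is large
    have hclarge : aC α hα hn v + d ≤ c := by
      have hsub2 : T ⊆ Finset.Icc (aC α hα hn v) c := by
        intro x hx
        exact Finset.mem_Icc.mpr ⟨spec_ge hα hn (hTsub hx), Finset.le_max' _ _ hx⟩
      have := Finset.card_le_card hsub2
      rw [hTcard, Nat.card_Icc] at this
      omega
    -- c is in the spectrum of w
    set w := flip i v with hw
    have hcw : c ∈ Cv α w := by
      show T.max' hTne ∈ Cv α w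
      rw [← hie]
      have h2 : s(v, w) = s(w, flip i w) := by
        rw [hw, flip_flip, Sym2.eq_swap]
      rw [h2]
      exact Finset.mem_image.mpr ⟨i, Finset.mem_univ i, rfl⟩
    have hcw2 : c < aC α hα hn w + n := spec_lt hα hn hcw
    -- distance from u to w is d
    have hDw : (Finset.univ.filter fun j => u j ≠ w j).card = d := by
      have : (Finset.univ.filter fun j => u j ≠ w j) = D.erase i := by
        ext j
        simp only [Finset.mem_filter, Finset.mem_univ, true_and, Finset.mem_erase, hDdef]
        by_cases hj : j = i
        · subst hj
          have hui : u j ≠ v j := by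
            have := hiD
            rw [hDdef] at this
            simpa using this
          constructor
          · intro h
            exfalso
            apply h
            rw [hw, flip_same]
            cases hu : u j <;> cases hv : v j <;> simp_all
          · intro h
            exact absurd rfl h.1
        · rw [hw, flip_ne _ _ _ hj]
          simp [hj]
      rw [this, Finset.card_erase_of_mem hiD, hD]
      omega
    have hIH := ih u w hDw
    rw [Finset.sum_range_succ]
    have hd1 : d + 1 ≤ n := by rw [← hD]; exact hDn
    omega

lemma necessity (hα : IsIntervalColoring (hypercube n) t α) :
    n ≤ t ∧ t ≤ ∑ j ∈ Finset.range n, j + n := by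
  rcases Nat.eq_zero_or_pos n with rfl | hn
  · -- n = 0 : no edges, so t = 0
    have hempty : ∀ e, e ∉ (hypercube 0).edgeSet := by
      intro e
      induction e with
      | _ x y =>
        rw [SimpleGraph.mem_edgeSet]
        intro h
        have : (Finset.univ.filter fun i : Fin 0 => x i ≠ y i).card = 1 := h
        simp at this
    constructor
    · omega
    · by_contra ht
      obtain ⟨e, he, -⟩ := hα.2.2.1 1 le_rfl (by omega)
      exact hempty e he
  · have hn1 : 1 ≤ n := hn
    -- lower bound
    have hlow : n ≤ t := by
      set v₀ : Fin n → Bool := fun _ => false with hv0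
      have hsub : Cv α v₀ ⊆ Finset.Icc 1 t := by
        intro c hc
        obtain ⟨e, he, -, rfl⟩ := mem_Cv_iff.mp hc
        exact Finset.mem_Icc.mpr (hα.1 e he)
      have := Finset.card_le_card hsub
      rw [card_Cv hα, Nat.card_Icc] at this
      omega
    refine ⟨hlow, ?_⟩
    -- vertex with color 1
    obtain ⟨e₁, he₁, hc₁⟩ := hα.2.2.1 1 le_rfl (by omega)
    obtain ⟨x, hx⟩ : ∃ x, x ∈ e₁ := by
      induction e₁ with
      | _ a b => exact ⟨a, Sym2.mem_mk_left _ _⟩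
    have h1x : (1 : ℕ) ∈ Cv α x := mem_Cv_iff.mpr ⟨e₁, he₁, hx, hc₁⟩
    have hax : aC α hα hn1 x = 1 := by
      have hle : aC α hα hn1 x ≤ 1 := Finset.min'_le _ _ h1x
      have hge : 1 ≤ aC α hα hn1 x := by
        obtain ⟨e, he, -, hc⟩ := mem_Cv_iff.mp (Finset.min'_mem (Cv α x) (Cv_nonempty hα hn1 x))
        rw [show aC α hα hn1 x = (Cv α x).min' (Cv_nonempty hα hn1 x) from rfl, ← hc]
        exact (hα.1 e he).1
      omega
    -- vertex with color t
    obtain ⟨e₂, he₂, hc₂⟩ := hα.2.2.1 t (by omega) le_rfl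
    obtain ⟨y, hy⟩ : ∃ y, y ∈ e₂ := by
      induction e₂ with
      | _ a b => exact ⟨a, Sym2.mem_mk_left _ _⟩
    have hty : t ∈ Cv α y := mem_Cv_iff.mpr ⟨e₂, he₂, hy, hc₂⟩
    have hty2 : t < aC α hα hn1 y + n := spec_lt hα hn1 hty
    -- distance bound
    set d := (Finset.univ.filter fun i => x i ≠ y i).card with hd
    have hdn : d ≤ n := by
      calc d ≤ Finset.univ.card := Finset.card_le_univ _
      _ = n := by simp
    have hbd := dist_bound hα hn1 d x y rfl
    have hsum : ∑ j ∈ Finset.range d, (n - 1 - j) ≤ ∑ j ∈ Finset.range n, (n - 1 - j) := by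
      apply Finset.sum_le_sum_of_subset
      exact Finset.range_subset_range.mpr hdn
    have hrefl : ∑ j ∈ Finset.range n, (n - 1 - j) = ∑ j ∈ Finset.range n, j := by
      exact Finset.sum_range_reflect (fun j => j) n
    omega

end Necessity


section Construction

variable (S : Finset ℕ)

def p (v : Fin n → Bool) (j : Fin n) : ℕ := if (j : ℕ) ∈ S ∧ v j then 1 else 0

def av (v : Fin n → Bool) : ℕ := 1 + ∑ j : Fin n, (j : ℕ) * p S v j

def tau (v : Fin n → Bool) (i : Fin n) : ℕ :=
  (i : ℕ) * (1 - p S v i) + ∑ j ∈ Finset.Ioi i, p S v j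

def cf (v : Fin n → Bool) (i : Fin n) : ℕ := av S v + tau S v i

lemma p_cases (v : Fin n → Bool) (j : Fin n) : p S v j = 0 ∨ p S v j = 1 := by
  unfold p; split <;> simp

lemma sum_Ioi_le (v : Fin n → Bool) (i : Fin n) :
    ∑ j ∈ Finset.Ioi i, p S v j ≤ n - 1 - i := by
  calc ∑ j ∈ Finset.Ioi i, p S v j ≤ ∑ _j ∈ Finset.Ioi i, 1 :=
        Finset.sum_le_sum (fun j _ => by rcases p_cases S v j with h | h <;> omega)
  _ = (Finset.Ioi i).card := by simp
  _ = n - 1 - i := Fin.card_Ioi i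

lemma tau_lt (v : Fin n → Bool) (i : Fin n) : tau S v i < n := by
  have h1 := sum_Ioi_le S v i
  have h3 : (i : ℕ) < n := i.isLt
  unfold tau
  rcases p_cases S v i with h | h <;> rw [h] <;> omega

lemma tau_ne {v : Fin n → Bool} {i i' : Fin n} (h : i < i') : tau S v i ≠ tau S v i' := by
  have hv : (i : ℕ) < (i' : ℕ) := h
  have hsplit : Finset.Ioi i = Finset.Ioc i i' ∪ Finset.Ioi i' := by
    ext j
    simp only [Finset.mem_Ioi, Finset.mem_union, Finset.mem_Ioc, Fin.lt_def, Fin.le_def]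
    omega
  have hdisj : Disjoint (Finset.Ioc i i') (Finset.Ioi i') := by
    rw [Finset.disjoint_left]
    intro j hj1 hj2
    rw [Finset.mem_Ioc] at hj1
    rw [Finset.mem_Ioi] at hj2
    exact absurd hj2 (not_lt.mpr hj1.2)
  have hsum : ∑ j ∈ Finset.Ioi i, p S v j =
      (∑ j ∈ Finset.Ioc i i', p S v j) + ∑ j ∈ Finset.Ioi i', p S v j := by
    rw [hsplit, Finset.sum_union hdisj]
  have hAcard : ∑ j ∈ Finset.Ioc i i', p S v j ≤ (i' : ℕ) - i := by
    calc ∑ j ∈ Finset.Ioc i i', p S v j ≤ ∑ _j ∈ Finset.Ioc i i', 1 :=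
          Finset.sum_le_sum (fun j _ => by rcases p_cases S v j with h | h <;> omega)
    _ = (Finset.Ioc i i').card := by simp
    _ = (i' : ℕ) - i := Fin.card_Ioc i i'
  rcases p_cases S v i' with hp' | hp'
  · -- p i' = 0 : A ≤ i' - i - 1
    have hins : Finset.Ioc i i' = insert i' (Finset.Ioo i i') := (Finset.Ioo_insert_right h).symm
    have hA2 : ∑ j ∈ Finset.Ioc i i', p S v j ≤ (i' : ℕ) - i - 1 := by
      rw [hins, Finset.sum_insert (by simp), hp']
      calc 0 + ∑ j ∈ Finset.Ioo i i', p S v j ≤ ∑ _j ∈ Finset.Ioo i i', 1 := by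
            rw [zero_add]
            exact Finset.sum_le_sum (fun j _ => by rcases p_cases S v j with h | h <;> omega)
      _ = (Finset.Ioo i i').card := by simp
      _ = (i' : ℕ) - i - 1 := Fin.card_Ioo i i'
    unfold tau
    rcases p_cases S v i with hp | hp <;> rw [hp, hp'] <;> omega
  · -- p i' = 1 : A ≥ 1
    have hA1 : 1 ≤ ∑ j ∈ Finset.Ioc i i', p S v j := by
      have hmem : i' ∈ Finset.Ioc i i' := Finset.mem_Ioc.mpr ⟨h, le_refl i'⟩
      calc 1 = p S v i' := hp'.symm
      _ ≤ ∑ j ∈ Finset.Ioc i i', p S v j := Finset.single_le_sum (fun j _ => Nat.zero_le _) hmem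
    unfold tau
    rcases p_cases S v i with hp | hp <;> rw [hp, hp'] <;> omega

lemma tau_inj (v : Fin n → Bool) : Function.Injective (tau S v) := by
  intro i j hij
  by_contra hne
  rcases lt_trichotomy i j with h | h | h
  · exact tau_ne S h hij
  · exact hne h
  · exact tau_ne S h hij.symm

lemma tau_surj (v : Fin n → Bool) (k : ℕ) (hk : k < n) : ∃ i, tau S v i = k := by
  have himg : Finset.univ.image (tau S v) = Finset.range n := by
    apply Finset.eq_of_subset_of_card_le
    · intro x hx
      obtain ⟨i, -, rfl⟩ := Finset.mem_image.mp hx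
      exact Finset.mem_range.mpr (tau_lt S v i)
    · rw [Finset.card_range, Finset.card_image_of_injective _ (tau_inj S v)]
      simp
  have : k ∈ Finset.univ.image (tau S v) := by
    rw [himg]; exact Finset.mem_range.mpr hk
  obtain ⟨i, -, hi⟩ := Finset.mem_image.mp this
  exact ⟨i, hi⟩

lemma cf_eq (v : Fin n → Bool) (i : Fin n) :
    cf S v i = 1 + (i : ℕ) + (∑ j ∈ Finset.univ.erase i, (j : ℕ) * p S v j) +
      ∑ j ∈ Finset.Ioi i, p S v j := by
  unfold cf av tau
  rw [← Finset.sum_erase_add Finset.univ _ (Finset.mem_univ i)]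
  rcases p_cases S v i with h | h <;> rw [h] <;> omega

lemma cf_indep {v w : Fin n → Bool} (i : Fin n) (h : ∀ j, j ≠ i → v j = w j) :
    cf S v i = cf S w i := by
  rw [cf_eq, cf_eq]
  have h1 : ∑ j ∈ Finset.univ.erase i, (j : ℕ) * p S v j =
      ∑ j ∈ Finset.univ.erase i, (j : ℕ) * p S w j := by
    refine Finset.sum_congr rfl fun j hj => ?_
    unfold p
    rw [h j (Finset.mem_erase.mp hj).1]
  have h2 : ∑ j ∈ Finset.Ioi i, p S v j = ∑ j ∈ Finset.Ioi i, p S w j := by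
    refine Finset.sum_congr rfl fun j hj => ?_
    unfold p
    rw [h j (Finset.mem_Ioi.mp hj).ne']
  rw [h1, h2]

lemma cf_ge_one (v : Fin n → Bool) (i : Fin n) : 1 ≤ cf S v i := by
  unfold cf av; omega

lemma av_le (hS : S ⊆ Finset.range n) (v : Fin n → Bool) : av S v ≤ 1 + ∑ x ∈ S, x := by
  unfold av
  have h1 : ∑ j : Fin n, (j : ℕ) * p S v j ≤
      ∑ j : Fin n, (if (j : ℕ) ∈ S then (j : ℕ) else 0) := by
    refine Finset.sum_le_sum fun j _ => ?_
    unfold p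
    by_cases h : (j : ℕ) ∈ S ∧ v j
    · rw [if_pos h, if_pos h.1]; omega
    · rw [if_neg h]
      split <;> omega
  have h2 : ∑ j : Fin n, (if (j : ℕ) ∈ S then (j : ℕ) else 0) = ∑ x ∈ S, x := by
    rw [Fin.sum_univ_eq_sum_range (fun k => if k ∈ S then k else 0) n,
      Finset.sum_ite_mem (Finset.range n) S (fun k => k), Finset.inter_eq_right.mpr hS]
  omega

lemma av_prefix {n : ℕ} (S : Finset ℕ) (hS : S ⊆ Finset.range n) (K : Finset ℕ) (hK : K ⊆ S) :
    av (n := n) S (fun j : Fin n => decide ((j : ℕ) ∈ K)) = 1 + ∑ x ∈ K, x := by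
  unfold av
  have h1 : ∀ j : Fin n, (j : ℕ) * p S (fun j => decide ((j : ℕ) ∈ K)) j =
      (if (j : ℕ) ∈ K then (j : ℕ) else 0) := by
    intro j
    unfold p
    by_cases h : (j : ℕ) ∈ K
    · rw [if_pos ⟨hK h, by simpa using h⟩, if_pos h]; omega
    · rw [if_neg (by simp [h]), if_neg h]; omega
  rw [Finset.sum_congr rfl fun j _ => h1 j]
  rw [Fin.sum_univ_eq_sum_range (fun k => if k ∈ K then k else 0) n,
    Finset.sum_ite_mem (Finset.range n) K (fun k => k),
    Finset.inter_eq_right.mpr (hK.trans hS)]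

/-- subset sums are `n`-dense -/
lemma cover_lemma : ∀ (T : Finset ℕ), (∀ x ∈ T, x < n) → ∀ (r : ℕ), r < (∑ x ∈ T, x) + n →
    ∃ K ⊆ T, (∑ x ∈ K, x) ≤ r ∧ r < (∑ x ∈ K, x) + n := by
  intro T
  induction T using Finset.induction_on with
  | empty =>
    intro _ r hr
    simp only [Finset.sum_empty, zero_add] at hr
    exact ⟨∅, Finset.Subset.refl ∅, by simp, by simpa using hr⟩
  | @insert x s hx ih =>
    intro hb r hr
    by_cases hrn : r < n
    · exact ⟨∅, Finset.empty_subset _, by simp, by simpa using hrn⟩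
    · rw [Finset.sum_insert hx] at hr
      have hxn : x < n := hb x (Finset.mem_insert_self x s)
      obtain ⟨K, hK1, hK2, hK3⟩ :=
        ih (fun y hy => hb y (Finset.mem_insert_of_mem hy)) (r - x) (by omega)
      refine ⟨insert x K, Finset.insert_subset_insert x hK1, ?_, ?_⟩ <;>
        rw [Finset.sum_insert (fun hmem => hx (hK1 hmem))] <;> omega

/-- choice of subset with given sum -/
lemma choice_lemma : ∀ (m r : ℕ), r ≤ ∑ x ∈ Finset.range m, x →
    ∃ T ⊆ Finset.range m, (∑ x ∈ T, x) = r := by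
  intro m
  induction m with
  | zero =>
    intro r hr
    simp only [Finset.range_zero, Finset.sum_empty, Nat.le_zero] at hr
    exact ⟨∅, Finset.Subset.refl _, by simp [hr]⟩
  | succ m ih =>
    intro r hr
    rw [Finset.sum_range_succ] at hr
    by_cases h : r ≤ ∑ x ∈ Finset.range m, x
    · obtain ⟨T, hT1, hT2⟩ := ih r h
      exact ⟨T, hT1.trans (Finset.range_subset_range.mpr (Nat.le_succ m)), hT2⟩
    · have hmr : m ≤ r := by
        rcases Nat.eq_zero_or_pos m with rfl | hm
        · simp only [Finset.range_zero, Finset.sum_empty] at h hr; omega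
        · have hmem : m - 1 ∈ Finset.range m := Finset.mem_range.mpr (by omega)
          have hle : m - 1 ≤ ∑ x ∈ Finset.range m, x := by
            simpa using Finset.single_le_sum (f := fun x : ℕ => x)
              (fun i _ => Nat.zero_le _) hmem
          omega
      obtain ⟨T, hT1, hT2⟩ := ih (r - m) (by omega)
      have hmT : m ∉ T := fun hmem => by
        have := Finset.mem_range.mp (hT1 hmem); omega
      refine ⟨insert m T, ?_, ?_⟩
      · intro y hy
        rw [Finset.mem_range]
        rcases Finset.mem_insert.mp hy with h' | hy2
        · omega
        · have := Finset.mem_range.mp (hT1 hy2); omega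
      · rw [Finset.sum_insert hmT, hT2]
        omega

def colf (v w : Fin n → Bool) : ℕ :=
  if (Finset.univ.filter fun i => v i ≠ w i).card = 1 then
    ∑ i ∈ Finset.univ.filter (fun i => v i ≠ w i), cf S v i
  else 0

lemma colf_symm (v w : Fin n → Bool) : colf S v w = colf S w v := by
  have hfe : (Finset.univ.filter fun i => w i ≠ v i) =
      (Finset.univ.filter fun i => v i ≠ w i) := by
    ext j; simp [ne_comm]
  unfold colf
  rw [hfe]
  split_ifs with h
  · obtain ⟨i, hi⟩ := Finset.card_eq_one.mp h
    rw [hi, Finset.sum_singleton, Finset.sum_singleton]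
    apply cf_indep
    intro j hj
    by_contra hne
    have : j ∈ Finset.univ.filter fun i => v i ≠ w i := by simp [hne]
    rw [hi] at this
    exact hj (Finset.mem_singleton.mp this)
  · rfl

def coloring : Sym2 (Fin n → Bool) → ℕ := Sym2.lift ⟨colf S, colf_symm S⟩

lemma coloring_mk (v : Fin n → Bool) (i : Fin n) :
    coloring S s(v, flip i v) = cf S v i := by
  show colf S v (flip i v) = cf S v i
  unfold colf
  rw [filter_flip]
  simp

lemma sufficiency {t : ℕ} (hn : 1 ≤ n) (ht1 : n ≤ t)
    (ht2 : t ≤ (∑ x ∈ Finset.range n, x) + n) :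
    ∃ α : Sym2 (Fin n → Bool) → ℕ, IsIntervalColoring (hypercube n) t α := by
  obtain ⟨S, hS, hsum⟩ := choice_lemma n (t - n) (by omega)
  refine ⟨coloring S, ?_, ?_, ?_, ?_⟩
  · -- colors in [1, t]
    intro e he
    induction e with
    | _ x y =>
      obtain ⟨i, rfl⟩ := adj_iff.mp ((SimpleGraph.mem_edgeSet _).mp he)
      rw [coloring_mk]
      refine ⟨cf_ge_one S x i, ?_⟩
      have h1 := av_le S hS x
      have h2 := tau_lt S x i
      unfold cf
      omega
  · -- proper
    intro e he e' he' hne hshare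
    obtain ⟨v, hv, hv'⟩ := hshare
    obtain ⟨i, rfl⟩ := mem_edge_exists_flip he hv
    obtain ⟨i', rfl⟩ := mem_edge_exists_flip he' hv'
    have hii : i ≠ i' := fun h => hne (by rw [h])
    rw [coloring_mk, coloring_mk]
    intro hc
    unfold cf at hc
    exact hii (tau_inj S v (by omega))
  · -- all colors used
    intro c hc1 hc2
    obtain ⟨K, hKsub, hK1, hK2⟩ :=
      cover_lemma S (fun x hx => Finset.mem_range.mp (hS hx)) (c - 1) (by omega)
    set v : Fin n → Bool := fun j => decide ((j : ℕ) ∈ K) with hv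
    have hav : av S v = 1 + ∑ x ∈ K, x := av_prefix S hS K hKsub
    obtain ⟨i, hi⟩ := tau_surj S v (c - av S v) (by omega)
    refine ⟨s(v, flip i v), (SimpleGraph.mem_edgeSet _).mpr (adj_flip i v), ?_⟩
    rw [coloring_mk]
    unfold cf
    omega
  · -- interval property
    intro v c₁ c c₂ h₁ h₂ hle1 hle2
    obtain ⟨e₁, he₁, hv₁, hc₁⟩ := h₁
    obtain ⟨e₂, he₂, hv₂, hc₂⟩ := h₂
    obtain ⟨i₁, rfl⟩ := mem_edge_exists_flip he₁ hv₁
    obtain ⟨i₂, rfl⟩ := mem_edge_exists_flip he₂ hv₂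
    rw [coloring_mk] at hc₁ hc₂
    have hb1 : av S v ≤ c₁ := by rw [← hc₁]; unfold cf; omega
    have hb2 : c₂ < av S v + n := by
      rw [← hc₂]
      have := tau_lt S v i₂
      unfold cf
      omega
    obtain ⟨i, hi⟩ := tau_surj S v (c - av S v) (by omega)
    refine ⟨s(v, flip i v), (SimpleGraph.mem_edgeSet _).mpr (adj_flip i v),
      Sym2.mem_mk_left _ _, ?_⟩
    rw [coloring_mk]
    unfold cf
    omega

end Construction

end HCproof

namespace HCproof

lemma tri_eq (n : ℕ) : n * (n + 1) / 2 = (∑ x ∈ Finset.range n, x) + n := by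
  apply Nat.div_eq_of_eq_mul_left (by norm_num)
  rcases n with _ | m
  · simp
  · have h2 := Finset.sum_range_id_mul_two (m + 1)
    have hm : m + 1 - 1 = m := rfl
    rw [hm] at h2
    calc (m + 1) * (m + 1 + 1) = (m + 1) * m + 2 * (m + 1) := by ring
    _ = (∑ x ∈ Finset.range (m + 1), x) * 2 + 2 * (m + 1) := by rw [h2]
    _ = ((∑ x ∈ Finset.range (m + 1), x) + (m + 1)) * 2 := by ring

lemma edgeSet_zero : ∀ e, e ∉ (hypercube 0).edgeSet := by
  intro e
  induction e with
  | _ x y =>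
    rw [SimpleGraph.mem_edgeSet]
    intro h
    have : (Finset.univ.filter fun i : Fin 0 => x i ≠ y i).card = 1 := h
    simp at this

lemma zero_case : IsIntervalColoring (hypercube 0) 0 (fun _ => 0) := by
  refine ⟨fun e he => absurd he (edgeSet_zero e), fun e he => absurd he (edgeSet_zero e),
    fun c hc1 hc2 => by omega, fun v c₁ c c₂ h₁ _ _ _ => ?_⟩
  obtain ⟨e, he, -⟩ := h₁
  exact absurd he (edgeSet_zero e)

end HCproof

/-- `Q_n` has an interval `t`-coloring iff `n ≤ t ≤ n(n+1)/2`. -/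
theorem hypercube_interval_coloring_iff (n : ℕ) (t : ℕ) :
    (∃ α : Sym2 (Fin n → Bool) → ℕ, IsIntervalColoring (hypercube n) t α) ↔
    n ≤ t ∧ t ≤ n * (n + 1) / 2 := by
  constructor
  · rintro ⟨α, hα⟩
    obtain ⟨h1, h2⟩ := HCproof.necessity hα
    exact ⟨h1, by rw [HCproof.tri_eq]; exact h2⟩
  · rintro ⟨h1, h2⟩
    rw [HCproof.tri_eq] at h2
    rcases Nat.eq_zero_or_pos n with rfl | hn
    · have ht : t = 0 := by simpa using h2
      subst ht
      exact ⟨fun _ => 0, HCproof.zero_case⟩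
    · exact HCproof.sufficiency hn h1 h2
end
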